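/- arXiv:1902.03369 — 4 statements merged into one kernel-verified Lean document; each statement's English description precedes it below -/
import Mathlib

section
/- The averaged non-adaptive test operator satisfies |G⟩⟨G| ≤ Ω̄(𝒜)_𝐡 ≤ I, and its spectral gap is exactly ν(Ω̄(𝒜)_𝐡) = 1/(m · max_{k∈{1,…,n}} h(k)). -/
open scoped BigOperators ComplexOrder
open Matrix Complex

noncomputable section

/-- Computational-basis index set of `(ℂ²)^{⊗n}`. -/
abbrev QIdx (n : ℕ) := Fin n → Fin 2

/-- Linear operators on `(ℂ²)^{⊗n}`, represented as matrices. -/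
abbrev QOp (n : ℕ) := Matrix (QIdx n) (QIdx n) ℂ

/-- A bit viewed as a real number. -/
def bR (b : Fin 2) : ℝ := (b : ℕ)

/-- The ℓ²→ℓ² operator norm of a matrix. -/
noncomputable def opNorm {ι : Type*} [Fintype ι] [DecidableEq ι] (M : Matrix ι ι ℂ) : ℝ :=
  ‖Matrix.toEuclideanCLM (𝕜 := ℂ) M‖

/-- The weighted graph state `|G⟩`, as amplitudes
`⟨z|G⟩ = 2^{-n/2} ∏_{j<k} e^{i θ_{jk} z_j z_k}` (for symmetric `θ`,
`∑_{j<k} = (1/2) ∑_{j,k}`). -/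
noncomputable def gVec (n : ℕ) (θ : Fin n → Fin n → ℝ) : QIdx n → ℂ :=
  fun z => ((Real.sqrt (2 ^ n))⁻¹ : ℝ) *
    Complex.exp (Complex.I * ((1 / 2 * ∑ j, ∑ k, θ j k * bR (z j) * bR (z k) : ℝ) : ℂ))

/-- The rank-one projection `|G⟩⟨G|`. -/
noncomputable def gProj (n : ℕ) (θ : Fin n → Fin n → ℝ) : QOp n :=
  Matrix.vecMulVec (gVec n θ) (star (gVec n θ))

/-- `α_k(z) = ∑_{j ∈ C_k} θ_{jk} z_j` (using `θ_{jk} = 0` on non-edges). -/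
noncomputable def alphaAngle (n : ℕ) (θ : Fin n → Fin n → ℝ) (k : Fin n) (z : QIdx n) : ℝ :=
  ∑ j, θ j k * bR (z j)

/-- The discretization `α ↦ α^h`, the unique point `jπ/h` with
`jπ/h - π/(2h) ≤ α < jπ/h + π/(2h)`. -/
noncomputable def alphaH (h : ℕ) (α : ℝ) : ℝ :=
  (⌊(h : ℝ) * α / Real.pi + 1 / 2⌋ : ℤ) * Real.pi / h

/-- Matrix entry `⟨b|α⟩⟨α|b'⟩ = (1/2) e^{iα(b-b')}` of the projection onto
`|α⟩ = (|0⟩ + e^{iα}|1⟩)/√2`. -/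
noncomputable def phaseFac (α : ℝ) (b b' : Fin 2) : ℂ :=
  (1 / 2 : ℂ) * Complex.exp (Complex.I * ((α * (bR b - bR b') : ℝ) : ℂ))

/-- The projection `P_l = ∏_{k ∈ A_l} Q_k`, written out entrywise:
`P_l = ∑_z (⊗_{k∈A_l} |α_k(z)⟩⟨α_k(z)|) ⊗ |z⟩⟨z|_{A_l^c}`. -/
noncomputable def Pop (n : ℕ) (θ : Fin n → Fin n → ℝ) (A : Finset (Fin n)) : QOp n :=
  Matrix.of fun x y =>
    if ∀ j ∉ A, x j = y j then ∏ k ∈ A, phaseFac (alphaAngle n θ k x) (x k) (y k) else 0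

/-- The test operator `Ω(𝒜) = (1/m) ∑_l P_l`. -/
noncomputable def OmegaA (n m : ℕ) (θ : Fin n → Fin n → ℝ) (A : Fin m → Finset (Fin n)) :
    QOp n :=
  (m : ℂ)⁻¹ • ∑ l, Pop n θ (A l)

/-- The discretized projection `P_{l;h}` (replace `α_k(z)` by `α_k^h(z)`). -/
noncomputable def PopH (n : ℕ) (θ : Fin n → Fin n → ℝ) (h : ℕ) (A : Finset (Fin n)) : QOp n :=
  Matrix.of fun x y =>
    if ∀ j ∉ A, x j = y j then
      ∏ k ∈ A, phaseFac (alphaH h (alphaAngle n θ k x)) (x k) (y k) else 0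

/-- The discretized test operator `Ω_h(𝒜) = (1/m) ∑_l P_{l;h}`. -/
noncomputable def OmegaAH (n m : ℕ) (θ : Fin n → Fin n → ℝ) (h : ℕ)
    (A : Fin m → Finset (Fin n)) : QOp n :=
  (m : ℂ)⁻¹ • ∑ l, PopH n θ h (A l)

/-- Entry of the single-site operator `(1/h) |α⟩⟨α| + (1 - 1/h) I`. -/
noncomputable def mixFac (h : ℕ) (α : ℝ) (b b' : Fin 2) : ℂ :=
  (1 - (h : ℂ)⁻¹) * (if b = b' then 1 else 0) + (h : ℂ)⁻¹ * phaseFac α b b'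

/-- `P̄_l = ∏_{k ∈ A_l} ((1/h(k)) Q_k + (1 - 1/h(k)) I)`, written out entrywise. -/
noncomputable def PBar (n : ℕ) (θ : Fin n → Fin n → ℝ) (hf : Fin n → ℕ) (A : Finset (Fin n)) :
    QOp n :=
  Matrix.of fun x y =>
    if ∀ j ∉ A, x j = y j then ∏ k ∈ A, mixFac (hf k) (alphaAngle n θ k x) (x k) (y k) else 0

/-- `Ω̄(𝒜)_𝐡 = (1/m) ∑_l P̄_l`. -/
noncomputable def OmegaBar (n m : ℕ) (θ : Fin n → Fin n → ℝ) (hf : Fin n → ℕ)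
    (A : Fin m → Finset (Fin n)) : QOp n :=
  (m : ℂ)⁻¹ • ∑ l, PBar n θ hf (A l)

/-- `P̄_{l;h} = ∏_{k ∈ A_l} ((1/h) Q_{k;h} + (1 - 1/h) I)`, written out entrywise. -/
noncomputable def PBarH (n : ℕ) (θ : Fin n → Fin n → ℝ) (h : ℕ) (A : Finset (Fin n)) : QOp n :=
  Matrix.of fun x y =>
    if ∀ j ∉ A, x j = y j then
      ∏ k ∈ A, mixFac h (alphaH h (alphaAngle n θ k x)) (x k) (y k) else 0

/-- `Ω̄_h(𝒜) = (1/m) ∑_l P̄_{l;h}`. -/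
noncomputable def OmegaBarH (n m : ℕ) (θ : Fin n → Fin n → ℝ) (h : ℕ)
    (A : Fin m → Finset (Fin n)) : QOp n :=
  (m : ℂ)⁻¹ • ∑ l, PBarH n θ h (A l)

/-- Index set for `N+1` copies of the `n`-qubit space. -/
abbrev BIdx (n N : ℕ) := Fin (N + 1) → QIdx n

/-- `(⊗_{j ≠ i} Ω) ⊗ I_i` acting on the `N+1` copies. -/
noncomputable def testAll (n N : ℕ) (Ω : QOp n) (i : Fin (N + 1)) :
    Matrix (BIdx n N) (BIdx n N) ℂ :=
  Matrix.of fun x y =>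
    (if x i = y i then 1 else 0) * ∏ j ∈ Finset.univ.erase i, Ω (x j) (y j)

/-- Acceptance probability `p = (1/(N+1)) ∑_i Tr[((⊗_{j≠i} Ω) ⊗ I_i) ρ]` of the
`N`-random sampling test of `Ω` on a state `ρ` of `N+1` copies. -/
noncomputable def acceptProb (n N : ℕ) (Ω : QOp n) (ρ : Matrix (BIdx n N) (BIdx n N) ℂ) : ℝ :=
  (((N : ℂ) + 1)⁻¹ * ∑ i, (testAll n N Ω i * ρ).trace).re

/-- Partial trace over all copies except copy `i`. -/
noncomputable def ptraceAt (n N : ℕ) (i : Fin (N + 1))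
    (M : Matrix (BIdx n N) (BIdx n N) ℂ) : QOp n :=
  Matrix.of fun a b => ∑ x : BIdx n N, if x i = a then M x (Function.update x i b) else 0

/-- The conditional state of the remaining copy given that the test is passed:
`σ = (1/((N+1)p)) ∑_i Tr_{j≠i}[((⊗_{j≠i} Ω) ⊗ I_i) ρ]`. -/
noncomputable def condState (n N : ℕ) (Ω : QOp n) (ρ : Matrix (BIdx n N) (BIdx n N) ℂ) :
    QOp n :=
  (((((N : ℝ) + 1) * acceptProb n N Ω ρ : ℝ) : ℂ))⁻¹ •
    ∑ i, ptraceAt n N i (testAll n N Ω i * ρ)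

/-- The i.i.d. state `(|G⟩⟨G|)^{⊗(N+1)}`. -/
noncomputable def iidState (n N : ℕ) (θ : Fin n → Fin n → ℝ) :
    Matrix (BIdx n N) (BIdx n N) ℂ :=
  Matrix.of fun x y => ∏ j, gVec n θ (x j) * star (gVec n θ (y j))


/-! ### Auxiliary machinery for the proof -/

open scoped Matrix.Norms.L2Operator

namespace SGaux

section NormLemmas

variable {ι : Type*} [Fintype ι] [DecidableEq ι]

lemma norm_diagonal_le (d : ι → ℂ) (c : ℝ) (hc : 0 ≤ c) (h : ∀ i, ‖d i‖ ≤ c) :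
    ‖Matrix.diagonal d‖ ≤ c := by
  rw [Matrix.l2_opNorm_def]
  apply ContinuousLinearMap.opNorm_le_bound _ hc
  intro x
  simp only [LinearEquiv.trans_apply, LinearMap.coe_toContinuousLinearMap']
  rw [toEuclideanLin_apply]
  rw [EuclideanSpace.norm_eq, EuclideanSpace.norm_eq]
  have hb : ∀ i, ‖(WithLp.equiv 2 (ι → ℂ)).symm
      (Matrix.diagonal d *ᵥ (WithLp.equiv 2 (ι → ℂ)) x) i‖ ^ 2 ≤ c ^ 2 * ‖x i‖ ^ 2 := by
    intro i
    have hdi : (WithLp.equiv 2 (ι → ℂ)).symm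
        (Matrix.diagonal d *ᵥ (WithLp.equiv 2 (ι → ℂ)) x) i = d i * x i :=
      Matrix.mulVec_diagonal d ((WithLp.equiv 2 (ι → ℂ)) x) i
    rw [hdi, norm_mul, mul_pow]
    have h1 : ‖d i‖ ^ 2 ≤ c ^ 2 := by
      apply pow_le_pow_left₀ (norm_nonneg _) (h i)
    exact mul_le_mul_of_nonneg_right h1 (by positivity)
  calc Real.sqrt (∑ i, ‖(WithLp.equiv 2 (ι → ℂ)).symm
        (Matrix.diagonal d *ᵥ (WithLp.equiv 2 (ι → ℂ)) x) i‖ ^ 2)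
      ≤ Real.sqrt (∑ i, c ^ 2 * ‖x i‖ ^ 2) :=
        Real.sqrt_le_sqrt (Finset.sum_le_sum fun i _ => hb i)
    _ = c * Real.sqrt (∑ i, ‖x i‖ ^ 2) := by
        rw [← Finset.mul_sum, Real.sqrt_mul (by positivity), Real.sqrt_sq hc]

lemma le_norm_diagonal (d : ι → ℂ) (i : ι) : ‖d i‖ ≤ ‖Matrix.diagonal d‖ := by
  have h := (Matrix.toEuclideanLin (𝕜 := ℂ) (m := ι) (n := ι) ≪≫ₗ
    LinearMap.toContinuousLinearMap) (Matrix.diagonal d) |>.le_opNorm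
    (EuclideanSpace.single i (1 : ℂ))
  rw [EuclideanSpace.norm_single, norm_one (α := ℂ), mul_one] at h
  rw [Matrix.l2_opNorm_def]
  refine le_trans (le_of_eq ?_) h
  simp only [LinearEquiv.trans_apply, LinearMap.coe_toContinuousLinearMap']
  have hds : Matrix.toEuclideanLin (Matrix.diagonal d) (EuclideanSpace.single i (1 : ℂ)) =
      EuclideanSpace.single i (d i) := by
    rw [show (EuclideanSpace.single i (1 : ℂ)) = (WithLp.equiv 2 (ι → ℂ)).symm (Pi.single i 1)
      from rfl]
    erw [toEuclideanLin_apply_piLp_toLp]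
    congr 1
    ext j
    rw [Matrix.mulVec_single, Pi.single_apply]
    by_cases hji : j = i
    · subst hji; simp [Matrix.diagonal_apply_eq]
    · simp [Matrix.diagonal_apply_ne _ hji, hji]
  rw [hds, EuclideanSpace.norm_single]

lemma norm_one_mat [Nonempty ι] : ‖(1 : Matrix ι ι ℂ)‖ = 1 := by
  rw [← Matrix.diagonal_one]
  refine le_antisymm (norm_diagonal_le _ 1 zero_le_one (by simp)) ?_
  have := le_norm_diagonal (fun _ => (1 : ℂ)) (Classical.arbitrary ι)
  simpa using this

lemma norm_unit_conj [Nonempty ι] (W M : Matrix ι ι ℂ) (h1 : W * Wᴴ = 1) :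
    ‖W * M * Wᴴ‖ = ‖M‖ := by
  have h2 : Wᴴ * W = 1 := mul_eq_one_comm.mp h1
  have hW : ‖W‖ = 1 := by
    have := Matrix.l2_opNorm_conjTranspose_mul_self W
    rw [h2, norm_one_mat] at this
    have hnn : 0 ≤ ‖W‖ := norm_nonneg _
    nlinarith
  have hWt : ‖Wᴴ‖ = 1 := by rw [Matrix.l2_opNorm_conjTranspose, hW]
  apply le_antisymm
  · calc ‖W * M * Wᴴ‖ ≤ ‖W * M‖ * ‖Wᴴ‖ := Matrix.l2_opNorm_mul _ _
      _ ≤ ‖W‖ * ‖M‖ * ‖Wᴴ‖ := by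
          have := Matrix.l2_opNorm_mul W M
          nlinarith [norm_nonneg Wᴴ, norm_nonneg (W * M)]
      _ = ‖M‖ := by rw [hW, hWt]; ring
  · have hM : M = Wᴴ * (W * M * Wᴴ) * W := by
      have : Wᴴ * (W * M * Wᴴ) * W = (Wᴴ * W) * M * (Wᴴ * W) := by
        simp only [Matrix.mul_assoc]
      rw [this, h2, one_mul, mul_one]
    calc ‖M‖ = ‖Wᴴ * (W * M * Wᴴ) * W‖ := by rw [← hM]
      _ ≤ ‖Wᴴ * (W * M * Wᴴ)‖ * ‖W‖ := Matrix.l2_opNorm_mul _ _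
      _ ≤ ‖Wᴴ‖ * ‖W * M * Wᴴ‖ * ‖W‖ := by
          have := Matrix.l2_opNorm_mul Wᴴ (W * M * Wᴴ)
          nlinarith [norm_nonneg W, norm_nonneg (Wᴴ * (W * M * Wᴴ))]
      _ = ‖W * M * Wᴴ‖ := by rw [hW, hWt]; ring

lemma diag_sum {κ : Type*} (s : Finset κ) (d : κ → ι → ℂ) :
    ∑ l ∈ s, Matrix.diagonal (d l) = Matrix.diagonal (fun i => ∑ l ∈ s, d l i) := by
  ext i j
  simp only [Matrix.sum_apply, Matrix.diagonal_apply]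
  by_cases hij : i = j
  · simp [hij]
  · simp [hij]

end NormLemmas

/-- The total phase of a computational basis state. -/
noncomputable def phi (n : ℕ) (θ : Fin n → Fin n → ℝ) (x : QIdx n) : ℝ :=
  1 / 2 * ∑ j, ∑ k, θ j k * bR (x j) * bR (x k)

/-- The diagonalizing unitary: graph-state phases times the Hadamard transform. -/
noncomputable def Wmat (n : ℕ) (θ : Fin n → Fin n → ℝ) : QOp n := Matrix.of fun x z =>
  Complex.exp (Complex.I * ((phi n θ x : ℝ) : ℂ)) * (∏ k, (-1 : ℂ) ^ ((x k : ℕ) * (z k : ℕ))) *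
    (((Real.sqrt (2 ^ n))⁻¹ : ℝ) : ℂ)

lemma hs2 (n : ℕ) : (((Real.sqrt (2 ^ n))⁻¹ : ℝ) : ℂ) * (((Real.sqrt (2 ^ n))⁻¹ : ℝ) : ℂ)
    = ((2 : ℂ) ^ n)⁻¹ := by
  rw [← Complex.ofReal_mul, ← mul_inv, Real.mul_self_sqrt (by positivity)]
  push_cast
  rfl

lemma conj_diag_apply (n : ℕ) (θ : Fin n → Fin n → ℝ) (f : Fin n → Fin 2 → ℂ) (x y : QIdx n) :
    (Wmat n θ * Matrix.diagonal (fun z : QIdx n => ∏ k, f k (z k)) * (Wmat n θ)ᴴ) x y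
    = Complex.exp (Complex.I * ((phi n θ x - phi n θ y : ℝ) : ℂ)) *
        ∏ k, ((f k 0 + (-1 : ℂ) ^ ((x k : ℕ) + (y k : ℕ)) * f k 1) / 2) := by
  classical
  have hexp : Complex.exp (Complex.I * ((phi n θ x : ℝ) : ℂ)) *
      Complex.exp (-(Complex.I * ((phi n θ y : ℝ) : ℂ))) =
      Complex.exp (Complex.I * ((phi n θ x - phi n θ y : ℝ) : ℂ)) := by
    rw [← Complex.exp_add]
    congr 1
    push_cast
    ring
  rw [Matrix.mul_apply]
  have key : ∀ z : QIdx n,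
      (Wmat n θ * Matrix.diagonal (fun z : QIdx n => ∏ k, f k (z k))) x z * (Wmat n θ)ᴴ z y
      = Complex.exp (Complex.I * ((phi n θ x - phi n θ y : ℝ) : ℂ)) *
          ∏ k, ((-1 : ℂ) ^ ((x k : ℕ) * (z k : ℕ)) * (-1 : ℂ) ^ ((y k : ℕ) * (z k : ℕ)) *
            f k (z k) * 2⁻¹) := by
    intro z
    rw [Matrix.mul_diagonal, Matrix.conjTranspose_apply]
    simp only [Wmat, Matrix.of_apply]
    have hstar : star (Complex.exp (Complex.I * ((phi n θ y : ℝ) : ℂ)) *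
        (∏ k, (-1 : ℂ) ^ ((y k : ℕ) * (z k : ℕ))) * (((Real.sqrt (2 ^ n))⁻¹ : ℝ) : ℂ))
        = Complex.exp (-(Complex.I * ((phi n θ y : ℝ) : ℂ))) *
        (∏ k, (-1 : ℂ) ^ ((y k : ℕ) * (z k : ℕ))) * (((Real.sqrt (2 ^ n))⁻¹ : ℝ) : ℂ) := by
      simp only [star_mul', RCLike.star_def, map_prod, map_pow, map_neg, _root_.map_one,
        Complex.conj_ofReal, ← Complex.exp_conj, _root_.map_mul, Complex.conj_I]
      ring_nf
    rw [hstar]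
    have hss : (((Real.sqrt (2 ^ n))⁻¹ : ℝ) : ℂ) * (((Real.sqrt (2 ^ n))⁻¹ : ℝ) : ℂ)
        = (2 : ℂ)⁻¹ ^ n := by rw [hs2 n, inv_pow]
    calc (Complex.exp (Complex.I * ((phi n θ x : ℝ) : ℂ)) *
          (∏ k, (-1 : ℂ) ^ ((x k : ℕ) * (z k : ℕ))) * (((Real.sqrt (2 ^ n))⁻¹ : ℝ) : ℂ) *
          ∏ k, f k (z k)) *
        (Complex.exp (-(Complex.I * ((phi n θ y : ℝ) : ℂ))) *
          (∏ k, (-1 : ℂ) ^ ((y k : ℕ) * (z k : ℕ))) * (((Real.sqrt (2 ^ n))⁻¹ : ℝ) : ℂ))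
        = (Complex.exp (Complex.I * ((phi n θ x : ℝ) : ℂ)) *
            Complex.exp (-(Complex.I * ((phi n θ y : ℝ) : ℂ)))) *
          ((∏ k, (-1 : ℂ) ^ ((x k : ℕ) * (z k : ℕ))) *
            (∏ k, (-1 : ℂ) ^ ((y k : ℕ) * (z k : ℕ))) * ∏ k, f k (z k)) *
          ((((Real.sqrt (2 ^ n))⁻¹ : ℝ) : ℂ) * (((Real.sqrt (2 ^ n))⁻¹ : ℝ) : ℂ)) := by ring
      _ = Complex.exp (Complex.I * ((phi n θ x - phi n θ y : ℝ) : ℂ)) *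
          ∏ k, ((-1 : ℂ) ^ ((x k : ℕ) * (z k : ℕ)) * (-1 : ℂ) ^ ((y k : ℕ) * (z k : ℕ)) *
            f k (z k) * 2⁻¹) := by
          rw [hss, hexp, Finset.prod_mul_distrib, Finset.prod_mul_distrib,
            Finset.prod_mul_distrib, Finset.prod_const, Finset.card_univ, Fintype.card_fin]
          ring
  rw [Finset.sum_congr rfl (fun z _ => key z), ← Finset.mul_sum]
  congr 1
  have hps := Finset.prod_univ_sum (fun _ : Fin n => (Finset.univ : Finset (Fin 2)))
    (fun k b => (-1 : ℂ) ^ ((x k : ℕ) * (b : ℕ)) * (-1 : ℂ) ^ ((y k : ℕ) * (b : ℕ)) * f k b * 2⁻¹)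
  rw [Fintype.piFinset_univ] at hps
  rw [← hps]
  apply Finset.prod_congr rfl
  intro k _
  rw [Fin.sum_univ_two]
  norm_num [pow_add]
  ring

lemma site_mix (h : ℕ) (α : ℝ) (a b : Fin 2) :
    Complex.exp (Complex.I * ((α * (bR a - bR b) : ℝ) : ℂ)) *
      ((1 + (-1 : ℂ) ^ ((a : ℕ) + (b : ℕ)) * (1 - (h : ℂ)⁻¹)) / 2) = mixFac h α a b := by
  fin_cases a <;> fin_cases b <;>
    simp [mixFac, phaseFac, bR] <;> ring_nf

lemma parity (a b : Fin 2) : ((-1 : ℂ)) ^ ((a : ℕ) + (b : ℕ)) = if a = b then 1 else -1 := by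
  fin_cases a <;> fin_cases b <;> norm_num

lemma phase_diff (n : ℕ) (θ : Fin n → Fin n → ℝ) (A : Finset (Fin n))
    (hsym : ∀ j k, θ j k = θ k j) (hA0 : ∀ j ∈ A, ∀ k ∈ A, θ j k = 0)
    (x y : QIdx n) (hxy : ∀ j ∉ A, x j = y j) :
    phi n θ x - phi n θ y = ∑ k ∈ A, alphaAngle n θ k x * (bR (x k) - bR (y k)) := by
  have cross : ∑ j, ∑ k, θ j k * bR (x j) * bR (y k)
      = ∑ j, ∑ k, θ j k * bR (y j) * bR (x k) := by
    rw [Finset.sum_comm]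
    refine Finset.sum_congr rfl fun j _ => Finset.sum_congr rfl fun k _ => ?_
    rw [hsym]; ring
  have h1 : phi n θ x - phi n θ y =
      1 / 2 * ∑ j, ∑ k, θ j k * (bR (x j) + bR (y j)) * (bR (x k) - bR (y k)) := by
    unfold phi
    have expand : ∀ j k, θ j k * (bR (x j) + bR (y j)) * (bR (x k) - bR (y k)) =
        θ j k * bR (x j) * bR (x k) - θ j k * bR (y j) * bR (y k) -
        (θ j k * bR (x j) * bR (y k) - θ j k * bR (y j) * bR (x k)) := by intro j k; ring
    simp only [expand, Finset.sum_sub_distrib]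
    rw [cross]; ring
  rw [h1, Finset.sum_comm]
  rw [← Finset.sum_subset (Finset.subset_univ A) (by
    intro k _ hk
    apply Finset.sum_eq_zero
    intro j _
    rw [hxy k hk]; ring)]
  rw [Finset.mul_sum]
  refine Finset.sum_congr rfl fun k hk => ?_
  have inner : ∑ j, θ j k * (bR (x j) + bR (y j)) * (bR (x k) - bR (y k)) =
      (2 * alphaAngle n θ k x) * (bR (x k) - bR (y k)) := by
    rw [alphaAngle, Finset.mul_sum, Finset.sum_mul]
    refine Finset.sum_congr rfl fun j _ => ?_
    by_cases hj : j ∈ A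
    · rw [hA0 j hj k hk]; ring
    · rw [hxy j hj]; ring
  rw [inner]; ring

lemma PBar_eq (n : ℕ) (θ : Fin n → Fin n → ℝ) (hf : Fin n → ℕ) (A : Finset (Fin n))
    (hsym : ∀ j k, θ j k = θ k j) (hA0 : ∀ j ∈ A, ∀ k ∈ A, θ j k = 0) :
    PBar n θ hf A = Wmat n θ *
      Matrix.diagonal (fun z : QIdx n =>
        ∏ k, (if k ∈ A then (if z k = 0 then (1 : ℂ) else 1 - (hf k : ℂ)⁻¹) else 1)) *
      (Wmat n θ)ᴴ := by
  ext x y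
  refine Eq.trans ?_ (conj_diag_apply n θ
    (fun k b => if k ∈ A then (if b = 0 then (1 : ℂ) else 1 - (hf k : ℂ)⁻¹) else 1) x y).symm
  show (if ∀ j ∉ A, x j = y j then
      ∏ k ∈ A, mixFac (hf k) (alphaAngle n θ k x) (x k) (y k) else 0) = _
  by_cases hxy : ∀ j ∉ A, x j = y j
  · rw [if_pos hxy, phase_diff n θ A hsym hA0 x y hxy, Complex.ofReal_sum, Finset.mul_sum,
      Complex.exp_sum]
    have hprod : ∏ k, (((if k ∈ A then (if (0 : Fin 2) = 0 then (1 : ℂ) else 1 - (hf k : ℂ)⁻¹)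
          else 1) + (-1 : ℂ) ^ ((x k : ℕ) + (y k : ℕ)) *
          (if k ∈ A then (if (1 : Fin 2) = 0 then (1 : ℂ) else 1 - (hf k : ℂ)⁻¹) else 1)) / 2)
        = ∏ k ∈ A, ((1 + (-1 : ℂ) ^ ((x k : ℕ) + (y k : ℕ)) * (1 - (hf k : ℂ)⁻¹)) / 2) := by
      rw [← Finset.prod_subset (Finset.subset_univ A) ?_]
      · refine Finset.prod_congr rfl fun k hk => ?_
        rw [if_pos hk, if_pos hk]
        norm_num
      · intro k _ hk
        rw [if_neg hk, if_neg hk, parity, if_pos (hxy k hk)]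
        norm_num
    rw [hprod, ← Finset.prod_mul_distrib]
    refine Finset.prod_congr rfl fun k hk => ?_
    exact (site_mix (hf k) (alphaAngle n θ k x) (x k) (y k)).symm
  · rw [if_neg hxy]
    push_neg at hxy
    obtain ⟨j, hj, hne⟩ := hxy
    symm
    apply mul_eq_zero_of_right
    apply Finset.prod_eq_zero (Finset.mem_univ j)
    rw [if_neg hj, if_neg hj, parity, if_neg hne]
    norm_num

lemma Wmat_unitary (n : ℕ) (θ : Fin n → Fin n → ℝ) : Wmat n θ * (Wmat n θ)ᴴ = 1 := by
  ext x y
  have h := conj_diag_apply n θ (fun _ _ => 1) x y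
  simp only [Finset.prod_const_one, Matrix.diagonal_one, mul_one] at h
  rw [h]
  by_cases hxy : x = y
  · subst hxy
    rw [Matrix.one_apply_eq]
    have h1 : ∀ k : Fin n, ((1 : ℂ) + (-1 : ℂ) ^ ((x k : ℕ) + (x k : ℕ))) / 2 = 1 := by
      intro k
      rw [parity, if_pos rfl]
      norm_num
    rw [show (∏ k : Fin n, ((1 : ℂ) + (-1 : ℂ) ^ ((x k : ℕ) + (x k : ℕ))) / 2) = 1 from
      Finset.prod_eq_one fun k _ => h1 k, sub_self]
    norm_num
  · rw [Matrix.one_apply_ne hxy]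
    obtain ⟨k, hk⟩ := Function.ne_iff.mp hxy
    apply mul_eq_zero_of_right
    apply Finset.prod_eq_zero (Finset.mem_univ k)
    rw [parity, if_neg hk]
    norm_num

lemma gProj_eq (n : ℕ) (θ : Fin n → Fin n → ℝ) :
    gProj n θ = Wmat n θ *
      Matrix.diagonal (fun z : QIdx n => ∏ k, (if z k = 0 then (1 : ℂ) else 0)) *
      (Wmat n θ)ᴴ := by
  ext x y
  refine Eq.trans ?_ (conj_diag_apply n θ
    (fun _ b => if b = 0 then (1 : ℂ) else 0) x y).symm
  have hfac : ∀ k : Fin n, (((if (0 : Fin 2) = 0 then (1 : ℂ) else 0) +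
      (-1 : ℂ) ^ ((x k : ℕ) + (y k : ℕ)) * (if (1 : Fin 2) = 0 then (1 : ℂ) else 0)) / 2)
      = 2⁻¹ := by intro k; norm_num
  rw [Finset.prod_congr rfl fun k _ => hfac k, Finset.prod_const, Finset.card_univ,
    Fintype.card_fin]
  show gVec n θ x * star (gVec n θ y) = _
  unfold gVec
  have hstar : star ((((Real.sqrt (2 ^ n))⁻¹ : ℝ) : ℂ) *
      Complex.exp (Complex.I * ((1 / 2 * ∑ j, ∑ k, θ j k * bR (y j) * bR (y k) : ℝ) : ℂ)))
      = (((Real.sqrt (2 ^ n))⁻¹ : ℝ) : ℂ) *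
        Complex.exp (-(Complex.I * ((1 / 2 * ∑ j, ∑ k, θ j k * bR (y j) * bR (y k) : ℝ) : ℂ))) := by
    simp only [star_mul', RCLike.star_def, Complex.conj_ofReal, ← Complex.exp_conj,
      _root_.map_mul, Complex.conj_I]
    ring_nf
  rw [hstar]
  have hexp : Complex.exp (Complex.I * ((phi n θ x : ℝ) : ℂ)) *
      Complex.exp (-(Complex.I * ((phi n θ y : ℝ) : ℂ))) =
      Complex.exp (Complex.I * ((phi n θ x - phi n θ y : ℝ) : ℂ)) := by
    rw [← Complex.exp_add]; congr 1; push_cast; ring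
  have hss : (((Real.sqrt (2 ^ n))⁻¹ : ℝ) : ℂ) * (((Real.sqrt (2 ^ n))⁻¹ : ℝ) : ℂ)
      = (2 : ℂ)⁻¹ ^ n := by rw [hs2 n, inv_pow]
  show (((Real.sqrt (2 ^ n))⁻¹ : ℝ) : ℂ) * Complex.exp (Complex.I * ((phi n θ x : ℝ) : ℂ)) *
      ((((Real.sqrt (2 ^ n))⁻¹ : ℝ) : ℂ) *
        Complex.exp (-(Complex.I * ((phi n θ y : ℝ) : ℂ)))) = _
  rw [← hexp, ← hss]
  ring

end SGaux


/-- Lemma 2 of the paper: `|G⟩⟨G| ≤ Ω̄(𝒜)_𝐡 ≤ I` and the spectral gap is exactly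
`ν(Ω̄(𝒜)_𝐡) = 1/(m · max_k h(k))`. -/
theorem spectral_gap_OmegaBar
    (n m : ℕ) (hn : 1 ≤ n) (hm : 1 ≤ m)
    (G : SimpleGraph (Fin n)) (θ : Fin n → Fin n → ℝ)
    (hsym : ∀ j k, θ j k = θ k j)
    (hθ : ∀ j k, ¬ G.Adj j k → θ j k = 0)
    (A : Fin m → Finset (Fin n))
    (hdisj : ∀ l l', l ≠ l' → Disjoint (A l) (A l'))
    (hcover : ∀ v : Fin n, ∃ l, v ∈ A l)
    (hne : ∀ l, (A l).Nonempty)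
    (hind : ∀ l, ∀ j ∈ A l, ∀ k ∈ A l, ¬ G.Adj j k)
    (hf : Fin n → ℕ) (hhf : ∀ k, 1 ≤ hf k) :
    (OmegaBar n m θ hf A - gProj n θ).PosSemidef ∧
    ((1 : QOp n) - OmegaBar n m θ hf A).PosSemidef ∧
    1 - opNorm (OmegaBar n m θ hf A - gProj n θ) =
      1 / ((m : ℝ) * ((Finset.univ.sup hf : ℕ) : ℝ)) := by
  classical
  have hA0 : ∀ l, ∀ j ∈ A l, ∀ k ∈ A l, θ j k = 0 :=
    fun l j hj k hk => hθ j k (hind l j hj k hk)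
  set W := SGaux.Wmat n θ with hWdef
  have hUnit : W * Wᴴ = 1 := SGaux.Wmat_unitary n θ
  have hWcong : ∀ f g : QIdx n → ℂ, f = g →
      W * Matrix.diagonal f * Wᴴ = W * Matrix.diagonal g * Wᴴ := fun f g h => by rw [h]
  set t : QIdx n → Fin n → ℝ := fun z k => if z k = 0 then (1 : ℝ) else 1 - (hf k : ℝ)⁻¹
    with htdef
  set omg : QIdx n → ℝ := fun z => (m : ℝ)⁻¹ * ∑ l, ∏ k ∈ A l, t z k with homgdef
  set del : QIdx n → ℝ := fun z => ∏ k, (if z k = 0 then (1 : ℝ) else 0) with hdeldef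
  set H : ℕ := Finset.univ.sup hf with hHdef
  -- basic positivity facts
  have hm0 : (0 : ℝ) < m := by exact_mod_cast Nat.lt_of_lt_of_le Nat.zero_lt_one hm
  have hHk : ∀ k, hf k ≤ H := fun k => Finset.le_sup (Finset.mem_univ k)
  have hH1 : 1 ≤ H := le_trans (hhf ⟨0, hn⟩) (hHk _)
  have hH0 : (0 : ℝ) < (H : ℝ) := by exact_mod_cast Nat.lt_of_lt_of_le Nat.zero_lt_one hH1
  have hfk1 : ∀ k, (1 : ℝ) ≤ (hf k : ℝ) := fun k => by exact_mod_cast hhf k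
  have ht0 : ∀ z k, 0 ≤ t z k := by
    intro z k
    rw [htdef]
    dsimp only
    split
    · norm_num
    · have h2 := one_div_le_one_div_of_le (show (0:ℝ) < 1 by norm_num)
        (show (1:ℝ) ≤ (hf k : ℝ) from hfk1 k)
      rw [one_div, one_div] at h2
      simp only [inv_one] at h2
      linarith
  have ht1 : ∀ z k, t z k ≤ 1 := by
    intro z k
    rw [htdef]
    dsimp only
    split
    · norm_num
    · have : (0:ℝ) ≤ (hf k : ℝ)⁻¹ := by positivity
      linarith
  have hprod0 : ∀ z l, (0:ℝ) ≤ ∏ k ∈ A l, t z k :=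
    fun z l => Finset.prod_nonneg fun k _ => ht0 z k
  have hprod1 : ∀ z l, ∏ k ∈ A l, t z k ≤ 1 :=
    fun z l => Finset.prod_le_one (fun k _ => ht0 z k) (fun k _ => ht1 z k)
  have homg0 : ∀ z, 0 ≤ omg z := by
    intro z
    rw [homgdef]
    dsimp only
    have : (0:ℝ) ≤ ∑ l, ∏ k ∈ A l, t z k := Finset.sum_nonneg fun l _ => hprod0 z l
    positivity
  have homg1 : ∀ z, omg z ≤ 1 := by
    intro z
    rw [homgdef]
    dsimp only
    have hs : ∑ l, ∏ k ∈ A l, t z k ≤ (m : ℝ) := by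
      calc ∑ l, ∏ k ∈ A l, t z k ≤ ∑ _l : Fin m, (1:ℝ) :=
            Finset.sum_le_sum fun l _ => hprod1 z l
        _ = (m : ℝ) := by simp
    calc (m : ℝ)⁻¹ * ∑ l, ∏ k ∈ A l, t z k ≤ (m : ℝ)⁻¹ * (m : ℝ) :=
          mul_le_mul_of_nonneg_left hs (by positivity)
      _ = 1 := inv_mul_cancel₀ (ne_of_gt hm0)
  -- matrix identities
  have hdc : ∀ (l : Fin m) (z : QIdx n),
      (∏ k, (if k ∈ A l then (if z k = 0 then (1 : ℂ) else 1 - (hf k : ℂ)⁻¹) else 1))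
        = ((∏ k ∈ A l, t z k : ℝ) : ℂ) := by
    intro l z
    rw [← Finset.prod_subset (Finset.subset_univ (A l)) (fun k _ hk => if_neg hk)]
    rw [Complex.ofReal_prod]
    refine Finset.prod_congr rfl fun k hk => ?_
    rw [if_pos hk, htdef]
    by_cases hz : z k = 0
    · simp [hz]
    · simp only [hz, if_false]
      push_cast
      ring
  have hOm : OmegaBar n m θ hf A =
      W * Matrix.diagonal (fun z => ((omg z : ℝ) : ℂ)) * Wᴴ := by
    rw [OmegaBar]
    have hPB : ∀ l : Fin m, PBar n θ hf (A l) =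
        W * Matrix.diagonal (fun z : QIdx n => ((∏ k ∈ A l, t z k : ℝ) : ℂ)) * Wᴴ := by
      intro l
      rw [SGaux.PBar_eq n θ hf (A l) hsym (hA0 l), hWdef]
      exact hWcong _ _ (funext (hdc l))
    rw [Finset.sum_congr rfl fun l _ => hPB l, ← Finset.sum_mul, ← Finset.mul_sum,
      SGaux.diag_sum]
    have hsmul : W * ((m : ℂ)⁻¹ • Matrix.diagonal
        (fun z : QIdx n => ∑ l, ((∏ k ∈ A l, t z k : ℝ) : ℂ))) * Wᴴ =
        (m : ℂ)⁻¹ • (W * Matrix.diagonal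
        (fun z : QIdx n => ∑ l, ((∏ k ∈ A l, t z k : ℝ) : ℂ)) * Wᴴ) := by
      rw [Matrix.mul_smul, Matrix.smul_mul]
    rw [← hsmul, ← Matrix.diagonal_smul]
    refine hWcong _ _ (funext fun z => ?_)
    rw [homgdef]
    simp only [Pi.smul_apply, smul_eq_mul]
    push_cast
    ring
  have hGp : gProj n θ = W * Matrix.diagonal (fun z => ((del z : ℝ) : ℂ)) * Wᴴ := by
    rw [SGaux.gProj_eq n θ, hWdef]
    refine hWcong _ _ (funext fun z => ?_)
    rw [hdeldef]
    dsimp only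
    rw [Complex.ofReal_prod]
    refine Finset.prod_congr rfl fun k _ => ?_
    by_cases hz : z k = 0 <;> simp [hz]
  have hSub : OmegaBar n m θ hf A - gProj n θ =
      W * Matrix.diagonal (fun z => ((omg z - del z : ℝ) : ℂ)) * Wᴴ := by
    rw [hOm, hGp, ← Matrix.sub_mul, ← Matrix.mul_sub, Matrix.diagonal_sub]
    refine hWcong _ _ (funext fun z => ?_)
    push_cast
    ring
  have hOne : (1 : QOp n) - OmegaBar n m θ hf A =
      W * Matrix.diagonal (fun z => ((1 - omg z : ℝ) : ℂ)) * Wᴴ := by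
    rw [hOm]
    calc (1 : QOp n) - W * Matrix.diagonal (fun z => ((omg z : ℝ) : ℂ)) * Wᴴ
        = W * 1 * Wᴴ - W * Matrix.diagonal (fun z => ((omg z : ℝ) : ℂ)) * Wᴴ := by
          rw [mul_one, hUnit]
      _ = W * (1 - Matrix.diagonal (fun z => ((omg z : ℝ) : ℂ))) * Wᴴ := by
          rw [Matrix.mul_sub, Matrix.sub_mul]
      _ = W * Matrix.diagonal (fun z => ((1 - omg z : ℝ) : ℂ)) * Wᴴ := by
          rw [← Matrix.diagonal_one, Matrix.diagonal_sub]
          refine hWcong _ _ (funext fun z => ?_)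
          push_cast
          ring
  -- key pointwise facts
  have hdel_zero : ∀ z : QIdx n, (¬ ∀ k, z k = 0) → del z = 0 := by
    intro z hz
    push_neg at hz
    obtain ⟨k0, hk0⟩ := hz
    rw [hdeldef]
    exact Finset.prod_eq_zero (Finset.mem_univ k0) (if_neg hk0)
  have hdel_one : ∀ z : QIdx n, (∀ k, z k = 0) → del z = 1 := by
    intro z hz
    rw [hdeldef]
    exact Finset.prod_eq_one fun k _ => if_pos (hz k)
  have homg_one : ∀ z : QIdx n, (∀ k, z k = 0) → omg z = 1 := by
    intro z hz
    rw [homgdef]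
    dsimp only
    have : ∀ l : Fin m, ∏ k ∈ A l, t z k = 1 := by
      intro l
      apply Finset.prod_eq_one
      intro k _
      rw [htdef]
      simp [hz k]
    rw [Finset.sum_congr rfl fun l _ => this l]
    simp [inv_mul_cancel₀ (ne_of_gt hm0)]
  have hb0 : (0:ℝ) ≤ 1 - ((m : ℝ) * (H : ℝ))⁻¹ := by
    have hm1 : (1:ℝ) ≤ (m : ℝ) := by exact_mod_cast hm
    have hH1' : (1:ℝ) ≤ (H : ℝ) := by exact_mod_cast hH1
    have h1 : (1:ℝ) ≤ (m : ℝ) * (H : ℝ) := by nlinarith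
    have h2 := one_div_le_one_div_of_le (show (0:ℝ) < 1 by norm_num) h1
    rw [one_div, one_div, inv_one] at h2
    linarith
  have key1 : ∀ z, 0 ≤ omg z - del z := by
    intro z
    by_cases hz : ∀ k, z k = 0
    · rw [homg_one z hz, hdel_one z hz]; norm_num
    · rw [hdel_zero z hz]
      have := homg0 z
      linarith
  have key2 : ∀ z, omg z - del z ≤ 1 - ((m : ℝ) * (H : ℝ))⁻¹ := by
    intro z
    by_cases hz : ∀ k, z k = 0
    · rw [homg_one z hz, hdel_one z hz]
      linarith
    · rw [hdel_zero z hz]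
      push_neg at hz
      obtain ⟨k0, hk0⟩ := hz
      obtain ⟨l0, hl0⟩ := hcover k0
      have hPl0 : ∏ k ∈ A l0, t z k ≤ 1 - (H : ℝ)⁻¹ := by
        rw [← Finset.mul_prod_erase _ _ hl0]
        have htk0 : t z k0 = 1 - (hf k0 : ℝ)⁻¹ := by rw [htdef]; exact if_neg hk0
        have h1 : ∏ k ∈ (A l0).erase k0, t z k ≤ 1 :=
          Finset.prod_le_one (fun k _ => ht0 z k) (fun k _ => ht1 z k)
        have h2 : t z k0 ≤ 1 - (H : ℝ)⁻¹ := by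
          rw [htk0]
          have h3 := one_div_le_one_div_of_le
            (show (0:ℝ) < (hf k0 : ℝ) by linarith [hfk1 k0])
            (show ((hf k0 : ℝ)) ≤ (H : ℝ) by exact_mod_cast hHk k0)
          rw [one_div, one_div] at h3
          linarith
        calc t z k0 * ∏ k ∈ (A l0).erase k0, t z k ≤ t z k0 * 1 :=
              mul_le_mul_of_nonneg_left h1 (ht0 z k0)
          _ ≤ 1 - (H : ℝ)⁻¹ := by rw [mul_one]; exact h2
      have hsum : ∑ l, ∏ k ∈ A l, t z k ≤ (m : ℝ) - (H : ℝ)⁻¹ := by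
        rw [← Finset.sum_erase_add _ _ (Finset.mem_univ l0)]
        have h3 : ∑ l ∈ Finset.univ.erase l0, ∏ k ∈ A l, t z k ≤ ((m : ℝ) - 1) := by
          calc ∑ l ∈ Finset.univ.erase l0, ∏ k ∈ A l, t z k
              ≤ ∑ _l ∈ Finset.univ.erase l0, (1:ℝ) :=
                Finset.sum_le_sum fun l _ => hprod1 z l
            _ = ((Finset.univ.erase l0).card : ℝ) := by simp
            _ = ((m : ℝ) - 1) := by
                rw [Finset.card_erase_of_mem (Finset.mem_univ l0), Finset.card_univ,
                  Fintype.card_fin]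
                have : (1:ℕ) ≤ m := hm
                push_cast [Nat.cast_sub this]
                ring
        linarith
      have hfinal : (m : ℝ)⁻¹ * ((m : ℝ) - (H : ℝ)⁻¹) = 1 - ((m : ℝ) * (H : ℝ))⁻¹ := by
        field_simp
      rw [homgdef]
      dsimp only
      calc (m : ℝ)⁻¹ * ∑ l, ∏ k ∈ A l, t z k - 0
          ≤ (m : ℝ)⁻¹ * ((m : ℝ) - (H : ℝ)⁻¹) - 0 := by
            have := mul_le_mul_of_nonneg_left hsum (show (0:ℝ) ≤ (m:ℝ)⁻¹ by positivity)
            linarith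
        _ = 1 - ((m : ℝ) * (H : ℝ))⁻¹ := by rw [hfinal]; ring
  -- the witness achieving the norm
  obtain ⟨k0, -, hk0H⟩ := Finset.exists_mem_eq_sup (Finset.univ : Finset (Fin n))
    ⟨⟨0, hn⟩, Finset.mem_univ _⟩ hf
  set z0 : QIdx n := fun k => if k = k0 then 1 else 0 with hz0def
  have hz0k0 : z0 k0 ≠ 0 := by rw [hz0def]; simp
  have hdelz0 : del z0 = 0 := hdel_zero z0 (by push_neg; exact ⟨k0, hz0k0⟩)
  obtain ⟨l0, hl0⟩ := hcover k0
  have hprodl : ∀ l : Fin m, ∏ k ∈ A l, t z0 k = if k0 ∈ A l then 1 - (H : ℝ)⁻¹ else 1 := by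
    intro l
    by_cases hmem : k0 ∈ A l
    · rw [if_pos hmem, ← Finset.mul_prod_erase _ _ hmem]
      have h1 : ∀ k ∈ (A l).erase k0, t z0 k = 1 := by
        intro k hk
        have hne : k ≠ k0 := (Finset.mem_erase.mp hk).1
        rw [htdef, hz0def]
        simp [hne]
      rw [Finset.prod_eq_one h1, mul_one, htdef]
      dsimp only
      rw [if_neg hz0k0, ← hk0H]
    · rw [if_neg hmem]
      apply Finset.prod_eq_one
      intro k hk
      have hne : k ≠ k0 := fun h => hmem (h ▸ hk)
      rw [htdef, hz0def]
      simp [hne]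
  have homgz0 : omg z0 = 1 - ((m : ℝ) * (H : ℝ))⁻¹ := by
    rw [homgdef]
    dsimp only
    rw [Finset.sum_congr rfl fun l _ => hprodl l]
    have hsplit : ∀ l : Fin m, (if k0 ∈ A l then 1 - (H : ℝ)⁻¹ else 1)
        = 1 - (if k0 ∈ A l then (H : ℝ)⁻¹ else 0) := by
      intro l; split_ifs <;> ring
    rw [Finset.sum_congr rfl fun l _ => hsplit l, Finset.sum_sub_distrib]
    have hone : ∑ l, (if k0 ∈ A l then (H : ℝ)⁻¹ else 0) = (H : ℝ)⁻¹ := by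
      rw [Finset.sum_eq_single l0]
      · rw [if_pos hl0]
      · intro l _ hne
        rw [if_neg]
        intro hmem
        exact (Finset.disjoint_left.mp (hdisj l l0 hne) hmem) hl0
      · intro h
        exact absurd (Finset.mem_univ l0) h
    rw [hone, Finset.sum_const, Finset.card_univ, Fintype.card_fin, nsmul_eq_mul, mul_one]
    field_simp
  -- assemble
  have hnorm : opNorm (OmegaBar n m θ hf A - gProj n θ) = 1 - ((m : ℝ) * (H : ℝ))⁻¹ := by
    rw [hSub]
    have hop : opNorm (W * Matrix.diagonal (fun z => ((omg z - del z : ℝ) : ℂ)) * Wᴴ)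
        = ‖W * Matrix.diagonal (fun z => ((omg z - del z : ℝ) : ℂ)) * Wᴴ‖ := rfl
    rw [hop, SGaux.norm_unit_conj _ _ hUnit]
    apply le_antisymm
    · apply SGaux.norm_diagonal_le _ _ hb0
      intro z
      rw [Complex.norm_real, Real.norm_eq_abs, _root_.abs_of_nonneg (key1 z)]
      exact key2 z
    · have hlow := SGaux.le_norm_diagonal (fun z => ((omg z - del z : ℝ) : ℂ)) z0
      rw [show omg z0 - del z0 = 1 - ((m : ℝ) * (H : ℝ))⁻¹ by rw [homgz0, hdelz0]; ring] at hlow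
      rw [Complex.norm_real, Real.norm_eq_abs, _root_.abs_of_nonneg hb0] at hlow
      exact hlow
  refine ⟨?_, ?_, ?_⟩
  · rw [hSub]
    exact Matrix.PosSemidef.mul_mul_conjTranspose_same
      (Matrix.posSemidef_diagonal_iff.mpr fun z => Complex.zero_le_real.mpr (key1 z)) W
  · rw [hOne]
    exact Matrix.PosSemidef.mul_mul_conjTranspose_same
      (Matrix.posSemidef_diagonal_iff.mpr fun z => Complex.zero_le_real.mpr
        (by have := homg1 z; linarith)) W
  · rw [hnorm, one_div]
    ring


end
end

section
/- Theorem 3 (non-adaptive protocol with perfect match): (i) The i.i.d. state ρ = (|G⟩⟨G|)^{⊗(N+1)} passes the N-random sampling test of Ω̄(𝒜)_𝐡 with acceptance probability p = 1. (ii) Let h_max := max_{k∈{1,…,n}} h(k) and assume β ≥ 1/(N/(m·h_max) + 1). For every state ρ on ((ℂ²)^{⊗n})^{⊗(N+1)} whose acceptance probability p for the N-random sampling test of Ω̄(𝒜)_𝐡 satisfies p ≥ β, the conditional state σ of the remaining copy satisfies ⟨G|σ|G⟩ ≥ 1 − m(1−β)h_max/(Nβ). -/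
open scoped BigOperators ComplexOrder
open Matrix Complex

noncomputable section

namespace NPM

open Finset

lemma prod_sum_pi {ι κ : Type*} [Fintype ι] [DecidableEq ι] [Fintype κ] (f : ι → κ → ℂ) :
    (∏ i, ∑ a, f i a) = ∑ g : ι → κ, ∏ i, f i (g i) := by
  classical
  rw [Finset.prod_univ_sum (fun _ => (Finset.univ : Finset κ)) f]
  rw [Fintype.piFinset_univ]

def chi {n : ℕ} (s x : QIdx n) : ℂ := ∏ j, (-1 : ℂ) ^ ((s j).val * (x j).val)

lemma chi_star {n : ℕ} (s x : QIdx n) : star (chi s x) = chi s x := by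
  unfold chi
  rw [star_prod]
  refine Finset.prod_congr rfl fun j _ => ?_
  rw [star_pow]
  norm_num

lemma chi_zero {n : ℕ} (x : QIdx n) : chi (0 : QIdx n) x = 1 := by
  unfold chi
  simp

lemma chi_comm {n : ℕ} (s x : QIdx n) : chi s x = chi x s := by
  unfold chi
  exact Finset.prod_congr rfl fun j _ => by rw [Nat.mul_comm]

def ph {n : ℕ} (θ : Fin n → Fin n → ℝ) (x : QIdx n) : ℝ :=
  1 / 2 * ∑ j, ∑ k, θ j k * bR (x j) * bR (x k)

lemma gVec_apply {n : ℕ} (θ : Fin n → Fin n → ℝ) (x : QIdx n) :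
    gVec n θ x = ((Real.sqrt (2 ^ n))⁻¹ : ℝ) * Complex.exp (Complex.I * ((ph θ x : ℝ) : ℂ)) := rfl

lemma star_exp_I (r : ℝ) :
    star (Complex.exp (Complex.I * (r : ℂ))) = Complex.exp (Complex.I * ((-r : ℝ) : ℂ)) := by
  have h : ((starRingEnd ℂ) (Complex.exp (Complex.I * (r : ℂ)))) = Complex.exp ((starRingEnd ℂ) (Complex.I * (r : ℂ))) := by
    rw [← Complex.exp_conj]
  rw [RCLike.star_def, h]
  congr 1
  rw [_root_.map_mul, Complex.conj_I, Complex.conj_ofReal]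
  push_cast
  ring

lemma exp_I_mul (a b : ℝ) :
    Complex.exp (Complex.I * (a : ℂ)) * Complex.exp (Complex.I * (b : ℂ))
      = Complex.exp (Complex.I * ((a + b : ℝ) : ℂ)) := by
  rw [← Complex.exp_add]
  push_cast
  ring_nf

lemma gVec_mul_star {n : ℕ} (θ : Fin n → Fin n → ℝ) (x y : QIdx n) :
    gVec n θ x * star (gVec n θ y)
      = ((((2 : ℝ) ^ n)⁻¹ : ℝ) : ℂ) * Complex.exp (Complex.I * ((ph θ x - ph θ y : ℝ) : ℂ)) := by
  rw [gVec_apply, gVec_apply, star_mul', star_exp_I]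
  have hstar : (star (((Real.sqrt (2 ^ n))⁻¹ : ℝ) : ℂ)) = (((Real.sqrt (2 ^ n))⁻¹ : ℝ) : ℂ) := by
    rw [RCLike.star_def, Complex.conj_ofReal]
  rw [hstar]
  have hr : (((Real.sqrt (2 ^ n))⁻¹ : ℝ) : ℂ) * (((Real.sqrt (2 ^ n))⁻¹ : ℝ) : ℂ)
      = ((((2 : ℝ) ^ n)⁻¹ : ℝ) : ℂ) := by
    rw [← Complex.ofReal_mul]
    congr 1
    rw [← mul_inv]
    rw [Real.mul_self_sqrt (by positivity)]
  calc (((Real.sqrt (2 ^ n))⁻¹ : ℝ) : ℂ) * Complex.exp (Complex.I * ((ph θ x : ℝ) : ℂ))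
        * ((((Real.sqrt (2 ^ n))⁻¹ : ℝ) : ℂ) * Complex.exp (Complex.I * ((-(ph θ y) : ℝ) : ℂ)))
      = ((((Real.sqrt (2 ^ n))⁻¹ : ℝ) : ℂ) * (((Real.sqrt (2 ^ n))⁻¹ : ℝ) : ℂ))
        * (Complex.exp (Complex.I * ((ph θ x : ℝ) : ℂ)) * Complex.exp (Complex.I * ((-(ph θ y) : ℝ) : ℂ))) := by ring
    _ = ((((2 : ℝ) ^ n)⁻¹ : ℝ) : ℂ) * Complex.exp (Complex.I * ((ph θ x - ph θ y : ℝ) : ℂ)) := by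
        rw [hr, exp_I_mul, sub_eq_add_neg]

lemma gVec_norm_sq {n : ℕ} (θ : Fin n → Fin n → ℝ) (x : QIdx n) :
    gVec n θ x * star (gVec n θ x) = ((((2 : ℝ) ^ n)⁻¹ : ℝ) : ℂ) := by
  rw [gVec_mul_star]
  simp

lemma site_orth (a b : Fin 2) :
    (∑ c : Fin 2, (-1 : ℂ) ^ (c.val * a.val + c.val * b.val)) = if a = b then 2 else 0 := by
  rw [Fin.sum_univ_two]
  fin_cases a <;> fin_cases b <;> norm_num

lemma sum_chi_mul_chi {n : ℕ} (x y : QIdx n) :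
    (∑ s : QIdx n, chi s x * chi s y) = if x = y then (2 : ℂ) ^ n else 0 := by
  have h1 : ∀ s : QIdx n, chi s x * chi s y
      = ∏ j, (-1 : ℂ) ^ ((s j).val * (x j).val + (s j).val * (y j).val) := by
    intro s
    unfold chi
    rw [← Finset.prod_mul_distrib]
    exact Finset.prod_congr rfl fun j _ => by rw [pow_add]
  calc (∑ s : QIdx n, chi s x * chi s y)
      = ∑ s : QIdx n, ∏ j, (-1 : ℂ) ^ ((s j).val * (x j).val + (s j).val * (y j).val) :=
        Finset.sum_congr rfl fun s _ => h1 s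
    _ = ∏ j, ∑ c : Fin 2, (-1 : ℂ) ^ (c.val * (x j).val + c.val * (y j).val) :=
        (prod_sum_pi (fun (j : Fin n) (c : Fin 2) => (-1 : ℂ) ^ (c.val * (x j).val + c.val * (y j).val))).symm
    _ = ∏ j, (if x j = y j then (2 : ℂ) else 0) :=
        Finset.prod_congr rfl fun j _ => site_orth (x j) (y j)
    _ = if x = y then (2 : ℂ) ^ n else 0 := by
        by_cases h : x = y
        · subst h
          simp
        · rw [if_neg h]
          obtain ⟨j, hj⟩ := Function.ne_iff.mp h
          exact Finset.prod_eq_zero (Finset.mem_univ j) (if_neg hj)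

def wv (n : ℕ) (θ : Fin n → Fin n → ℝ) (s : QIdx n) : QIdx n → ℂ :=
  fun x => gVec n θ x * chi s x

lemma wv_zero {n : ℕ} (θ : Fin n → Fin n → ℝ) : wv n θ 0 = gVec n θ :=
  funext fun x => by rw [wv, chi_zero, mul_one]

lemma two_pow_cast_ne (n : ℕ) : ((((2:ℝ) ^ n)⁻¹ : ℝ) : ℂ) * (2 : ℂ) ^ n = 1 := by
  push_cast
  rw [inv_mul_cancel₀ (by positivity)]

lemma sum_wv_mul_star {n : ℕ} (θ : Fin n → Fin n → ℝ) (x y : QIdx n) :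
    ∑ s : QIdx n, wv n θ s x * star (wv n θ s y) = if x = y then 1 else 0 := by
  have h1 : ∀ s : QIdx n, wv n θ s x * star (wv n θ s y)
      = (gVec n θ x * star (gVec n θ y)) * (chi s x * chi s y) := by
    intro s
    rw [wv, wv, star_mul', chi_star]
    ring
  rw [Finset.sum_congr rfl fun s _ => h1 s, ← Finset.mul_sum, sum_chi_mul_chi]
  by_cases h : x = y
  · subst h
    rw [if_pos rfl, if_pos rfl, gVec_mul_star]
    simp only [sub_self, Complex.ofReal_zero, mul_zero, Complex.exp_zero, mul_one]
    exact two_pow_cast_ne n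
  · simp [h]

lemma sum_star_wv_mul_wv {n : ℕ} (θ : Fin n → Fin n → ℝ) (s s' : QIdx n) :
    ∑ x : QIdx n, star (wv n θ s x) * wv n θ s' x = if s = s' then 1 else 0 := by
  have h1 : ∀ x : QIdx n, star (wv n θ s x) * wv n θ s' x
      = (gVec n θ x * star (gVec n θ x)) * (chi x s * chi x s') := by
    intro x
    rw [wv, wv, star_mul', chi_star, chi_comm s x, chi_comm s' x]
    ring
  rw [Finset.sum_congr rfl fun x _ => h1 x]
  have h2 : ∀ x : QIdx n, (gVec n θ x * star (gVec n θ x)) * (chi x s * chi x s')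
      = ((((2 : ℝ) ^ n)⁻¹ : ℝ) : ℂ) * (chi x s * chi x s') := fun x => by rw [gVec_norm_sq]
  rw [Finset.sum_congr rfl fun x _ => h2 x, ← Finset.mul_sum, sum_chi_mul_chi]
  by_cases h : s = s'
  · subst h
    rw [if_pos rfl, if_pos rfl]
    exact two_pow_cast_ne n
  · simp [h]


open Finset

def cfacH (h : ℕ) (r : Fin 2) : ℝ := if r = 0 then 1 else 1 - (h : ℝ)⁻¹

lemma phase_shift {n : ℕ} (θ : Fin n → Fin n → ℝ) (hsym : ∀ j k, θ j k = θ k j)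
    (B : Finset (Fin n)) (hB : ∀ j ∈ B, ∀ k ∈ B, θ j k = 0)
    (x y : QIdx n) (h : ∀ j ∉ B, x j = y j) :
    ph θ y = ph θ x + ∑ j ∈ B, alphaAngle n θ j x * (bR (y j) - bR (x j)) := by
  have halpha : ∀ j ∈ B, alphaAngle n θ j x = ∑ k ∈ Bᶜ, θ k j * bR (x k) := by
    intro j hj
    unfold alphaAngle
    rw [← Finset.sum_add_sum_compl B (fun k => θ k j * bR (x k))]
    have hz : ∑ k ∈ B, θ k j * bR (x k) = 0 :=
      Finset.sum_eq_zero fun k hk => by rw [hB k hk j hj, zero_mul]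
    rw [hz, zero_add]
  have hS : ∀ z : QIdx n, (∑ j, ∑ k, θ j k * bR (z j) * bR (z k))
      = ((∑ j ∈ B, ∑ k ∈ B, θ j k * bR (z j) * bR (z k))
        + ∑ j ∈ B, ∑ k ∈ Bᶜ, θ j k * bR (z j) * bR (z k))
        + ((∑ j ∈ Bᶜ, ∑ k ∈ B, θ j k * bR (z j) * bR (z k))
        + ∑ j ∈ Bᶜ, ∑ k ∈ Bᶜ, θ j k * bR (z j) * bR (z k)) := by
    intro z
    rw [← Finset.sum_add_sum_compl B (fun j => ∑ k, θ j k * bR (z j) * bR (z k))]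
    congr 1
    · rw [← Finset.sum_add_distrib]
      exact Finset.sum_congr rfl fun j _ => (Finset.sum_add_sum_compl B _).symm
    · rw [← Finset.sum_add_distrib]
      exact Finset.sum_congr rfl fun j _ => (Finset.sum_add_sum_compl B _).symm
  have e1 : (∑ j ∈ B, ∑ k ∈ B, θ j k * bR (y j) * bR (y k)) = 0 :=
    Finset.sum_eq_zero fun j hj => Finset.sum_eq_zero fun k hk => by rw [hB j hj k hk]; ring
  have e1' : (∑ j ∈ B, ∑ k ∈ B, θ j k * bR (x j) * bR (x k)) = 0 :=
    Finset.sum_eq_zero fun j hj => Finset.sum_eq_zero fun k hk => by rw [hB j hj k hk]; ring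
  have e2 : (∑ j ∈ Bᶜ, ∑ k ∈ Bᶜ, θ j k * bR (y j) * bR (y k))
      = ∑ j ∈ Bᶜ, ∑ k ∈ Bᶜ, θ j k * bR (x j) * bR (x k) := by
    refine Finset.sum_congr rfl fun j hj => Finset.sum_congr rfl fun k hk => ?_
    rw [← h j (Finset.mem_compl.mp hj), ← h k (Finset.mem_compl.mp hk)]
  have e3 : (∑ j ∈ B, ∑ k ∈ Bᶜ, θ j k * bR (y j) * bR (y k))
      = (∑ j ∈ B, ∑ k ∈ Bᶜ, θ j k * bR (x j) * bR (x k))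
        + ∑ j ∈ B, alphaAngle n θ j x * (bR (y j) - bR (x j)) := by
    rw [← Finset.sum_add_distrib]
    refine Finset.sum_congr rfl fun j hj => ?_
    rw [halpha j hj, Finset.sum_mul, ← Finset.sum_add_distrib]
    refine Finset.sum_congr rfl fun k hk => ?_
    have hk' : bR (x k) = bR (y k) := by rw [h k (Finset.mem_compl.mp hk)]
    rw [← hk', hsym k j]
    ring
  have e4 : (∑ j ∈ Bᶜ, ∑ k ∈ B, θ j k * bR (y j) * bR (y k))
      = (∑ j ∈ Bᶜ, ∑ k ∈ B, θ j k * bR (x j) * bR (x k))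
        + ∑ j ∈ B, alphaAngle n θ j x * (bR (y j) - bR (x j)) := by
    rw [Finset.sum_comm, Finset.sum_comm (s := Bᶜ) (t := B), ← Finset.sum_add_distrib]
    refine Finset.sum_congr rfl fun k hk => ?_
    rw [halpha k hk, Finset.sum_mul, ← Finset.sum_add_distrib]
    refine Finset.sum_congr rfl fun j hj => ?_
    have hj' : bR (x j) = bR (y j) := by rw [h j (Finset.mem_compl.mp hj)]
    rw [← hj']
    ring
  have hSy := hS y
  have hSx := hS x
  unfold ph
  rw [hSy, hSx, e1, e1', e2, e3, e4]
  ring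

lemma exp_cancel (u v : ℝ) (huv : u + v = 0) :
    Complex.exp (Complex.I * (u : ℂ)) * Complex.exp (Complex.I * (v : ℂ)) = 1 := by
  rw [exp_I_mul, huv]
  simp

lemma site_mix (h : ℕ) (α : ℝ) (a r : Fin 2) :
    (∑ b : Fin 2, mixFac h α a b
        * Complex.exp (Complex.I * ((α * (bR b - bR a) : ℝ) : ℂ))
        * (-1 : ℂ) ^ (r.val * b.val))
      = ((cfacH h r : ℝ) : ℂ) * (-1 : ℂ) ^ (r.val * a.val) := by
  have hc : ∀ b : Fin 2, mixFac h α a b * Complex.exp (Complex.I * ((α * (bR b - bR a) : ℝ) : ℂ))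
      = (1 - (h : ℂ)⁻¹) * (if a = b then 1 else 0) + (h : ℂ)⁻¹ * (1 / 2 : ℂ) := by
    intro b
    rw [mixFac, phaseFac, add_mul]
    congr 1
    · by_cases hab : a = b
      · subst hab
        simp
      · rw [if_neg hab]
        ring
    · have hcan := exp_cancel (α * (bR a - bR b)) (α * (bR b - bR a)) (by ring)
      calc (h:ℂ)⁻¹ * ((1/2 :ℂ) * Complex.exp (Complex.I * ((α * (bR a - bR b) : ℝ):ℂ)))
            * Complex.exp (Complex.I * ((α * (bR b - bR a) : ℝ):ℂ))
          = (h:ℂ)⁻¹ * (1/2:ℂ) * (Complex.exp (Complex.I * ((α * (bR a - bR b) : ℝ):ℂ))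
            * Complex.exp (Complex.I * ((α * (bR b - bR a) : ℝ):ℂ))) := by ring
        _ = (h:ℂ)⁻¹ * (1/2:ℂ) := by rw [hcan, mul_one]
  rw [Fin.sum_univ_two, hc 0, hc 1]
  fin_cases a <;> fin_cases r <;> simp [cfacH] <;> ring

lemma pbar_eigen {n : ℕ} (θ : Fin n → Fin n → ℝ) (hsym : ∀ j k, θ j k = θ k j)
    (hf : Fin n → ℕ) (B : Finset (Fin n)) (hB : ∀ j ∈ B, ∀ k ∈ B, θ j k = 0) (s : QIdx n) :
    PBar n θ hf B *ᵥ wv n θ s = (((∏ k ∈ B, cfacH (hf k) (s k)) : ℝ) : ℂ) • wv n θ s := by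
  funext x
  set F : Fin n → Fin 2 → ℂ := fun j b =>
    if j ∈ B then
      mixFac (hf j) (alphaAngle n θ j x) (x j) b
        * Complex.exp (Complex.I * ((alphaAngle n θ j x * (bR b - bR (x j)) : ℝ) : ℂ))
        * (-1 : ℂ) ^ ((s j).val * b.val)
    else if b = x j then (-1 : ℂ) ^ ((s j).val * b.val) else 0 with hF
  have stepA : ∀ y : QIdx n, PBar n θ hf B x y * wv n θ s y = gVec n θ x * ∏ j, F j (y j) := by
    intro y
    by_cases hxy : ∀ j ∉ B, x j = y j
    · have hentry : PBar n θ hf B x y = ∏ k ∈ B, mixFac (hf k) (alphaAngle n θ k x) (x k) (y k) := by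
        rw [PBar, Matrix.of_apply, if_pos hxy]
      have hBc : (∏ j ∈ Bᶜ, F j (y j)) = ∏ j ∈ Bᶜ, (-1 : ℂ) ^ ((s j).val * ((y j)).val) := by
        refine Finset.prod_congr rfl fun j hj => ?_
        have hj' := Finset.mem_compl.mp hj
        rw [hF]
        simp only
        rw [if_neg hj', if_pos (hxy j hj').symm]
      have hBin : (∏ j ∈ B, F j (y j))
          = ((∏ j ∈ B, mixFac (hf j) (alphaAngle n θ j x) (x j) (y j))
            * ∏ j ∈ B, Complex.exp (Complex.I * ((alphaAngle n θ j x * (bR (y j) - bR (x j)) : ℝ) : ℂ)))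
            * ∏ j ∈ B, (-1 : ℂ) ^ ((s j).val * ((y j)).val) := by
        rw [← Finset.prod_mul_distrib, ← Finset.prod_mul_distrib]
        refine Finset.prod_congr rfl fun j hj => ?_
        rw [hF]
        simp only [if_pos hj]
      have hphase : gVec n θ x * ∏ j ∈ B, Complex.exp (Complex.I * ((alphaAngle n θ j x * (bR (y j) - bR (x j)) : ℝ) : ℂ))
          = gVec n θ y := by
        have hsum : (∏ j ∈ B, Complex.exp (Complex.I * ((alphaAngle n θ j x * (bR (y j) - bR (x j)) : ℝ) : ℂ)))
            = Complex.exp (Complex.I * (((∑ j ∈ B, alphaAngle n θ j x * (bR (y j) - bR (x j))) : ℝ) : ℂ)) := by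
          rw [← Complex.exp_sum]
          congr 1
          rw [Complex.ofReal_sum, Finset.mul_sum]
        rw [hsum, gVec_apply θ x, gVec_apply θ y, mul_assoc, exp_I_mul]
        congr 2
        rw [← phase_shift θ hsym B hB x y hxy]
      have hchi : chi s y = (∏ j ∈ B, (-1 : ℂ) ^ ((s j).val * ((y j)).val))
          * ∏ j ∈ Bᶜ, (-1 : ℂ) ^ ((s j).val * ((y j)).val) :=
        (Finset.prod_mul_prod_compl B _).symm
      calc PBar n θ hf B x y * wv n θ s y
          = (∏ k ∈ B, mixFac (hf k) (alphaAngle n θ k x) (x k) (y k)) * (gVec n θ y * chi s y) := by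
            rw [hentry, wv]
        _ = (∏ k ∈ B, mixFac (hf k) (alphaAngle n θ k x) (x k) (y k))
            * ((gVec n θ x * ∏ j ∈ B, Complex.exp (Complex.I * ((alphaAngle n θ j x * (bR (y j) - bR (x j)) : ℝ) : ℂ)))
              * ((∏ j ∈ B, (-1 : ℂ) ^ ((s j).val * ((y j)).val))
                * ∏ j ∈ Bᶜ, (-1 : ℂ) ^ ((s j).val * ((y j)).val))) := by
            rw [hphase, ← hchi]
        _ = gVec n θ x * ((∏ j ∈ B, F j (y j)) * ∏ j ∈ Bᶜ, F j (y j)) := by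
            rw [hBin, hBc]
            ring
        _ = gVec n θ x * ∏ j, F j (y j) := by rw [Finset.prod_mul_prod_compl]
    · push_neg at hxy
      obtain ⟨j0, hj0, hne⟩ := hxy
      have hz : F j0 (y j0) = 0 := by
        rw [hF]
        simp only
        rw [if_neg hj0, if_neg (fun hh => hne (hh.symm))]
      have hentry : PBar n θ hf B x y = 0 := by
        rw [PBar, Matrix.of_apply, if_neg]
        push_neg
        exact ⟨j0, hj0, hne⟩
      rw [hentry, zero_mul, Finset.prod_eq_zero (Finset.mem_univ j0) hz, mul_zero]
  have hsite : ∀ j, (∑ b, F j b)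
      = (if j ∈ B then ((cfacH (hf j) (s j) : ℝ) : ℂ) else 1) * (-1 : ℂ) ^ ((s j).val * ((x j)).val) := by
    intro j
    by_cases hj : j ∈ B
    · rw [if_pos hj]
      have : ∀ b, F j b = mixFac (hf j) (alphaAngle n θ j x) (x j) b
          * Complex.exp (Complex.I * ((alphaAngle n θ j x * (bR b - bR (x j)) : ℝ) : ℂ))
          * (-1 : ℂ) ^ ((s j).val * b.val) := fun b => by rw [hF]; simp only [if_pos hj]
      rw [Finset.sum_congr rfl fun b _ => this b]
      exact site_mix (hf j) (alphaAngle n θ j x) (x j) (s j)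
    · rw [if_neg hj]
      have : ∀ b, F j b = if b = x j then (-1 : ℂ) ^ ((s j).val * b.val) else 0 := fun b => by
        rw [hF]; simp only [if_neg hj]
      rw [Finset.sum_congr rfl fun b _ => this b, Finset.sum_ite_eq' Finset.univ (x j)]
      simp
  calc (PBar n θ hf B *ᵥ wv n θ s) x
      = ∑ y, PBar n θ hf B x y * wv n θ s y := rfl
    _ = ∑ y : QIdx n, gVec n θ x * ∏ j, F j (y j) := Finset.sum_congr rfl fun y _ => stepA y
    _ = gVec n θ x * ∑ y : QIdx n, ∏ j, F j (y j) := (Finset.mul_sum _ _ _).symm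
    _ = gVec n θ x * ∏ j, ∑ b, F j b := by rw [← prod_sum_pi F]
    _ = gVec n θ x * ∏ j, ((if j ∈ B then ((cfacH (hf j) (s j) : ℝ) : ℂ) else 1)
          * (-1 : ℂ) ^ ((s j).val * ((x j)).val)) := by
        rw [Finset.prod_congr rfl fun j _ => hsite j]
    _ = gVec n θ x * ((∏ j, (if j ∈ B then ((cfacH (hf j) (s j) : ℝ) : ℂ) else 1)) * chi s x) := by
        rw [Finset.prod_mul_distrib]
        rfl
    _ = (((∏ k ∈ B, cfacH (hf k) (s k)) : ℝ) : ℂ) • wv n θ s x := by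
        rw [Finset.prod_ite_mem Finset.univ B (fun j => ((cfacH (hf j) (s j) : ℝ) : ℂ)), Finset.univ_inter,
          Complex.ofReal_prod]
        rw [smul_eq_mul, wv]
        ring


open Finset

def lamF {n : ℕ} (m : ℕ) (hf : Fin n → ℕ) (A : Fin m → Finset (Fin n)) (s : QIdx n) : ℝ :=
  (m : ℝ)⁻¹ * ∑ l, ∏ k ∈ A l, cfacH (hf k) (s k)

variable {n m : ℕ} {θ : Fin n → Fin n → ℝ} (hf : Fin n → ℕ) {A : Fin m → Finset (Fin n)}

lemma omegaBar_mulVec (hsym : ∀ j k, θ j k = θ k j)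
    (hB : ∀ l, ∀ j ∈ A l, ∀ k ∈ A l, θ j k = 0) (s : QIdx n) :
    OmegaBar n m θ hf A *ᵥ wv n θ s = ((lamF m hf A s : ℝ) : ℂ) • wv n θ s := by
  unfold OmegaBar
  rw [Matrix.smul_mulVec]
  have hsum : (∑ l, PBar n θ hf (A l)) *ᵥ wv n θ s = ∑ l, (PBar n θ hf (A l) *ᵥ wv n θ s) := by
    funext x
    simp only [Matrix.mulVec, dotProduct, Matrix.sum_apply, Finset.sum_mul, Finset.sum_apply]
    rw [Finset.sum_comm]
  rw [hsum, Finset.sum_congr rfl fun l _ => pbar_eigen θ hsym hf (A l) (hB l) s]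
  rw [← Finset.sum_smul, smul_smul]
  congr 1
  rw [lamF]
  push_cast
  ring

lemma omegaBar_apply (hsym : ∀ j k, θ j k = θ k j)
    (hB : ∀ l, ∀ j ∈ A l, ∀ k ∈ A l, θ j k = 0) (x y : QIdx n) :
    OmegaBar n m θ hf A x y
      = ∑ s : QIdx n, ((lamF m hf A s : ℝ) : ℂ) * (wv n θ s x * star (wv n θ s y)) := by
  have h0 : OmegaBar n m θ hf A x y
      = ∑ y' : QIdx n, OmegaBar n m θ hf A x y' * (if y' = y then 1 else 0) := by
    rw [Finset.sum_congr rfl (fun y' (_ : y' ∈ Finset.univ) => by rw [mul_ite, mul_one, mul_zero]),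
      Finset.sum_ite_eq' Finset.univ y]
    simp
  rw [h0, Finset.sum_congr rfl fun y' _ => by rw [← sum_wv_mul_star θ y' y]]
  rw [Finset.sum_congr rfl fun y' (_ : y' ∈ Finset.univ) =>
    Finset.mul_sum Finset.univ (fun s => wv n θ s y' * star (wv n θ s y)) (OmegaBar n m θ hf A x y'),
    Finset.sum_comm]
  refine Finset.sum_congr rfl fun s _ => ?_
  have hmv : ∑ y' : QIdx n, OmegaBar n m θ hf A x y' * (wv n θ s y' * star (wv n θ s y))
      = ((OmegaBar n m θ hf A *ᵥ wv n θ s) x) * star (wv n θ s y) := by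
    rw [Matrix.mulVec, dotProduct, Finset.sum_mul]
    exact Finset.sum_congr rfl fun y' _ => by ring
  rw [hmv, omegaBar_mulVec hf hsym hB s]
  rw [Pi.smul_apply, smul_eq_mul]
  ring

lemma cfacH_nonneg (hh : ∀ k, 1 ≤ hf k) (k : Fin n) (r : Fin 2) : 0 ≤ cfacH (hf k) r := by
  unfold cfacH
  by_cases h : r = 0
  · simp [h]
  · rw [if_neg h, sub_nonneg]
    have h1 : (1:ℝ) ≤ (hf k : ℝ) := by exact_mod_cast hh k
    exact inv_le_one_of_one_le₀ h1

lemma cfacH_le_one (hh : ∀ k, 1 ≤ hf k) (k : Fin n) (r : Fin 2) : cfacH (hf k) r ≤ 1 := by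
  unfold cfacH
  by_cases h : r = 0
  · simp [h]
  · rw [if_neg h]
    have h1 : (0:ℝ) < (hf k : ℝ) := by
      have := hh k
      positivity
    have : 0 ≤ ((hf k : ℝ))⁻¹ := by positivity
    linarith

lemma lamF_mem (hm : 1 ≤ m) (hh : ∀ k, 1 ≤ hf k) (s : QIdx n) :
    0 ≤ lamF m hf A s ∧ lamF m hf A s ≤ 1 := by
  have hm0 : (0:ℝ) < (m:ℝ) := by exact_mod_cast hm
  constructor
  · apply mul_nonneg (by positivity)
    exact Finset.sum_nonneg fun l _ => Finset.prod_nonneg fun k _ => cfacH_nonneg hf hh k (s k)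
  · rw [lamF, inv_mul_le_iff₀ hm0, mul_one]
    calc (∑ l, ∏ k ∈ A l, cfacH (hf k) (s k)) ≤ ∑ l : Fin m, (1:ℝ) := by
          refine Finset.sum_le_sum fun l _ => ?_
          exact Finset.prod_le_one (fun k _ => cfacH_nonneg hf hh k (s k))
            (fun k _ => cfacH_le_one hf hh k (s k))
      _ = (m:ℝ) := by simp

lemma lamF_zero (hm : 1 ≤ m) : lamF m hf A (0 : QIdx n) = 1 := by
  have hm0 : ((m:ℝ)) ≠ 0 := by
    have : (0:ℝ) < (m:ℝ) := by exact_mod_cast hm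
    linarith
  unfold lamF
  have : ∀ l : Fin m, (∏ k ∈ A l, cfacH (hf k) ((0 : QIdx n) k)) = 1 := by
    intro l
    apply Finset.prod_eq_one
    intro k _
    simp [cfacH]
  rw [Finset.sum_congr rfl fun l _ => this l]
  simp [hm0]

lemma lamF_le (hm : 1 ≤ m) (hh : ∀ k, 1 ≤ hf k)
    (hcover : ∀ v : Fin n, ∃ l, v ∈ A l) (s : QIdx n) (hs : s ≠ 0) :
    lamF m hf A s ≤ 1 - ((m : ℝ) * ((Finset.univ.sup hf : ℕ) : ℝ))⁻¹ := by
  obtain ⟨k0, hk0⟩ := Function.ne_iff.mp hs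
  obtain ⟨l0, hl0⟩ := hcover k0
  have hm0 : (0:ℝ) < (m:ℝ) := by exact_mod_cast hm
  set H : ℝ := ((Finset.univ.sup hf : ℕ) : ℝ) with hH
  have hfk0 : (hf k0 : ℝ) ≤ H := by
    rw [hH]
    exact_mod_cast Finset.le_sup (Finset.mem_univ k0)
  have hfk0' : (1:ℝ) ≤ (hf k0 : ℝ) := by exact_mod_cast hh k0
  have hH1 : (1:ℝ) ≤ H := le_trans hfk0' hfk0
  have hkey : (∏ k ∈ A l0, cfacH (hf k) (s k)) ≤ 1 - H⁻¹ := by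
    have h1 : (∏ k ∈ A l0, cfacH (hf k) (s k))
        = cfacH (hf k0) (s k0) * ∏ k ∈ (A l0).erase k0, cfacH (hf k) (s k) :=
      (Finset.mul_prod_erase (A l0) _ hl0).symm
    have h2 : (∏ k ∈ (A l0).erase k0, cfacH (hf k) (s k)) ≤ 1 :=
      Finset.prod_le_one (fun k _ => cfacH_nonneg hf hh k (s k))
        (fun k _ => cfacH_le_one hf hh k (s k))
    have h3 : cfacH (hf k0) (s k0) = 1 - ((hf k0 : ℝ))⁻¹ := by
      rw [cfacH, if_neg]
      simpa using hk0
    have h4 : cfacH (hf k0) (s k0) ≤ 1 - H⁻¹ := by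
      rw [h3]
      have : H⁻¹ ≤ ((hf k0:ℝ))⁻¹ := by
        apply inv_anti₀ (by linarith) hfk0
      linarith
    calc (∏ k ∈ A l0, cfacH (hf k) (s k))
        = cfacH (hf k0) (s k0) * ∏ k ∈ (A l0).erase k0, cfacH (hf k) (s k) := h1
      _ ≤ cfacH (hf k0) (s k0) * 1 := by
          apply mul_le_mul_of_nonneg_left h2 (cfacH_nonneg hf hh k0 (s k0))
      _ = cfacH (hf k0) (s k0) := mul_one _
      _ ≤ 1 - H⁻¹ := h4
  have hrest : (∑ l ∈ Finset.univ.erase l0, ∏ k ∈ A l, cfacH (hf k) (s k)) ≤ ((m:ℝ) - 1) := by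
    calc (∑ l ∈ Finset.univ.erase l0, ∏ k ∈ A l, cfacH (hf k) (s k))
        ≤ ∑ l ∈ Finset.univ.erase l0, (1:ℝ) :=
          Finset.sum_le_sum fun l _ => Finset.prod_le_one
            (fun k _ => cfacH_nonneg hf hh k (s k)) (fun k _ => cfacH_le_one hf hh k (s k))
      _ = ((Finset.univ.erase l0).card : ℝ) := by rw [Finset.sum_const, nsmul_eq_mul, mul_one]
      _ = ((m:ℝ) - 1) := by
          rw [Finset.card_erase_of_mem (Finset.mem_univ l0)]
          simp only [Finset.card_univ, Fintype.card_fin]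
          have : 1 ≤ m := hm
          push_cast [Nat.cast_sub this]
          ring
  have hsum : (∑ l, ∏ k ∈ A l, cfacH (hf k) (s k)) ≤ (m:ℝ) - H⁻¹ := by
    rw [← Finset.add_sum_erase Finset.univ _ (Finset.mem_univ l0)]
    linarith
  have hHpos : (0:ℝ) < H := by linarith
  have h5 : lamF m hf A s ≤ (m:ℝ)⁻¹ * ((m:ℝ) - H⁻¹) := by
    rw [lamF]
    exact mul_le_mul_of_nonneg_left hsum (by positivity)
  have h6 : (m:ℝ)⁻¹ * ((m:ℝ) - H⁻¹) = 1 - ((m:ℝ)*H)⁻¹ := by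
    field_simp
  linarith


open Finset

variable {n m N : ℕ} {θ : Fin n → Fin n → ℝ}

def Wv (n N : ℕ) (θ : Fin n → Fin n → ℝ) (S : BIdx n N) : BIdx n N → ℂ :=
  fun x => ∏ j, wv n θ (S j) (x j)

lemma Wv_mul_star (S x y : BIdx n N) :
    Wv n N θ S x * star (Wv n N θ S y) = ∏ j, (wv n θ (S j) (x j) * star (wv n θ (S j) (y j))) := by
  rw [Wv, Wv, star_prod, ← Finset.prod_mul_distrib]

lemma sum_Wv_mul_star (x y : BIdx n N) :
    (∑ S : BIdx n N, Wv n N θ S x * star (Wv n N θ S y)) = if x = y then 1 else 0 := by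
  rw [Finset.sum_congr rfl fun S _ => Wv_mul_star S x y]
  have h := (prod_sum_pi (fun (j : Fin (N+1)) (s : QIdx n) => wv n θ s (x j) * star (wv n θ s (y j)))).symm
  rw [h]
  rw [Finset.prod_congr rfl fun j _ => sum_wv_mul_star θ (x j) (y j)]
  by_cases hxy : x = y
  · subst hxy
    simp
  · rw [if_neg hxy]
    obtain ⟨j, hj⟩ := Function.ne_iff.mp hxy
    exact Finset.prod_eq_zero (Finset.mem_univ j) (if_neg hj)

def muF {n : ℕ} (m : ℕ) (N : ℕ) (hf : Fin n → ℕ) (A : Fin m → Finset (Fin n))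
    (i : Fin (N + 1)) (S : BIdx n N) : ℝ :=
  ∏ j ∈ Finset.univ.erase i, lamF m hf A (S j)

variable (hf : Fin n → ℕ) {A : Fin m → Finset (Fin n)}

lemma testAll_apply (hsym : ∀ j k, θ j k = θ k j)
    (hB : ∀ l, ∀ j ∈ A l, ∀ k ∈ A l, θ j k = 0) (i : Fin (N + 1)) (x y : BIdx n N) :
    testAll n N (OmegaBar n m θ hf A) i x y
      = ∑ S : BIdx n N, ((muF m N hf A i S : ℝ) : ℂ) * (Wv n N θ S x * star (Wv n N θ S y)) := by
  set d : Fin (N + 1) → QIdx n → ℂ := fun j s =>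
    (if j = i then 1 else ((lamF m hf A s : ℝ) : ℂ)) * (wv n θ s (x j) * star (wv n θ s (y j))) with hd
  have step1 : testAll n N (OmegaBar n m θ hf A) i x y = ∏ j, ∑ s, d j s := by
    rw [← Finset.mul_prod_erase Finset.univ (fun j => ∑ s, d j s) (Finset.mem_univ i)]
    have hi : (∑ s, d i s) = if x i = y i then 1 else 0 := by
      have hds : ∀ s, d i s = wv n θ s (x i) * star (wv n θ s (y i)) := by
        intro s
        rw [hd]
        simp only
        simp only [if_true, one_mul]
      rw [Finset.sum_congr rfl fun s _ => hds s]
      exact sum_wv_mul_star θ (x i) (y i)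
    have hj : ∀ j ∈ Finset.univ.erase i, (∑ s, d j s) = OmegaBar n m θ hf A (x j) (y j) := by
      intro j hjmem
      have hji : j ≠ i := (Finset.mem_erase.mp hjmem).1
      rw [hd]
      simp only [if_neg hji]
      exact (omegaBar_apply hf hsym hB (x j) (y j)).symm
    rw [hi, Finset.prod_congr rfl hj]
    rfl
  rw [step1, prod_sum_pi d]
  refine Finset.sum_congr rfl fun S _ => ?_
  rw [hd]
  simp only
  rw [Finset.prod_mul_distrib]
  congr 1
  · rw [← Finset.mul_prod_erase Finset.univ _ (Finset.mem_univ i), if_pos rfl, one_mul]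
    rw [muF, Complex.ofReal_prod]
    exact Finset.prod_congr rfl fun j hj => by rw [if_neg (Finset.mem_erase.mp hj).1]
  · rw [Wv_mul_star]

def testG (n m N : ℕ) (θ : Fin n → Fin n → ℝ) (hf : Fin n → ℕ) (A : Fin m → Finset (Fin n))
    (i : Fin (N + 1)) : Matrix (BIdx n N) (BIdx n N) ℂ :=
  Matrix.of fun x y =>
    (gVec n θ (x i) * star (gVec n θ (y i))) * ∏ j ∈ Finset.univ.erase i, OmegaBar n m θ hf A (x j) (y j)

lemma testG_apply (hsym : ∀ j k, θ j k = θ k j)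
    (hB : ∀ l, ∀ j ∈ A l, ∀ k ∈ A l, θ j k = 0) (i : Fin (N + 1)) (x y : BIdx n N) :
    testG n m N θ hf A i x y
      = ∑ S : BIdx n N, ((if S i = 0 then (1:ℂ) else 0) * ((muF m N hf A i S : ℝ) : ℂ))
          * (Wv n N θ S x * star (Wv n N θ S y)) := by
  set d : Fin (N + 1) → QIdx n → ℂ := fun j s =>
    (if j = i then (if s = 0 then 1 else 0) else ((lamF m hf A s : ℝ) : ℂ))
      * (wv n θ s (x j) * star (wv n θ s (y j))) with hd
  have step1 : testG n m N θ hf A i x y = ∏ j, ∑ s, d j s := by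
    rw [← Finset.mul_prod_erase Finset.univ (fun j => ∑ s, d j s) (Finset.mem_univ i)]
    have hi : (∑ s, d i s) = gVec n θ (x i) * star (gVec n θ (y i)) := by
      have hds : ∀ s : QIdx n, d i s
          = if s = (0 : QIdx n) then wv n θ s (x i) * star (wv n θ s (y i)) else 0 := by
        intro s
        rw [hd]
        simp only
        simp only [if_true]
        by_cases hs : s = 0 <;> simp [hs]
      rw [Finset.sum_congr rfl fun s _ => hds s, Finset.sum_ite_eq' Finset.univ (0 : QIdx n)]
      simp [wv_zero]
    have hj : ∀ j ∈ Finset.univ.erase i, (∑ s, d j s) = OmegaBar n m θ hf A (x j) (y j) := by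
      intro j hjmem
      have hji : j ≠ i := (Finset.mem_erase.mp hjmem).1
      rw [hd]
      simp only [if_neg hji]
      exact (omegaBar_apply hf hsym hB (x j) (y j)).symm
    rw [hi, Finset.prod_congr rfl hj]
    rfl
  rw [step1, prod_sum_pi d]
  refine Finset.sum_congr rfl fun S _ => ?_
  rw [hd]
  simp only
  rw [Finset.prod_mul_distrib]
  congr 1
  · rw [← Finset.mul_prod_erase Finset.univ _ (Finset.mem_univ i), if_pos rfl]
    rw [muF, Complex.ofReal_prod]
    congr 1
    exact Finset.prod_congr rfl fun j hj => by rw [if_neg (Finset.mem_erase.mp hj).1]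
  · rw [Wv_mul_star]

lemma trace_decomp (T ρ : Matrix (BIdx n N) (BIdx n N) ℂ) (c : BIdx n N → ℂ)
    (hT : ∀ x y, T x y = ∑ S, c S * (Wv n N θ S x * star (Wv n N θ S y))) :
    (T * ρ).trace = ∑ S, c S * (star (Wv n N θ S) ⬝ᵥ (ρ *ᵥ Wv n N θ S)) := by
  have h1 : (T * ρ).trace = ∑ x, ∑ y, T x y * ρ y x := by
    simp [Matrix.trace, Matrix.diag, Matrix.mul_apply]
  rw [h1]
  rw [Finset.sum_congr rfl fun x (_ : x ∈ Finset.univ) => Finset.sum_congr rfl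
    fun y (_ : y ∈ Finset.univ) => by rw [hT x y, Finset.sum_mul]]
  rw [Finset.sum_congr rfl fun x (_ : x ∈ Finset.univ) => Finset.sum_comm]
  rw [Finset.sum_comm]
  refine Finset.sum_congr rfl fun S _ => ?_
  rw [dotProduct, Finset.mul_sum, Finset.sum_comm]
  refine Finset.sum_congr rfl fun y _ => ?_
  rw [Matrix.mulVec, dotProduct, Finset.mul_sum, Finset.mul_sum]
  refine Finset.sum_congr rfl fun x _ => ?_
  simp only [Pi.star_apply]
  ring

lemma sum_qv (ρ : Matrix (BIdx n N) (BIdx n N) ℂ) :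
    (∑ S : BIdx n N, star (Wv n N θ S) ⬝ᵥ (ρ *ᵥ Wv n N θ S)) = ρ.trace := by
  have h1 : ∀ S : BIdx n N, star (Wv n N θ S) ⬝ᵥ (ρ *ᵥ Wv n N θ S)
      = ∑ x, ∑ y, ρ x y * (Wv n N θ S y * star (Wv n N θ S x)) := by
    intro S
    rw [dotProduct]
    refine Finset.sum_congr rfl fun x _ => ?_
    rw [Matrix.mulVec, dotProduct, Finset.mul_sum]
    refine Finset.sum_congr rfl fun y _ => ?_
    simp only [Pi.star_apply]
    ring
  rw [Finset.sum_congr rfl fun S _ => h1 S, Finset.sum_comm]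
  have h2 : ∀ x : BIdx n N, (∑ S : BIdx n N, ∑ y, ρ x y * (Wv n N θ S y * star (Wv n N θ S x)))
      = ρ x x := by
    intro x
    rw [Finset.sum_comm]
    have h3 : ∀ y, (∑ S : BIdx n N, ρ x y * (Wv n N θ S y * star (Wv n N θ S x)))
        = ρ x y * (if y = x then 1 else 0) := by
      intro y
      rw [← Finset.mul_sum, sum_Wv_mul_star]
    rw [Finset.sum_congr rfl fun y _ => h3 y]
    rw [Finset.sum_congr rfl fun y (_ : y ∈ Finset.univ) => by rw [mul_ite, mul_one, mul_zero]]
    rw [Finset.sum_ite_eq' Finset.univ x]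
    simp
  rw [Matrix.trace]
  exact Finset.sum_congr rfl fun x _ => h2 x


open Finset

variable {n m N : ℕ} {θ : Fin n → Fin n → ℝ}

def GId (n N : ℕ) (θ : Fin n → Fin n → ℝ) (i : Fin (N + 1)) :
    Matrix (BIdx n N) (BIdx n N) ℂ :=
  Matrix.of fun x y =>
    (gVec n θ (x i) * star (gVec n θ (y i)))
      * ∏ j ∈ Finset.univ.erase i, (if x j = y j then (1 : ℂ) else 0)

lemma sum_update (x : BIdx n N) (i : Fin (N + 1)) (f : BIdx n N → ℂ) :
    (∑ z : BIdx n N, if (∀ j ∈ Finset.univ.erase i, x j = z j) then f z else 0)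
      = ∑ b : QIdx n, f (Function.update x i b) := by
  rw [← Finset.sum_filter]
  have himg : Finset.filter (fun z : BIdx n N => ∀ j ∈ Finset.univ.erase i, x j = z j) Finset.univ
      = Finset.image (fun b : QIdx n => Function.update x i b) Finset.univ := by
    ext z
    simp only [Finset.mem_filter, Finset.mem_univ, true_and, Finset.mem_image]
    constructor
    · intro hz
      refine ⟨z i, ?_⟩
      funext j
      by_cases hj : j = i
      · subst hj
        rw [Function.update_self]
      · rw [Function.update_of_ne hj]
        exact hz j (Finset.mem_erase.mpr ⟨hj, Finset.mem_univ j⟩)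
    · rintro ⟨b, rfl⟩ j hj
      obtain ⟨hji, -⟩ := Finset.mem_erase.mp hj
      rw [Function.update_of_ne hji]
  rw [himg, Finset.sum_image]
  intro b _ b' _ hbb
  have hb := congrFun hbb i
  simpa [Function.update_self] using hb

lemma fid_ptrace (i : Fin (N + 1)) (M : Matrix (BIdx n N) (BIdx n N) ℂ) :
    star (gVec n θ) ⬝ᵥ (ptraceAt n N i M *ᵥ gVec n θ) = (GId n N θ i * M).trace := by
  have hL : star (gVec n θ) ⬝ᵥ (ptraceAt n N i M *ᵥ gVec n θ)
      = ∑ x : BIdx n N, ∑ b : QIdx n,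
          star (gVec n θ (x i)) * gVec n θ b * M x (Function.update x i b) := by
    rw [dotProduct]
    have h1 : ∀ a : QIdx n, (star (gVec n θ)) a * (ptraceAt n N i M *ᵥ gVec n θ) a
        = ∑ b : QIdx n, ∑ x : BIdx n N,
            (if x i = a then star (gVec n θ a) * gVec n θ b * M x (Function.update x i b) else 0) := by
      intro a
      rw [Matrix.mulVec, dotProduct, Finset.mul_sum]
      refine Finset.sum_congr rfl fun b _ => ?_
      rw [ptraceAt, Matrix.of_apply, Finset.sum_mul, Finset.mul_sum]
      refine Finset.sum_congr rfl fun x _ => ?_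
      simp only [Pi.star_apply]
      rw [ite_mul, zero_mul, mul_ite, mul_zero]
      by_cases hxa : x i = a
      · rw [if_pos hxa, if_pos hxa]
        ring
      · rw [if_neg hxa, if_neg hxa]
    rw [Finset.sum_congr rfl fun a _ => h1 a, Finset.sum_comm]
    rw [Finset.sum_congr rfl fun b (_ : b ∈ Finset.univ) => Finset.sum_comm]
    rw [Finset.sum_congr rfl fun b (_ : b ∈ Finset.univ) =>
      Finset.sum_congr rfl fun x (_ : x ∈ Finset.univ) =>
        Finset.sum_ite_eq Finset.univ (x i)
          (fun a => star (gVec n θ a) * gVec n θ b * M x (Function.update x i b))]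
    simp only [Finset.mem_univ, if_true]
    rw [Finset.sum_comm]
  have hR : (GId n N θ i * M).trace
      = ∑ x : BIdx n N, ∑ b : QIdx n,
          gVec n θ (x i) * star (gVec n θ b) * M (Function.update x i b) x := by
    have h2 : ∀ x z : BIdx n N, GId n N θ i x z * M z x
        = if (∀ j ∈ Finset.univ.erase i, x j = z j) then
            gVec n θ (x i) * star (gVec n θ (z i)) * M z x else 0 := by
      intro x z
      rw [GId, Matrix.of_apply, Finset.prod_boole]
      by_cases hc : ∀ j ∈ Finset.univ.erase i, x j = z j
      · rw [if_pos hc, if_pos hc, mul_one]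
      · rw [if_neg hc, if_neg hc, mul_zero, zero_mul]
    have h3 : (GId n N θ i * M).trace = ∑ x : BIdx n N, ∑ z : BIdx n N, GId n N θ i x z * M z x := by
      simp [Matrix.trace, Matrix.diag, Matrix.mul_apply]
    rw [h3]
    refine Finset.sum_congr rfl fun x _ => ?_
    rw [Finset.sum_congr rfl fun z _ => h2 x z,
      sum_update x i (fun z => gVec n θ (x i) * star (gVec n θ (z i)) * M z x)]
    refine Finset.sum_congr rfl fun b _ => ?_
    rw [Function.update_self]
  rw [hL, hR]
  have einv : Function.Involutive
      (fun p : BIdx n N × QIdx n => (Function.update p.1 i p.2, p.1 i)) := by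
    rintro ⟨x, b⟩
    show (Function.update (Function.update x i b) i (x i), Function.update x i b i) = (x, b)
    rw [Function.update_idem, Function.update_self, Function.update_eq_self]
  have key : ∀ p : BIdx n N × QIdx n,
      star (gVec n θ (p.1 i)) * gVec n θ p.2 * M p.1 (Function.update p.1 i p.2)
      = (fun q : BIdx n N × QIdx n =>
          gVec n θ (q.1 i) * star (gVec n θ q.2) * M (Function.update q.1 i q.2) q.1)
        (einv.toPerm _ p) := by
    rintro ⟨x, b⟩
    simp only [Function.Involutive.coe_toPerm, Function.update_self, Function.update_idem,
      Function.update_eq_self]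
    ring
  calc (∑ x : BIdx n N, ∑ b : QIdx n, star (gVec n θ (x i)) * gVec n θ b * M x (Function.update x i b))
      = ∑ p : BIdx n N × QIdx n,
          star (gVec n θ (p.1 i)) * gVec n θ p.2 * M p.1 (Function.update p.1 i p.2) :=
        (Fintype.sum_prod_type (f := fun p : BIdx n N × QIdx n =>
          star (gVec n θ (p.1 i)) * gVec n θ p.2 * M p.1 (Function.update p.1 i p.2))).symm
    _ = ∑ p : BIdx n N × QIdx n,
          gVec n θ (p.1 i) * star (gVec n θ p.2) * M (Function.update p.1 i p.2) p.1 :=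
        Fintype.sum_equiv (einv.toPerm _) _ _ key
    _ = ∑ x : BIdx n N, ∑ b : QIdx n, gVec n θ (x i) * star (gVec n θ b) * M (Function.update x i b) x :=
        Fintype.sum_prod_type (f := fun p : BIdx n N × QIdx n =>
          gVec n θ (p.1 i) * star (gVec n θ p.2) * M (Function.update p.1 i p.2) p.1)

variable (hf : Fin n → ℕ) {A : Fin m → Finset (Fin n)}

lemma GId_mul_testAll (i : Fin (N + 1)) :
    GId n N θ i * testAll n N (OmegaBar n m θ hf A) i = testG n m N θ hf A i := by
  apply Matrix.ext
  intro x y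
  rw [Matrix.mul_apply]
  set dd : Fin (N + 1) → QIdx n → ℂ := fun j c =>
    if j = i then (gVec n θ (x i) * star (gVec n θ c)) * (if c = y i then 1 else 0)
    else (if x j = c then (1 : ℂ) else 0) * OmegaBar n m θ hf A c (y j) with hdd
  have hz : ∀ z : BIdx n N,
      GId n N θ i x z * testAll n N (OmegaBar n m θ hf A) i z y = ∏ j, dd j (z j) := by
    intro z
    rw [← Finset.mul_prod_erase Finset.univ (fun j => dd j (z j)) (Finset.mem_univ i)]
    have hdi : dd i (z i) = (gVec n θ (x i) * star (gVec n θ (z i))) * (if z i = y i then 1 else 0) := by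
      rw [hdd]
      simp only [if_true]
    have hdj : ∀ j ∈ Finset.univ.erase i, dd j (z j)
        = (if x j = z j then (1 : ℂ) else 0) * OmegaBar n m θ hf A (z j) (y j) := by
      intro j hj
      rw [hdd]
      simp only [if_neg (Finset.mem_erase.mp hj).1]
    rw [hdi, Finset.prod_congr rfl hdj, GId, Matrix.of_apply, testAll, Matrix.of_apply,
      Finset.prod_mul_distrib]
    ring
  rw [Finset.sum_congr rfl fun z _ => hz z, ← prod_sum_pi dd]
  have hsitei : (∑ c : QIdx n, dd i c) = gVec n θ (x i) * star (gVec n θ (y i)) := by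
    have : ∀ c : QIdx n, dd i c
        = if c = y i then gVec n θ (x i) * star (gVec n θ c) else 0 := by
      intro c
      rw [hdd]
      simp only [if_true]
      by_cases hc : c = y i <;> simp [hc]
    rw [Finset.sum_congr rfl fun c _ => this c, Finset.sum_ite_eq' Finset.univ (y i)]
    simp
  have hsitej : ∀ j, j ≠ i → (∑ c : QIdx n, dd j c) = OmegaBar n m θ hf A (x j) (y j) := by
    intro j hji
    have : ∀ c : QIdx n, dd j c = if x j = c then OmegaBar n m θ hf A c (y j) else 0 := by
      intro c
      rw [hdd]
      simp only [if_neg hji]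
      by_cases hc : x j = c <;> simp [hc]
    rw [Finset.sum_congr rfl fun c _ => this c, Finset.sum_ite_eq Finset.univ (x j)]
    simp
  rw [← Finset.mul_prod_erase Finset.univ (fun j => ∑ c : QIdx n, dd j c) (Finset.mem_univ i),
    hsitei, Finset.prod_congr rfl (fun j hj => hsitej j (Finset.mem_erase.mp hj).1)]
  rfl

lemma qv_iid (S : BIdx n N) :
    star (Wv n N θ S) ⬝ᵥ (iidState n N θ *ᵥ Wv n N θ S) = if S = 0 then 1 else 0 := by
  have inner : ∀ x : BIdx n N, (iidState n N θ *ᵥ Wv n N θ S) x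
      = (∏ j, gVec n θ (x j)) * (if S = 0 then 1 else 0) := by
    intro x
    rw [Matrix.mulVec, dotProduct]
    have h1 : ∀ y : BIdx n N, iidState n N θ x y * Wv n N θ S y
        = (∏ j, gVec n θ (x j)) * ∏ j, (star (gVec n θ (y j)) * wv n θ (S j) (y j)) := by
      intro y
      rw [iidState, Matrix.of_apply, Wv, Finset.prod_mul_distrib, ← Finset.prod_mul_distrib]
      ring_nf
      rw [← Finset.prod_mul_distrib, ← Finset.prod_mul_distrib]
      exact Finset.prod_congr rfl fun j _ => by ring
    rw [Finset.sum_congr rfl fun y _ => h1 y, ← Finset.mul_sum]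
    congr 1
    rw [← prod_sum_pi (fun (j : Fin (N+1)) (b : QIdx n) => star (gVec n θ b) * wv n θ (S j) b)]
    have h2 : ∀ j : Fin (N + 1), (∑ b : QIdx n, star (gVec n θ b) * wv n θ (S j) b)
        = if (0 : QIdx n) = S j then 1 else 0 := by
      intro j
      rw [← sum_star_wv_mul_wv θ 0 (S j)]
      exact Finset.sum_congr rfl fun b _ => by rw [wv_zero]
    rw [Finset.prod_congr rfl fun j _ => h2 j, Finset.prod_boole]
    by_cases hS : S = 0
    · subst hS
      simp
    · rw [if_neg hS, if_neg]
      intro hc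
      exact hS (funext fun j => (hc j (Finset.mem_univ j)).symm)
  rw [dotProduct, Finset.sum_congr rfl fun x (_ : x ∈ Finset.univ) => by
    rw [inner x]]
  have h3 : ∀ x : BIdx n N, (star (Wv n N θ S)) x * ((∏ j, gVec n θ (x j)) * (if S = 0 then 1 else 0))
      = (if S = 0 then 1 else 0) * ∏ j, (star (wv n θ (S j) (x j)) * gVec n θ (x j)) := by
    intro x
    simp only [Pi.star_apply, Wv, star_prod]
    have hpp : (∏ j, star (wv n θ (S j) (x j))) * (∏ j, gVec n θ (x j))
        = ∏ j, (star (wv n θ (S j) (x j)) * gVec n θ (x j)) := by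
      rw [← Finset.prod_mul_distrib]
    calc (∏ j, star (wv n θ (S j) (x j))) * ((∏ j, gVec n θ (x j)) * (if S = 0 then 1 else 0))
        = ((∏ j, star (wv n θ (S j) (x j))) * (∏ j, gVec n θ (x j))) * (if S = 0 then 1 else 0) := by
          ring
      _ = (if S = 0 then 1 else 0) * ∏ j, (star (wv n θ (S j) (x j)) * gVec n θ (x j)) := by
          rw [hpp]
          ring
  rw [Finset.sum_congr rfl fun x _ => h3 x, ← Finset.mul_sum]
  rw [← prod_sum_pi (fun (j : Fin (N+1)) (a : QIdx n) => star (wv n θ (S j) a) * gVec n θ a)]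
  have h4 : ∀ j : Fin (N + 1), (∑ a : QIdx n, star (wv n θ (S j) a) * gVec n θ a)
      = if S j = 0 then 1 else 0 := by
    intro j
    rw [← sum_star_wv_mul_wv θ (S j) 0]
    exact Finset.sum_congr rfl fun a _ => by rw [wv_zero]
  rw [Finset.prod_congr rfl fun j _ => h4 j, Finset.prod_boole]
  by_cases hS : S = 0
  · subst hS
    simp
  · rw [if_neg hS, if_neg, mul_zero]
    intro hc
    exact hS (funext fun j => hc j (Finset.mem_univ j))


open Finset

lemma geom2 (δ : ℝ) (h0 : 0 ≤ δ) (h1 : δ ≤ 1) : ∀ t : ℕ, (1 + (t : ℝ) * δ) * (1 - δ) ^ t ≤ 1 := by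
  intro t
  induction t with
  | zero => simp
  | succ t' ih =>
    have hl0 : (0:ℝ) ≤ 1 - δ := by linarith
    have hpow : (0:ℝ) ≤ (1 - δ) ^ t' := pow_nonneg hl0 _
    have hpow1 : (1 - δ) ^ t' ≤ 1 := pow_le_one₀ hl0 (by linarith)
    have hsucc : (1 - δ) ^ (t' + 1) = (1 - δ) ^ t' * (1 - δ) := pow_succ _ _
    push_cast
    rw [hsucc]
    nlinarith [ih, mul_nonneg hpow h0]

lemma keynum (δ : ℝ) (hδ0 : 0 ≤ δ) (hδ1 : δ ≤ 1) (N t : ℕ) (ht : t ≤ N + 1) :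
    (N : ℝ) * δ * ((t : ℝ) * (1 - δ) ^ (t - 1))
      + ((t : ℝ) * (1 - δ) ^ (t - 1) + ((N + 1 - t : ℕ) : ℝ) * (1 - δ) ^ t) ≤ (N : ℝ) + 1 := by
  cases t with
  | zero =>
    simp only [Nat.cast_zero, zero_mul, mul_zero, zero_add, Nat.sub_zero, pow_zero, mul_one]
    push_cast
    linarith
  | succ t' =>
    have ht' : t' ≤ N := by omega
    have hcast : ((N + 1 - (t' + 1) : ℕ) : ℝ) = (N : ℝ) - (t' : ℝ) := by
      have h : N + 1 - (t' + 1) = N - t' := by omega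
      rw [h, Nat.cast_sub ht']
    have hidx : t' + 1 - 1 = t' := rfl
    rw [hidx, hcast]
    have hg := geom2 δ hδ0 hδ1 t'
    have hl0 : (0:ℝ) ≤ 1 - δ := by linarith
    have hpow : (0:ℝ) ≤ (1 - δ) ^ t' := pow_nonneg hl0 _
    have hsucc : (1 - δ) ^ (t' + 1) = (1 - δ) ^ t' * (1 - δ) := pow_succ _ _
    rw [hsucc]
    have hN0 : (0:ℝ) ≤ (N:ℝ) + 1 := by positivity
    have hfin : ((N:ℝ) + 1) * ((1 + (t' : ℝ) * δ) * (1 - δ) ^ t') ≤ ((N:ℝ) + 1) * 1 :=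
      mul_le_mul_of_nonneg_left hg hN0
    have hexp : (N : ℝ) * δ * (((t' + 1 : ℕ) : ℝ) * (1 - δ) ^ t')
        + ((((t' + 1 : ℕ)) : ℝ) * (1 - δ) ^ t' + ((N : ℝ) - (t' : ℝ)) * ((1 - δ) ^ t' * (1 - δ)))
        = ((N:ℝ) + 1) * ((1 + (t' : ℝ) * δ) * (1 - δ) ^ t') := by
      push_cast
      ring
    rw [hexp]
    linarith [hfin]

variable {n m N : ℕ}

lemma muF_mem (hf : Fin n → ℕ) {A : Fin m → Finset (Fin n)} (hm : 1 ≤ m) (hh : ∀ k, 1 ≤ hf k)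
    (i : Fin (N + 1)) (S : BIdx n N) :
    0 ≤ muF m N hf A i S ∧ muF m N hf A i S ≤ 1 := by
  constructor
  · exact Finset.prod_nonneg fun j _ => (lamF_mem hf hm hh (S j)).1
  · exact Finset.prod_le_one (fun j _ => (lamF_mem hf hm hh (S j)).1)
      (fun j _ => (lamF_mem hf hm hh (S j)).2)

lemma muF_le_pow (hf : Fin n → ℕ) {A : Fin m → Finset (Fin n)}
    (hm : 1 ≤ m) (hh : ∀ k, 1 ≤ hf k) (hcover : ∀ v : Fin n, ∃ l, v ∈ A l)
    (S : BIdx n N) (T : Finset (Fin (N + 1)))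
    (hT : ∀ j ∈ T, S j ≠ 0) (i : Fin (N + 1)) (hTi : T ⊆ Finset.univ.erase i) :
    muF m N hf A i S ≤ (1 - ((m : ℝ) * ((Finset.univ.sup hf : ℕ) : ℝ))⁻¹) ^ T.card := by
  set lv : ℝ := 1 - ((m : ℝ) * ((Finset.univ.sup hf : ℕ) : ℝ))⁻¹ with hlv
  have hsdiff : (∏ j ∈ (Finset.univ.erase i) \ T, lamF m hf A (S j))
      * (∏ j ∈ T, lamF m hf A (S j)) = muF m N hf A i S := by
    rw [muF]
    exact Finset.prod_sdiff hTi
  have h1 : (∏ j ∈ (Finset.univ.erase i) \ T, lamF m hf A (S j)) ≤ 1 :=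
    Finset.prod_le_one (fun j _ => (lamF_mem hf hm hh (S j)).1)
      (fun j _ => (lamF_mem hf hm hh (S j)).2)
  have h2 : (∏ j ∈ T, lamF m hf A (S j)) ≤ lv ^ T.card := by
    rw [← Finset.prod_const]
    exact Finset.prod_le_prod (fun j _ => (lamF_mem hf hm hh (S j)).1)
      (fun j hj => lamF_le hf hm hh hcover (S j) (hT j hj))
  have h3 : (0:ℝ) ≤ ∏ j ∈ T, lamF m hf A (S j) :=
    Finset.prod_nonneg fun j _ => (lamF_mem hf hm hh (S j)).1
  calc muF m N hf A i S
      = (∏ j ∈ (Finset.univ.erase i) \ T, lamF m hf A (S j))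
        * (∏ j ∈ T, lamF m hf A (S j)) := hsdiff.symm
    _ ≤ 1 * (∏ j ∈ T, lamF m hf A (S j)) := mul_le_mul_of_nonneg_right h1 h3
    _ = ∏ j ∈ T, lamF m hf A (S j) := one_mul _
    _ ≤ lv ^ T.card := h2

lemma mu_pointwise (hf : Fin n → ℕ) {A : Fin m → Finset (Fin n)}
    (hn : 1 ≤ n) (hm : 1 ≤ m) (hh : ∀ k, 1 ≤ hf k) (hcover : ∀ v : Fin n, ∃ l, v ∈ A l)
    (S : BIdx n N) :
    (N : ℝ) * ((m : ℝ) * ((Finset.univ.sup hf : ℕ) : ℝ))⁻¹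
        * (∑ i ∈ Finset.univ.filter (fun i => ¬ (S i = 0)), muF m N hf A i S)
      + ∑ i, muF m N hf A i S ≤ (N : ℝ) + 1 := by
  classical
  have hH1 : (1:ℝ) ≤ ((Finset.univ.sup hf : ℕ) : ℝ) := by
    have hk0 : (1:ℝ) ≤ ((hf ⟨0, hn⟩ : ℕ) : ℝ) := by exact_mod_cast hh ⟨0, hn⟩
    have hle : ((hf ⟨0, hn⟩ : ℕ) : ℝ) ≤ ((Finset.univ.sup hf : ℕ) : ℝ) := by
      exact_mod_cast Finset.le_sup (Finset.mem_univ (⟨0, hn⟩ : Fin n))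
    linarith
  have hm1 : (1:ℝ) ≤ (m:ℝ) := by exact_mod_cast hm
  have hmH1 : (1:ℝ) ≤ (m:ℝ) * ((Finset.univ.sup hf : ℕ) : ℝ) := by nlinarith
  set δ : ℝ := ((m : ℝ) * ((Finset.univ.sup hf : ℕ) : ℝ))⁻¹ with hδ
  have hδ0 : 0 < δ := by rw [hδ]; positivity
  have hδ1 : δ ≤ 1 := by rw [hδ]; exact inv_le_one_of_one_le₀ hmH1
  set T : Finset (Fin (N + 1)) := Finset.univ.filter (fun i => ¬ (S i = 0)) with hT
  set t : ℕ := T.card with ht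
  have htle : t ≤ N + 1 := by
    rw [ht]
    calc T.card ≤ Finset.univ.card := Finset.card_le_card (Finset.subset_univ T)
      _ = N + 1 := by rw [Finset.card_univ, Fintype.card_fin]
  have hbound1 : ∀ i ∈ T, muF m N hf A i S ≤ (1 - δ) ^ (t - 1) := by
    intro i hi
    have hsub : T.erase i ⊆ Finset.univ.erase i :=
      Finset.erase_subset_erase i (Finset.subset_univ T)
    have hcard : (T.erase i).card = t - 1 := by rw [Finset.card_erase_of_mem hi, ht]
    have hmu := muF_le_pow hf hm hh hcover S (T.erase i)
      (fun j hj => by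
        have hjT := Finset.mem_of_mem_erase hj
        rw [hT] at hjT
        exact (Finset.mem_filter.mp hjT).2) i hsub
    rw [hδ]
    rwa [hcard] at hmu
  have hbound2 : ∀ i ∈ Tᶜ, muF m N hf A i S ≤ (1 - δ) ^ t := by
    intro i hi
    have hiT : i ∉ T := Finset.mem_compl.mp hi
    have hsub : T ⊆ Finset.univ.erase i := fun j hj =>
      Finset.mem_erase.mpr ⟨fun hji => hiT (hji ▸ hj), Finset.mem_univ j⟩
    have hmu := muF_le_pow hf hm hh hcover S T
      (fun j hj => by
        rw [hT] at hj
        exact (Finset.mem_filter.mp hj).2) i hsub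
    rw [hδ, ht]
    exact hmu
  have hsum1 : (∑ i ∈ T, muF m N hf A i S) ≤ (t : ℝ) * (1 - δ) ^ (t - 1) := by
    calc (∑ i ∈ T, muF m N hf A i S) ≤ T.card • ((1 - δ) ^ (t - 1)) :=
          Finset.sum_le_card_nsmul T _ _ hbound1
      _ = (t : ℝ) * (1 - δ) ^ (t - 1) := by rw [nsmul_eq_mul, ht]
  have hsum2 : (∑ i ∈ Tᶜ, muF m N hf A i S) ≤ ((N + 1 - t : ℕ) : ℝ) * (1 - δ) ^ t := by
    calc (∑ i ∈ Tᶜ, muF m N hf A i S) ≤ Tᶜ.card • ((1 - δ) ^ t) :=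
          Finset.sum_le_card_nsmul Tᶜ _ _ hbound2
      _ = ((N + 1 - t : ℕ) : ℝ) * (1 - δ) ^ t := by
          rw [nsmul_eq_mul, Finset.card_compl, Fintype.card_fin, ht]
  have hsplit : (∑ i, muF m N hf A i S)
      = (∑ i ∈ T, muF m N hf A i S) + ∑ i ∈ Tᶜ, muF m N hf A i S :=
    (Finset.sum_add_sum_compl T _).symm
  have hTnn : (0:ℝ) ≤ ∑ i ∈ T, muF m N hf A i S :=
    Finset.sum_nonneg fun i _ => (muF_mem hf hm hh i S).1
  have hNδ : (0:ℝ) ≤ (N:ℝ) * δ := by positivity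
  have hkey := keynum δ hδ0.le hδ1 N t htle
  calc (N : ℝ) * δ * (∑ i ∈ T, muF m N hf A i S) + ∑ i, muF m N hf A i S
      ≤ (N : ℝ) * δ * ((t : ℝ) * (1 - δ) ^ (t - 1))
        + (((t : ℝ) * (1 - δ) ^ (t - 1)) + ((N + 1 - t : ℕ) : ℝ) * (1 - δ) ^ t) := by
        rw [hsplit]
        have := mul_le_mul_of_nonneg_left hsum1 hNδ
        linarith [hsum1, hsum2]
    _ ≤ (N : ℝ) + 1 := hkey


end NPM

set_option maxHeartbeats 2000000 in
/-- Theorem 3 of the paper (non-adaptive protocol with perfect match): the i.i.d. state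
`(|G⟩⟨G|)^{⊗(N+1)}` passes the `N`-random sampling test of `Ω̄(𝒜)_𝐡` with probability `1`,
and for `β ≥ 1/(N/(m·h_max)+1)` any state passing with probability `≥ β` leaves a
conditional state `σ` with `⟨G|σ|G⟩ ≥ 1 - m(1-β)h_max/(Nβ)`. -/
theorem nonadaptive_perfect_match
    (n m : ℕ) (hn : 1 ≤ n) (hm : 1 ≤ m)
    (G : SimpleGraph (Fin n)) (θ : Fin n → Fin n → ℝ)
    (hsym : ∀ j k, θ j k = θ k j)
    (hθ : ∀ j k, ¬ G.Adj j k → θ j k = 0)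
    (A : Fin m → Finset (Fin n))
    (hdisj : ∀ l l', l ≠ l' → Disjoint (A l) (A l'))
    (hcover : ∀ v : Fin n, ∃ l, v ∈ A l)
    (hne : ∀ l, (A l).Nonempty)
    (hind : ∀ l, ∀ j ∈ A l, ∀ k ∈ A l, ¬ G.Adj j k)
    (hf : Fin n → ℕ) (hhf : ∀ k, 1 ≤ hf k)
    (N : ℕ) (hN : 1 ≤ N)
    (β : ℝ) (hβ0 : 0 < β) (hβ1 : β ≤ 1)
    (hβ : 1 / ((N : ℝ) / ((m : ℝ) * ((Finset.univ.sup hf : ℕ) : ℝ)) + 1) ≤ β) :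
    acceptProb n N (OmegaBar n m θ hf A) (iidState n N θ) = 1 ∧
    ∀ ρ : Matrix (BIdx n N) (BIdx n N) ℂ, ρ.PosSemidef → ρ.trace = 1 →
      β ≤ acceptProb n N (OmegaBar n m θ hf A) ρ →
      1 - (m : ℝ) * (1 - β) * ((Finset.univ.sup hf : ℕ) : ℝ) / ((N : ℝ) * β) ≤
        (star (gVec n θ) ⬝ᵥ (condState n N (OmegaBar n m θ hf A) ρ *ᵥ gVec n θ)).re := by
  classical
  have hB : ∀ l, ∀ j ∈ A l, ∀ k ∈ A l, θ j k = 0 := fun l j hj k hk => hθ j k (hind l j hj k hk)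
  -- Part (i)
  have htr_iid : ∀ i : Fin (N+1),
      (testAll n N (OmegaBar n m θ hf A) i * iidState n N θ).trace = 1 := by
    intro i
    rw [NPM.trace_decomp _ _ _ (NPM.testAll_apply hf hsym hB i)]
    have h1 : ∀ S : BIdx n N,
        ((NPM.muF m N hf A i S : ℝ) : ℂ)
            * (star (NPM.Wv n N θ S) ⬝ᵥ (iidState n N θ *ᵥ NPM.Wv n N θ S))
        = if S = (0 : BIdx n N) then ((NPM.muF m N hf A i S : ℝ) : ℂ) else 0 := by
      intro S
      rw [NPM.qv_iid S]
      by_cases hS : S = 0 <;> simp [hS]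
    rw [Finset.sum_congr rfl fun S _ => h1 S, Finset.sum_ite_eq' Finset.univ (0 : BIdx n N)]
    have h2 : NPM.muF m N hf A i (0 : BIdx n N) = 1 := by
      rw [NPM.muF]
      refine Finset.prod_eq_one fun j _ => ?_
      have h3 : (0 : BIdx n N) j = (0 : QIdx n) := rfl
      rw [h3, NPM.lamF_zero hf hm]
    simp [h2]
  have part1 : acceptProb n N (OmegaBar n m θ hf A) (iidState n N θ) = 1 := by
    rw [acceptProb, Finset.sum_congr rfl fun i _ => htr_iid i, Finset.sum_const,
      Finset.card_univ, Fintype.card_fin, nsmul_eq_mul, mul_one]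
    have hNe : ((N:ℂ)+1) ≠ 0 := by
      have : ((N:ℂ)+1) = ((N+1 : ℕ) : ℂ) := by push_cast; ring
      rw [this]
      exact_mod_cast Nat.succ_ne_zero N
    have h4 : (((N+1 : ℕ)) : ℂ) = ((N:ℂ)+1) := by push_cast; ring
    rw [h4, inv_mul_cancel₀ hNe]
    simp
  refine ⟨part1, ?_⟩
  intro ρ hpsd htrρ hβp
  -- diagonal weights
  set rS : BIdx n N → ℝ := fun S => (star (NPM.Wv n N θ S) ⬝ᵥ (ρ *ᵥ NPM.Wv n N θ S)).re with hrS
  have hq : ∀ S, (star (NPM.Wv n N θ S) ⬝ᵥ (ρ *ᵥ NPM.Wv n N θ S)) = ((rS S : ℝ) : ℂ) := by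
    intro S
    have h0 := hpsd.dotProduct_mulVec_nonneg (NPM.Wv n N θ S)
    rw [Complex.nonneg_iff] at h0
    apply Complex.ext
    · simp [hrS]
    · simp [hrS, ← h0.2]
  have hr0 : ∀ S, 0 ≤ rS S := fun S => by
    have h0 := hpsd.dotProduct_mulVec_nonneg (NPM.Wv n N θ S)
    rw [Complex.nonneg_iff] at h0
    exact h0.1
  have hsum_r : (∑ S : BIdx n N, rS S) = 1 := by
    have h1 : (∑ S : BIdx n N, (star (NPM.Wv n N θ S) ⬝ᵥ (ρ *ᵥ NPM.Wv n N θ S))) = 1 := by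
      rw [NPM.sum_qv, htrρ]
    have h2 := congrArg Complex.re h1
    rw [Complex.re_sum] at h2
    simpa [hrS] using h2
  have htrace : ∀ i, (testAll n N (OmegaBar n m θ hf A) i * ρ).trace
      = (((∑ S, NPM.muF m N hf A i S * rS S : ℝ)) : ℂ) := by
    intro i
    rw [NPM.trace_decomp _ _ _ (NPM.testAll_apply hf hsym hB i), Complex.ofReal_sum]
    refine Finset.sum_congr rfl fun S _ => ?_
    rw [hq S, ← Complex.ofReal_mul]
  have hnum : ∀ i, star (gVec n θ)
      ⬝ᵥ (ptraceAt n N i (testAll n N (OmegaBar n m θ hf A) i * ρ) *ᵥ gVec n θ)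
      = (((∑ S, (if S i = 0 then (1:ℝ) else 0) * NPM.muF m N hf A i S * rS S : ℝ)) : ℂ) := by
    intro i
    rw [NPM.fid_ptrace, ← Matrix.mul_assoc, NPM.GId_mul_testAll hf,
      NPM.trace_decomp _ _ _ (NPM.testG_apply hf hsym hB i), Complex.ofReal_sum]
    refine Finset.sum_congr rfl fun S _ => ?_
    rw [hq S]
    by_cases hS : S i = 0
    · simp only [hS, if_true]
      push_cast
      ring
    · simp only [hS, if_false]
      push_cast
      ring
  set p : ℝ := acceptProb n N (OmegaBar n m θ hf A) ρ with hpdef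
  have hNC : ((N:ℂ)+1) = (((N:ℝ)+1 : ℝ) : ℂ) := by push_cast; ring
  have hTp : p = ((N:ℝ)+1)⁻¹ * ∑ i, ∑ S, NPM.muF m N hf A i S * rS S := by
    rw [hpdef, acceptProb, Finset.sum_congr rfl fun i _ => htrace i, ← Complex.ofReal_sum,
      hNC, ← Complex.ofReal_inv, ← Complex.ofReal_mul, Complex.ofReal_re]
  -- fidelity as a real ratio
  have hdot : (star (gVec n θ) ⬝ᵥ (condState n N (OmegaBar n m θ hf A) ρ *ᵥ gVec n θ))
      = ((((N:ℝ)+1) * p : ℝ) : ℂ)⁻¹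
        * (((∑ i, ∑ S, (if S i = 0 then (1:ℝ) else 0) * NPM.muF m N hf A i S * rS S : ℝ)) : ℂ) := by
    rw [condState, ← hpdef]
    rw [Matrix.smul_mulVec, dotProduct_smul, smul_eq_mul]
    congr 1
    have hmv : (∑ i, ptraceAt n N i (testAll n N (OmegaBar n m θ hf A) i * ρ)) *ᵥ gVec n θ
        = ∑ i, (ptraceAt n N i (testAll n N (OmegaBar n m θ hf A) i * ρ) *ᵥ gVec n θ) := by
      funext a
      simp only [Matrix.mulVec, dotProduct, Matrix.sum_apply, Finset.sum_mul,
        Finset.sum_apply]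
      rw [Finset.sum_comm]
    rw [hmv]
    have hds : star (gVec n θ)
        ⬝ᵥ (∑ i, (ptraceAt n N i (testAll n N (OmegaBar n m θ hf A) i * ρ) *ᵥ gVec n θ))
        = ∑ i, star (gVec n θ)
            ⬝ᵥ (ptraceAt n N i (testAll n N (OmegaBar n m θ hf A) i * ρ) *ᵥ gVec n θ) := by
      simp only [dotProduct, Finset.sum_apply, Finset.mul_sum]
      rw [Finset.sum_comm]
    rw [hds, Finset.sum_congr rfl fun i _ => hnum i, ← Complex.ofReal_sum]
  have hfid : (star (gVec n θ) ⬝ᵥ (condState n N (OmegaBar n m θ hf A) ρ *ᵥ gVec n θ)).re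
      = (((N:ℝ)+1) * p)⁻¹
        * (∑ i, ∑ S, (if S i = 0 then (1:ℝ) else 0) * NPM.muF m N hf A i S * rS S) := by
    rw [hdot, ← Complex.ofReal_inv, ← Complex.ofReal_mul, Complex.ofReal_re]
  -- real analysis endgame
  have hperS : ∀ S : BIdx n N,
      (∑ i, (if S i = 0 then (1:ℝ) else 0) * NPM.muF m N hf A i S * rS S)
      = (∑ i, NPM.muF m N hf A i S * rS S)
        - (∑ i ∈ Finset.univ.filter (fun i => ¬ (S i = 0)), NPM.muF m N hf A i S) * rS S := by
    intro S
    rw [Finset.sum_mul,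
      ← Finset.sum_filter_add_sum_filter_not Finset.univ (fun i => S i = 0)
        (fun i => NPM.muF m N hf A i S * rS S)]
    have h5 : (∑ i, (if S i = 0 then (1:ℝ) else 0) * NPM.muF m N hf A i S * rS S)
        = ∑ i ∈ Finset.univ.filter (fun i => S i = 0), NPM.muF m N hf A i S * rS S := by
      rw [Finset.sum_filter]
      exact Finset.sum_congr rfl fun i _ => by by_cases h : S i = 0 <;> simp [h]
    rw [h5]
    ring
  have hVX : (∑ i, ∑ S, (if S i = 0 then (1:ℝ) else 0) * NPM.muF m N hf A i S * rS S)
      = (∑ i, ∑ S, NPM.muF m N hf A i S * rS S)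
        - (∑ S : BIdx n N, (∑ i ∈ Finset.univ.filter (fun i => ¬ (S i = 0)),
            NPM.muF m N hf A i S) * rS S) := by
    rw [Finset.sum_comm, Finset.sum_congr rfl fun S _ => hperS S, Finset.sum_sub_distrib]
    congr 1
    exact Finset.sum_comm
  have hX0 : 0 ≤ (∑ S : BIdx n N, (∑ i ∈ Finset.univ.filter (fun i => ¬ (S i = 0)),
      NPM.muF m N hf A i S) * rS S) :=
    Finset.sum_nonneg fun S _ => mul_nonneg
      (Finset.sum_nonneg fun i _ => (NPM.muF_mem hf hm hhf i S).1) (hr0 S)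
  have hkeyX : (N:ℝ) * ((m : ℝ) * ((Finset.univ.sup hf : ℕ) : ℝ))⁻¹
        * (∑ S : BIdx n N, (∑ i ∈ Finset.univ.filter (fun i => ¬ (S i = 0)),
            NPM.muF m N hf A i S) * rS S)
      + (∑ i, ∑ S, NPM.muF m N hf A i S * rS S) ≤ (N:ℝ) + 1 := by
    have hS : ∀ S : BIdx n N,
        ((N:ℝ) * ((m : ℝ) * ((Finset.univ.sup hf : ℕ) : ℝ))⁻¹
            * (∑ i ∈ Finset.univ.filter (fun i => ¬ (S i = 0)), NPM.muF m N hf A i S)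
          + ∑ i, NPM.muF m N hf A i S) * rS S ≤ ((N:ℝ) + 1) * rS S :=
      fun S => mul_le_mul_of_nonneg_right (NPM.mu_pointwise hf hn hm hhf hcover S) (hr0 S)
    have hsumS := Finset.sum_le_sum fun S (_ : S ∈ Finset.univ) => hS S
    have hlhs : (N:ℝ) * ((m : ℝ) * ((Finset.univ.sup hf : ℕ) : ℝ))⁻¹
            * (∑ S : BIdx n N, (∑ i ∈ Finset.univ.filter (fun i => ¬ (S i = 0)),
                NPM.muF m N hf A i S) * rS S)
          + (∑ S : BIdx n N, ∑ i, NPM.muF m N hf A i S * rS S)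
        = (∑ S : BIdx n N,
            ((N:ℝ) * ((m : ℝ) * ((Finset.univ.sup hf : ℕ) : ℝ))⁻¹
              * (∑ i ∈ Finset.univ.filter (fun i => ¬ (S i = 0)), NPM.muF m N hf A i S)
            + ∑ i, NPM.muF m N hf A i S) * rS S) := by
      rw [Finset.mul_sum, ← Finset.sum_add_distrib]
      refine Finset.sum_congr rfl fun S _ => ?_
      rw [← Finset.sum_mul]
      ring
    have hrhs : (∑ S : BIdx n N, ((N:ℝ) + 1) * rS S) = (N:ℝ) + 1 := by
      rw [← Finset.mul_sum, hsum_r, mul_one]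
    rw [← hlhs, hrhs] at hsumS
    rw [Finset.sum_comm (f := fun i (S : BIdx n N) => NPM.muF m N hf A i S * rS S)]
    exact hsumS
  -- numeric facts
  have hH1 : (1:ℝ) ≤ ((Finset.univ.sup hf : ℕ) : ℝ) := by
    have hk0 : (1:ℝ) ≤ ((hf ⟨0, hn⟩ : ℕ) : ℝ) := by exact_mod_cast hhf ⟨0, hn⟩
    have hle : ((hf ⟨0, hn⟩ : ℕ) : ℝ) ≤ ((Finset.univ.sup hf : ℕ) : ℝ) := by
      exact_mod_cast Finset.le_sup (Finset.mem_univ (⟨0, hn⟩ : Fin n))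
    linarith
  have hm1 : (1:ℝ) ≤ (m:ℝ) := by exact_mod_cast hm
  have hN1 : (1:ℝ) ≤ (N:ℝ) := by exact_mod_cast hN
  have hmH0 : (0:ℝ) < (m:ℝ) * ((Finset.univ.sup hf : ℕ) : ℝ) := by nlinarith
  have hc : ((N:ℝ)+1) * p = ∑ i, ∑ S, NPM.muF m N hf A i S * rS S := by
    rw [hTp, ← mul_assoc, mul_inv_cancel₀ (by linarith : ((N:ℝ)+1) ≠ 0), one_mul]
  have hclb : ((N:ℝ)+1) * β ≤ ((N:ℝ)+1) * p :=
    mul_le_mul_of_nonneg_left hβp (by linarith)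
  have hc0 : 0 < ((N:ℝ)+1) * p := lt_of_lt_of_le (by nlinarith) hclb
  -- final inequality
  rw [hfid, hVX, ← hc]
  set X : ℝ := ∑ S : BIdx n N, (∑ i ∈ Finset.univ.filter (fun i => ¬ (S i = 0)),
      NPM.muF m N hf A i S) * rS S with hXdef
  set c : ℝ := ((N:ℝ)+1) * p with hcdef
  set HH : ℝ := ((Finset.univ.sup hf : ℕ) : ℝ) with hHH
  -- goal : 1 - m*(1-β)*HH/(N*β) ≤ c⁻¹ * (c - X)
  have hkey2 : (N:ℝ) * ((m:ℝ) * HH)⁻¹ * X + c ≤ (N:ℝ) + 1 := by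
    rw [hc]
    exact hkeyX
  have hcne : c ≠ 0 := ne_of_gt hc0
  have hinv : c⁻¹ * (c - X) = 1 - X / c := by
    field_simp
  rw [hinv]
  have hXK : X / c ≤ (m:ℝ) * (1 - β) * HH / ((N:ℝ) * β) := by
    rw [div_le_iff₀ hc0]
    have hNβδ : (0:ℝ) < (N:ℝ) * β * ((m:ℝ) * HH)⁻¹ := by positivity
    have h7 : β * ((N:ℝ) * ((m:ℝ) * HH)⁻¹ * X) ≤ β * ((N:ℝ) + 1 - c) :=
      mul_le_mul_of_nonneg_left (by linarith) hβ0.le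
    have h8 : β * ((N:ℝ) + 1 - c) ≤ (1 - β) * c := by nlinarith [hclb]
    have h9 : (m:ℝ) * (1 - β) * HH / ((N:ℝ) * β) * ((N:ℝ) * β * ((m:ℝ) * HH)⁻¹) = 1 - β := by
      field_simp
    have h10 : (N:ℝ) * β * ((m:ℝ) * HH)⁻¹ * X
        ≤ (N:ℝ) * β * ((m:ℝ) * HH)⁻¹ * ((m:ℝ) * (1 - β) * HH / ((N:ℝ) * β) * c) := by
      have h11 : (N:ℝ) * β * ((m:ℝ) * HH)⁻¹ * ((m:ℝ) * (1 - β) * HH / ((N:ℝ) * β) * c)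
          = ((m:ℝ) * (1 - β) * HH / ((N:ℝ) * β) * ((N:ℝ) * β * ((m:ℝ) * HH)⁻¹)) * c := by
        ring
      rw [h11, h9]
      nlinarith [h7, h8]
    have := le_of_mul_le_mul_left (by linarith [h10] :
      (N:ℝ) * β * ((m:ℝ) * HH)⁻¹ * X
        ≤ (N:ℝ) * β * ((m:ℝ) * HH)⁻¹ * ((m:ℝ) * (1 - β) * HH / ((N:ℝ) * β) * c)) hNβδ
    linarith [this]
  linarith [hXK]

end
end

section
/- The discretized non-adaptive test operator is almost passed by the weighted graph state: ⟨G|Ω̄_h(𝒜)|G⟩ ≥ (1 − (1/h) sin²(π/(4h)))^{max_{1≤l≤m}|A_l|}. -/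
open scoped BigOperators ComplexOrder
open Matrix Complex

noncomputable section

/-! ### Auxiliary lemmas for `gVec_OmegaBarH_lower_bound` -/

section GWAux

lemma gw_site_sum (h : ℕ) (α β : ℝ) :
    ∑ b : Fin 2, ∑ b' : Fin 2,
      mixFac h β b b' * Complex.exp (Complex.I * ((α * (bR b' - bR b) : ℝ) : ℂ))
      = ((2 - (h:ℝ)⁻¹ * (1 - Real.cos (β - α)) : ℝ) : ℂ) := by
  have e1 : cexp (-(I * (β:ℂ))) * cexp (I * (α:ℂ)) = cexp (-(I * ((β:ℂ) - (α:ℂ)))) := by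
    rw [← Complex.exp_add]; ring_nf
  have e2 : cexp (I * (β:ℂ)) * cexp (-(I * (α:ℂ))) = cexp (I * ((β:ℂ) - (α:ℂ))) := by
    rw [← Complex.exp_add]; ring_nf
  have hcos : cexp (I * ((β:ℂ) - (α:ℂ))) + cexp (-(I * ((β:ℂ) - (α:ℂ))))
      = 2 * Complex.cos ((β:ℂ) - (α:ℂ)) := by
    rw [Complex.cos]; ring_nf
  simp only [Fin.sum_univ_two, mixFac, phaseFac, bR]
  norm_num
  push_cast
  linear_combination ((h:ℂ)⁻¹/2) * e1 + ((h:ℂ)⁻¹/2) * e2 + ((h:ℂ)⁻¹/2) * hcos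

lemma gw_alphaH_close (h : ℕ) (hh : 1 ≤ h) (α : ℝ) :
    |alphaH h α - α| ≤ Real.pi / (2 * h) := by
  have hπ := Real.pi_pos
  have ht : (0:ℝ) < h := by exact_mod_cast hh
  set j : ℤ := ⌊(h : ℝ) * α / Real.pi + 1 / 2⌋ with hj
  have h1 : (j : ℝ) ≤ (h : ℝ) * α / Real.pi + 1 / 2 := Int.floor_le _
  have h2 : (h : ℝ) * α / Real.pi + 1 / 2 < j + 1 := Int.lt_floor_add_one _
  have h1' : ((j:ℝ) - 1/2) * Real.pi ≤ (h:ℝ) * α := by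
    rw [← le_div_iff₀ hπ]; linarith
  have h2' : (h:ℝ) * α < ((j:ℝ) + 1/2) * Real.pi := by
    rw [← div_lt_iff₀ hπ]; linarith
  have e3 : alphaH h α - α = ((j:ℝ) * Real.pi - (h:ℝ) * α) / h := by
    unfold alphaH; rw [← hj]; field_simp
  have e4 : Real.pi / (2 * (h:ℝ)) = (Real.pi / 2) / h := by ring
  rw [e3, e4, abs_le, show -(Real.pi/2/(h:ℝ)) = (-(Real.pi/2))/h from (neg_div _ _).symm,
      div_le_div_iff₀ ht ht, div_le_div_iff₀ ht ht]
  constructor <;> nlinarith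

lemma gw_phase_diff (n : ℕ) (θ : Fin n → Fin n → ℝ) (hsym : ∀ j k, θ j k = θ k j)
    (A : Finset (Fin n)) (hA0 : ∀ j ∈ A, ∀ k ∈ A, θ j k = 0)
    (x y : QIdx n) (hxy : ∀ j ∉ A, x j = y j) :
    (1/2 * ∑ j, ∑ k, θ j k * bR (y j) * bR (y k))
      - 1/2 * ∑ j, ∑ k, θ j k * bR (x j) * bR (x k)
    = ∑ k ∈ A, (∑ j, θ j k * bR (x j)) * (bR (y k) - bR (x k)) := by
  set d : Fin n → ℝ := fun j => bR (y j) - bR (x j) with hdd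
  have hd : ∀ j, j ∉ A → d j = 0 := fun j hj => by simp [hdd, hxy j hj]
  have hC : ∑ j, ∑ k, θ j k * d j * d k = 0 := by
    apply Finset.sum_eq_zero; intro j _; apply Finset.sum_eq_zero; intro k _
    by_cases hjA : j ∈ A
    · by_cases hkA : k ∈ A
      · rw [hA0 j hjA k hkA]; ring
      · rw [hd k hkA]; ring
    · rw [hd j hjA]; ring
  have hB : ∑ j, ∑ k, θ j k * d j * bR (x k) = ∑ j, ∑ k, θ j k * bR (x j) * d k := by
    rw [Finset.sum_comm]
    exact Finset.sum_congr rfl fun j _ => Finset.sum_congr rfl fun k _ => by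
      rw [hsym k j]; ring
  have hsum : ∑ j, ∑ k, θ j k * bR (y j) * bR (y k)
      = ∑ j, ∑ k, θ j k * bR (x j) * bR (x k)
        + 2 * ∑ j, ∑ k, θ j k * bR (x j) * d k := by
    have hsplit : ∀ j k : Fin n, θ j k * bR (y j) * bR (y k)
        = θ j k * bR (x j) * bR (x k) + θ j k * bR (x j) * d k
          + θ j k * d j * bR (x k) + θ j k * d j * d k := by
      intro j k
      have hy1 : bR (y j) = bR (x j) + d j := by simp [hdd]
      have hy2 : bR (y k) = bR (x k) + d k := by simp [hdd]
      rw [hy1, hy2]; ring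
    simp only [hsplit, Finset.sum_add_distrib]
    rw [hC, hB]; ring
  have hres : ∑ j, ∑ k, θ j k * bR (x j) * d k
      = ∑ k ∈ A, (∑ j, θ j k * bR (x j)) * d k := by
    rw [Finset.sum_comm]
    have hmul : ∀ k, ∑ j, θ j k * bR (x j) * d k = (∑ j, θ j k * bR (x j)) * d k :=
      fun k => by rw [Finset.sum_mul]
    simp only [hmul]
    exact (Finset.sum_subset (Finset.subset_univ A)
      (fun k _ hk => by rw [hd k hk, mul_zero])).symm
  rw [hsum, hres]; ring

lemma gw_gconj {n : ℕ} (θ : Fin n → Fin n → ℝ)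
    (A : Finset (Fin n))
    (x y : QIdx n)
    (hpd : (1/2 * ∑ j, ∑ k, θ j k * bR (y j) * bR (y k))
      - 1/2 * ∑ j, ∑ k, θ j k * bR (x j) * bR (x k)
      = ∑ k ∈ A, (∑ j, θ j k * bR (x j)) * (bR (y k) - bR (x k))) :
    (starRingEnd ℂ) (gVec n θ x) * gVec n θ y
    = (((2:ℝ)^n)⁻¹ : ℝ) *
        ∏ k ∈ A, cexp (I * ((alphaAngle n θ k x * (bR (y k) - bR (x k)) : ℝ) : ℂ)) := by
  unfold gVec
  set Φx : ℝ := 1/2 * ∑ j, ∑ k, θ j k * bR (x j) * bR (x k) with hΦx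
  set Φy : ℝ := 1/2 * ∑ j, ∑ k, θ j k * bR (y j) * bR (y k) with hΦy
  have hconj : (starRingEnd ℂ) (((Real.sqrt (2^n))⁻¹ : ℝ) * cexp (I * (Φx:ℂ)))
      = ((Real.sqrt (2^n))⁻¹ : ℝ) * cexp (-(I * (Φx:ℂ))) := by
    rw [_root_.map_mul, Complex.conj_ofReal, ← Complex.exp_conj, _root_.map_mul,
      Complex.conj_I, Complex.conj_ofReal, neg_mul]
  rw [hconj]
  have hr : ((Real.sqrt (2^n))⁻¹ * (Real.sqrt (2^n))⁻¹ : ℝ) = ((2:ℝ)^n)⁻¹ := by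
    rw [← mul_inv, Real.mul_self_sqrt (by positivity)]
  have hexp : cexp (-(I * (Φx:ℂ))) * cexp (I * (Φy:ℂ)) = cexp (I * ((Φy - Φx : ℝ) : ℂ)) := by
    rw [← Complex.exp_add]; push_cast; ring_nf
  have hsum : cexp (I * ((Φy - Φx : ℝ) : ℂ))
      = ∏ k ∈ A, cexp (I * ((alphaAngle n θ k x * (bR (y k) - bR (x k)) : ℝ) : ℂ)) := by
    rw [← Complex.exp_sum]
    congr 1
    rw [hΦy, hΦx, hpd]
    unfold alphaAngle
    push_cast
    rw [Finset.mul_sum]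
  calc (((Real.sqrt (2^n))⁻¹ : ℝ) : ℂ) * cexp (-(I * (Φx:ℂ)))
        * ((((Real.sqrt (2^n))⁻¹ : ℝ) : ℂ) * cexp (I * (Φy:ℂ)))
      = (((Real.sqrt (2^n))⁻¹ * (Real.sqrt (2^n))⁻¹ : ℝ) : ℂ)
        * (cexp (-(I * (Φx:ℂ))) * cexp (I * (Φy:ℂ))) := by push_cast; ring
    _ = _ := by rw [hr, hexp, hsum]

lemma gw_sum_prod_subtype {n : ℕ} (A : Finset (Fin n)) (g : Fin n → Fin 2 → ℂ) :
    ∑ u : ({j : Fin n // j ∈ A} → Fin 2), ∏ k ∈ A.attach, g k.1 (u k)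
      = ∏ k ∈ A, ∑ b, g k b := by
  rw [← Finset.prod_attach A (fun k => ∑ b, g k b)]
  rw [← Finset.univ_eq_attach]
  exact (Fintype.prod_sum (fun (k : {j : Fin n // j ∈ A}) (b : Fin 2) => g k.1 b)).symm

lemma gw_cond_sum {n : ℕ} (A : Finset (Fin n)) (x : QIdx n) (F : Fin n → Fin 2 → ℂ) :
    (∑ y : QIdx n, if ∀ j ∉ A, x j = y j then ∏ k ∈ A, F k (y k) else 0)
      = ∏ k ∈ A, ∑ b, F k b := by
  classical
  set e := Equiv.piEquivPiSubtypeProd (fun j : Fin n => j ∈ A) (fun _ => Fin 2) with he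
  rw [← Equiv.sum_comp e.symm
    (fun y => if ∀ j ∉ A, x j = y j then ∏ k ∈ A, F k (y k) else 0)]
  rw [Fintype.sum_prod_type]
  have hvalN : ∀ (u : {j : Fin n // j ∈ A} → Fin 2) (v : {j : Fin n // ¬ j ∈ A} → Fin 2)
      (j : Fin n) (hj : ¬ j ∈ A), e.symm (u, v) j = v ⟨j, hj⟩ := by
    intro u v j hj; simp [he, Equiv.piEquivPiSubtypeProd, hj]
  have hvalA : ∀ (u : {j : Fin n // j ∈ A} → Fin 2) (v : {j : Fin n // ¬ j ∈ A} → Fin 2)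
      (j : Fin n) (hj : j ∈ A), e.symm (u, v) j = u ⟨j, hj⟩ := by
    intro u v j hj; simp [he, Equiv.piEquivPiSubtypeProd, hj]
  have hcnd : ∀ (u : {j : Fin n // j ∈ A} → Fin 2) (v : {j : Fin n // ¬ j ∈ A} → Fin 2),
      (∀ j ∉ A, x j = e.symm (u, v) j) ↔ v = fun j => x j.1 := by
    intro u v
    constructor
    · intro hc; funext j
      have := hc j.1 j.2
      rw [hvalN u v j.1 j.2] at this
      exact this.symm
    · rintro rfl j hj; rw [hvalN u _ j hj]
  have hif : ∀ (u : {j : Fin n // j ∈ A} → Fin 2) (v : {j : Fin n // ¬ j ∈ A} → Fin 2),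
      (if ∀ j ∉ A, x j = e.symm (u, v) j then ∏ k ∈ A, F k (e.symm (u, v) k) else 0)
      = if v = (fun j => x j.1) then ∏ k ∈ A, F k (e.symm (u, v) k) else 0 :=
    fun u v => if_congr (hcnd u v) rfl rfl
  simp only [hif]
  have hcollapse : ∀ (u : {j : Fin n // j ∈ A} → Fin 2),
      (∑ v : {j : Fin n // ¬ j ∈ A} → Fin 2,
        if v = (fun j => x j.1) then ∏ k ∈ A, F k (e.symm (u, v) k) else 0)
      = ∏ k ∈ A, F k (e.symm (u, fun j => x j.1) k) := by
    intro u
    rw [Finset.sum_ite_eq' Finset.univ (fun j : {j : Fin n // ¬ j ∈ A} => x j.1)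
      (fun v => ∏ k ∈ A, F k (e.symm (u, v) k))]
    simp
  simp only [hcollapse]
  have hprod : ∀ (u : {j : Fin n // j ∈ A} → Fin 2),
      ∏ k ∈ A, F k (e.symm (u, fun j => x j.1) k) = ∏ k ∈ A.attach, F k.1 (u k) := by
    intro u
    rw [← Finset.prod_attach A (fun k => F k (e.symm (u, fun j => x j.1) k))]
    exact Finset.prod_congr rfl fun k _ => by rw [hvalA u _ k.1 k.2]
  simp only [hprod]
  exact gw_sum_prod_subtype A F

def gwExtFun {n : ℕ} (A : Finset (Fin n)) (v : {j : Fin n // ¬ j ∈ A} → Fin 2) : QIdx n :=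
  fun j => if hj : j ∈ A then 0 else v ⟨j, hj⟩

lemma gw_outer_sum {n : ℕ} (A : Finset (Fin n)) (F : Fin n → ℝ → Fin 2 → ℂ)
    (α : Fin n → QIdx n → ℝ)
    (hα : ∀ k ∈ A, ∀ x x' : QIdx n, (∀ j ∉ A, x j = x' j) → α k x = α k x') :
    (∑ x : QIdx n, ∏ k ∈ A, F k (α k x) (x k))
    = ∑ v : {j : Fin n // ¬ j ∈ A} → Fin 2, ∏ k ∈ A, ∑ b, F k (α k (gwExtFun A v)) b := by
  classical
  set e := Equiv.piEquivPiSubtypeProd (fun j : Fin n => j ∈ A) (fun _ => Fin 2) with he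
  rw [← Equiv.sum_comp e.symm (fun x => ∏ k ∈ A, F k (α k x) (x k)),
    Fintype.sum_prod_type, Finset.sum_comm]
  have hvalN : ∀ (u : {j : Fin n // j ∈ A} → Fin 2) (v : {j : Fin n // ¬ j ∈ A} → Fin 2)
      (j : Fin n) (hj : ¬ j ∈ A), e.symm (u, v) j = v ⟨j, hj⟩ := by
    intro u v j hj; simp [he, Equiv.piEquivPiSubtypeProd, hj]
  have hvalA : ∀ (u : {j : Fin n // j ∈ A} → Fin 2) (v : {j : Fin n // ¬ j ∈ A} → Fin 2)
      (j : Fin n) (hj : j ∈ A), e.symm (u, v) j = u ⟨j, hj⟩ := by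
    intro u v j hj; simp [he, Equiv.piEquivPiSubtypeProd, hj]
  refine Finset.sum_congr rfl fun v _ => ?_
  have hαeq : ∀ (u : {j : Fin n // j ∈ A} → Fin 2), ∀ k ∈ A,
      α k (e.symm (u, v)) = α k (gwExtFun A v) := by
    intro u k hk
    refine hα k hk _ _ fun j hj => ?_
    rw [hvalN u v j hj]
    simp [gwExtFun, hj]
  have hstep : ∀ (u : {j : Fin n // j ∈ A} → Fin 2),
      ∏ k ∈ A, F k (α k (e.symm (u, v))) (e.symm (u, v) k)
      = ∏ k ∈ A.attach, F k.1 (α k.1 (gwExtFun A v)) (u k) := by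
    intro u
    rw [← Finset.prod_attach A (fun k => F k (α k (e.symm (u, v))) (e.symm (u, v) k))]
    exact Finset.prod_congr rfl fun k _ => by
      rw [hαeq u k.1 k.2, hvalA u v k.1 k.2]
  simp only [hstep]
  exact gw_sum_prod_subtype A (fun k b => F k (α k (gwExtFun A v)) b)

lemma gw_key {n : ℕ} (h : ℕ) (θ : Fin n → Fin n → ℝ) (hsym : ∀ j k, θ j k = θ k j)
    (A : Finset (Fin n)) (hA0 : ∀ j ∈ A, ∀ k ∈ A, θ j k = 0) :
    (∑ x : QIdx n, ∑ y : QIdx n,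
        (starRingEnd ℂ) (gVec n θ x) * PBarH n θ h A x y * gVec n θ y)
    = ((((2:ℝ)^n)⁻¹ * ∑ v : {j : Fin n // ¬ j ∈ A} → Fin 2, ∏ k ∈ A,
        (2 - (h:ℝ)⁻¹ * (1 - Real.cos (alphaH h (alphaAngle n θ k (gwExtFun A v))
          - alphaAngle n θ k (gwExtFun A v)))) : ℝ) : ℂ) := by
  classical
  have hpt : ∀ x y : QIdx n,
      (starRingEnd ℂ) (gVec n θ x) * PBarH n θ h A x y * gVec n θ y
      = if ∀ j ∉ A, x j = y j then
          ((((2:ℝ)^n)⁻¹ : ℝ) : ℂ) * ∏ k ∈ A,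
            (mixFac h (alphaH h (alphaAngle n θ k x)) (x k) (y k)
              * cexp (I * ((alphaAngle n θ k x * (bR (y k) - bR (x k)) : ℝ) : ℂ)))
        else 0 := by
    intro x y
    show (starRingEnd ℂ) (gVec n θ x) *
        (if ∀ j ∉ A, x j = y j then
          ∏ k ∈ A, mixFac h (alphaH h (alphaAngle n θ k x)) (x k) (y k) else 0) *
        gVec n θ y = _
    split_ifs with hc
    · rw [mul_comm ((starRingEnd ℂ) (gVec n θ x)) _, mul_assoc,
        gw_gconj θ A x y (gw_phase_diff n θ hsym A hA0 x y hc),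
        Finset.prod_mul_distrib]
      ring
    · simp
  simp only [hpt]
  have hinner : ∀ x : QIdx n,
      (∑ y : QIdx n, if ∀ j ∉ A, x j = y j then
          ((((2:ℝ)^n)⁻¹ : ℝ) : ℂ) * ∏ k ∈ A,
            (mixFac h (alphaH h (alphaAngle n θ k x)) (x k) (y k)
              * cexp (I * ((alphaAngle n θ k x * (bR (y k) - bR (x k)) : ℝ) : ℂ)))
        else 0)
      = ((((2:ℝ)^n)⁻¹ : ℝ) : ℂ) * ∏ k ∈ A, ∑ b' : Fin 2,
          (mixFac h (alphaH h (alphaAngle n θ k x)) (x k) b'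
            * cexp (I * ((alphaAngle n θ k x * (bR b' - bR (x k)) : ℝ) : ℂ))) := by
    intro x
    rw [← gw_cond_sum A x (fun k b' =>
      mixFac h (alphaH h (alphaAngle n θ k x)) (x k) b'
        * cexp (I * ((alphaAngle n θ k x * (bR b' - bR (x k)) : ℝ) : ℂ))),
      Finset.mul_sum]
    exact Finset.sum_congr rfl fun y _ => by rw [mul_ite, mul_zero]
  simp only [hinner]
  rw [← Finset.mul_sum]
  have hα : ∀ k ∈ A, ∀ x x' : QIdx n, (∀ j ∉ A, x j = x' j) →
      alphaAngle n θ k x = alphaAngle n θ k x' := by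
    intro k hk x x' hxx
    refine Finset.sum_congr rfl fun j _ => ?_
    by_cases hj : j ∈ A
    · rw [hA0 j hj k hk]; ring
    · rw [hxx j hj]
  rw [gw_outer_sum A (fun k a b => ∑ b' : Fin 2,
      mixFac h (alphaH h a) b b' * cexp (I * ((a * (bR b' - bR b) : ℝ) : ℂ)))
    (fun k x => alphaAngle n θ k x) hα]
  have hsite : ∀ (v : {j : Fin n // ¬ j ∈ A} → Fin 2), ∀ k ∈ A,
      (∑ b : Fin 2, ∑ b' : Fin 2,
        mixFac h (alphaH h (alphaAngle n θ k (gwExtFun A v))) b b'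
          * cexp (I * ((alphaAngle n θ k (gwExtFun A v) * (bR b' - bR b) : ℝ) : ℂ)))
      = ((2 - (h:ℝ)⁻¹ * (1 - Real.cos (alphaH h (alphaAngle n θ k (gwExtFun A v))
          - alphaAngle n θ k (gwExtFun A v))) : ℝ) : ℂ) :=
    fun v k _ => gw_site_sum h _ _
  rw [Complex.ofReal_mul, Complex.ofReal_sum]
  refine congrArg _ (Finset.sum_congr rfl fun v _ => ?_)
  rw [Complex.ofReal_prod]
  exact Finset.prod_congr rfl fun k hk => hsite v k hk

lemma gw_cos_bound (h : ℕ) (hh : 1 ≤ h) (α : ℝ) :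
    1 - Real.cos (alphaH h α - α) ≤ 2 * Real.sin (Real.pi / (4 * h)) ^ 2 := by
  have hπ := Real.pi_pos
  have ht : (1:ℝ) ≤ h := by exact_mod_cast hh
  have h2 : 2 * Real.sin (Real.pi / (4 * h)) ^ 2 = 1 - Real.cos (Real.pi / (2 * h)) := by
    rw [Real.sin_sq_eq_half_sub, show 2 * (Real.pi / (4 * (h:ℝ))) = Real.pi / (2 * h) by ring]
    ring
  rw [h2]
  have hmono : Real.cos (Real.pi / (2 * h)) ≤ Real.cos |alphaH h α - α| := by
    apply Real.cos_le_cos_of_nonneg_of_le_pi (abs_nonneg _)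
    · apply div_le_self hπ.le
      linarith
    · exact gw_alphaH_close h hh α
  rw [Real.cos_abs] at hmono
  linarith

lemma gw_prod_bound {n : ℕ} (h : ℕ) (hh : 1 ≤ h) (A : Finset (Fin n))
    (α : Fin n → ({j : Fin n // ¬ j ∈ A} → Fin 2) → ℝ) :
    (1 - (h:ℝ)⁻¹ * Real.sin (Real.pi/(4*h))^2) ^ A.card
    ≤ ((2:ℝ)^n)⁻¹ * ∑ v : {j : Fin n // ¬ j ∈ A} → Fin 2, ∏ k ∈ A,
        (2 - (h:ℝ)⁻¹ * (1 - Real.cos (alphaH h (α k v) - α k v))) := by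
  have ht : (1:ℝ) ≤ h := by exact_mod_cast hh
  have ht0 : (0:ℝ) < h := by linarith
  set c : ℝ := (h:ℝ)⁻¹ * Real.sin (Real.pi/(4*h))^2 with hcdef
  have hc0 : 0 ≤ c := by positivity
  have hc1 : c ≤ 1 := by
    rw [hcdef]
    apply mul_le_one₀ (by rw [inv_le_one_iff₀]; right; exact ht) (by positivity)
      (Real.sin_sq_le_one _)
  have hfac : ∀ (v : {j : Fin n // ¬ j ∈ A} → Fin 2) (k : Fin n),
      2 * (1 - c) ≤ 2 - (h:ℝ)⁻¹ * (1 - Real.cos (alphaH h (α k v) - α k v)) := by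
    intro v k
    have hcb := gw_cos_bound h hh (α k v)
    have : (h:ℝ)⁻¹ * (1 - Real.cos (alphaH h (α k v) - α k v))
        ≤ (h:ℝ)⁻¹ * (2 * Real.sin (Real.pi / (4 * h)) ^ 2) :=
      mul_le_mul_of_nonneg_left hcb (by positivity)
    rw [hcdef]; linarith
  have hprod : ∀ v : {j : Fin n // ¬ j ∈ A} → Fin 2,
      (2 * (1 - c)) ^ A.card ≤ ∏ k ∈ A,
        (2 - (h:ℝ)⁻¹ * (1 - Real.cos (alphaH h (α k v) - α k v))) := by
    intro v
    rw [← Finset.prod_const]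
    exact Finset.prod_le_prod (fun k _ => by linarith [hc1]) (fun k _ => hfac v k)
  have hcard : Fintype.card ({j : Fin n // ¬ j ∈ A} → Fin 2) = 2 ^ (n - A.card) := by
    rw [Fintype.card_fun, Fintype.card_fin, Fintype.card_subtype_compl,
      Fintype.card_coe, Fintype.card_fin]
  have hsum : (2:ℝ) ^ (n - A.card) * (2 * (1 - c)) ^ A.card
      ≤ ∑ v : {j : Fin n // ¬ j ∈ A} → Fin 2, ∏ k ∈ A,
        (2 - (h:ℝ)⁻¹ * (1 - Real.cos (alphaH h (α k v) - α k v))) := by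
    have := Finset.card_nsmul_le_sum (Finset.univ : Finset ({j : Fin n // ¬ j ∈ A} → Fin 2))
      (fun v => ∏ k ∈ A, (2 - (h:ℝ)⁻¹ * (1 - Real.cos (alphaH h (α k v) - α k v))))
      ((2 * (1 - c)) ^ A.card) (fun v _ => hprod v)
    rw [Finset.card_univ, hcard, nsmul_eq_mul] at this
    push_cast at this
    exact this
  have hAn : A.card ≤ n := by
    simpa using Finset.card_le_univ A
  have hpow : ((2:ℝ)^n)⁻¹ * ((2:ℝ) ^ (n - A.card) * (2 * (1 - c)) ^ A.card)
      = (1 - c) ^ A.card := by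
    have h2 : (2:ℝ)^(n - A.card) * (2:ℝ)^A.card = 2^n := by
      rw [← pow_add, Nat.sub_add_cancel hAn]
    have h3 : ((2:ℝ)^n)⁻¹ * ((2:ℝ)^(n - A.card) * (2:ℝ)^A.card) = 1 := by
      rw [h2]; field_simp
    calc ((2:ℝ)^n)⁻¹ * ((2:ℝ) ^ (n - A.card) * (2 * (1 - c)) ^ A.card)
        = ((2:ℝ)^n)⁻¹ * ((2:ℝ)^(n - A.card) * (2:ℝ)^A.card) * (1 - c) ^ A.card := by
          rw [mul_pow]; ring
      _ = (1 - c) ^ A.card := by rw [h3, one_mul]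
  calc (1 - c) ^ A.card = ((2:ℝ)^n)⁻¹ * ((2:ℝ) ^ (n - A.card) * (2 * (1 - c)) ^ A.card) :=
        hpow.symm
    _ ≤ _ := mul_le_mul_of_nonneg_left hsum (by positivity)

lemma gw_form_expand (n m : ℕ) (g : QIdx n → ℂ) (P : Fin m → QOp n) :
    star g ⬝ᵥ (((m : ℂ)⁻¹ • ∑ l, P l) *ᵥ g)
    = (m:ℂ)⁻¹ * ∑ l, ∑ x, ∑ y, (starRingEnd ℂ) (g x) * P l x y * g y := by
  have step1 : star g ⬝ᵥ (((m : ℂ)⁻¹ • ∑ l, P l) *ᵥ g)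
      = ∑ x, ∑ y, ∑ l, (m:ℂ)⁻¹ * ((starRingEnd ℂ) (g x) * P l x y * g y) := by
    simp only [dotProduct, mulVec, Matrix.smul_apply, Matrix.sum_apply, smul_eq_mul,
      Pi.star_apply, RCLike.star_def, Finset.mul_sum, Finset.sum_mul]
    refine Finset.sum_congr rfl fun x _ => Finset.sum_congr rfl fun y _ =>
      Finset.sum_congr rfl fun l _ => by ring
  have step2 : (m:ℂ)⁻¹ * (∑ l, ∑ x : QIdx n, ∑ y : QIdx n,
        (starRingEnd ℂ) (g x) * P l x y * g y)
      = ∑ x : QIdx n, ∑ y : QIdx n, ∑ l,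
        (m:ℂ)⁻¹ * ((starRingEnd ℂ) (g x) * P l x y * g y) := by
    rw [Finset.mul_sum]
    calc ∑ l, (m:ℂ)⁻¹ * ∑ x : QIdx n, ∑ y : QIdx n,
            (starRingEnd ℂ) (g x) * P l x y * g y
        = ∑ l, ∑ x : QIdx n, ∑ y : QIdx n,
            (m:ℂ)⁻¹ * ((starRingEnd ℂ) (g x) * P l x y * g y) :=
          Finset.sum_congr rfl fun l _ => by
            rw [Finset.mul_sum]
            exact Finset.sum_congr rfl fun x _ => by rw [Finset.mul_sum]
      _ = ∑ x : QIdx n, ∑ l, ∑ y : QIdx n,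
            (m:ℂ)⁻¹ * ((starRingEnd ℂ) (g x) * P l x y * g y) := Finset.sum_comm
      _ = ∑ x : QIdx n, ∑ y : QIdx n, ∑ l,
            (m:ℂ)⁻¹ * ((starRingEnd ℂ) (g x) * P l x y * g y) :=
          Finset.sum_congr rfl fun x _ => Finset.sum_comm
  rw [step1, step2]

end GWAux

/-- The discretized non-adaptive test operator is almost passed by the weighted graph
state: `⟨G|Ω̄_h(𝒜)|G⟩ ≥ (1 - (1/h) sin²(π/4h))^{max_l |A_l|}`. -/
theorem gVec_OmegaBarH_lower_bound
    (n m : ℕ) (hn : 1 ≤ n) (hm : 1 ≤ m)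
    (G : SimpleGraph (Fin n)) (θ : Fin n → Fin n → ℝ)
    (hsym : ∀ j k, θ j k = θ k j)
    (hθ : ∀ j k, ¬ G.Adj j k → θ j k = 0)
    (A : Fin m → Finset (Fin n))
    (hdisj : ∀ l l', l ≠ l' → Disjoint (A l) (A l'))
    (hcover : ∀ v : Fin n, ∃ l, v ∈ A l)
    (hne : ∀ l, (A l).Nonempty)
    (hind : ∀ l, ∀ j ∈ A l, ∀ k ∈ A l, ¬ G.Adj j k)
    (h : ℕ) (hh : 1 ≤ h) :
    (1 - (h : ℝ)⁻¹ * Real.sin (Real.pi / (4 * h)) ^ 2) ^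
        (Finset.univ.sup fun l => (A l).card) ≤
      (star (gVec n θ) ⬝ᵥ (OmegaBarH n m θ h A *ᵥ gVec n θ)).re := by
  classical
  have hA0 : ∀ l, ∀ j ∈ A l, ∀ k ∈ A l, θ j k = 0 :=
    fun l j hj k hk => hθ j k (hind l j hj k hk)
  set c : ℝ := (h:ℝ)⁻¹ * Real.sin (Real.pi/(4*h))^2 with hcdef
  set r : Fin m → ℝ := fun l => ((2:ℝ)^n)⁻¹ *
    ∑ v : {j : Fin n // ¬ j ∈ A l} → Fin 2, ∏ k ∈ A l,
      (2 - (h:ℝ)⁻¹ * (1 - Real.cos (alphaH h (alphaAngle n θ k (gwExtFun (A l) v))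
        - alphaAngle n θ k (gwExtFun (A l) v)))) with hrdef
  have hkey : ∀ l, (∑ x : QIdx n, ∑ y : QIdx n,
      (starRingEnd ℂ) (gVec n θ x) * PBarH n θ h (A l) x y * gVec n θ y) = ((r l : ℝ) : ℂ) :=
    fun l => gw_key h θ hsym (A l) (hA0 l)
  set B : ℝ := (1 - c) ^ (Finset.univ.sup fun l => (A l).card) with hBdef
  have ht : (1:ℝ) ≤ h := by exact_mod_cast hh
  have hc0 : 0 ≤ c := by rw [hcdef]; positivity
  have hc1 : c ≤ 1 := by
    rw [hcdef]
    apply mul_le_one₀ (by rw [inv_le_one_iff₀]; right; exact ht) (by positivity)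
      (Real.sin_sq_le_one _)
  have hrb : ∀ l, B ≤ r l := by
    intro l
    refine le_trans ?_ (gw_prod_bound h hh (A l)
      (fun k v => alphaAngle n θ k (gwExtFun (A l) v)))
    rw [hBdef]
    exact pow_le_pow_of_le_one (by linarith) (by linarith)
      (Finset.le_sup (f := fun l => (A l).card) (Finset.mem_univ l))
  have hform := gw_form_expand n m (gVec n θ) (fun l => PBarH n θ h (A l))
  rw [show OmegaBarH n m θ h A = ((m : ℂ)⁻¹ • ∑ l, PBarH n θ h (A l)) from rfl, hform]
  simp only [hkey]
  rw [← Complex.ofReal_sum,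
    show ((m:ℂ))⁻¹ = (((m:ℝ)⁻¹ : ℝ) : ℂ) by push_cast; ring,
    ← Complex.ofReal_mul, Complex.ofReal_re]
  have hm0 : (0:ℝ) < m := by exact_mod_cast hm
  have hsum : (m:ℝ) * B ≤ ∑ l, r l := by
    have := Finset.card_nsmul_le_sum (Finset.univ : Finset (Fin m)) r B (fun l _ => hrb l)
    rwa [Finset.card_univ, Fintype.card_fin, nsmul_eq_mul] at this
  calc B = (m:ℝ)⁻¹ * ((m:ℝ) * B) := by field_simp
    _ ≤ (m:ℝ)⁻¹ * ∑ l, r l := mul_le_mul_of_nonneg_left hsum (by positivity)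


end
end

section
/- The discretized non-adaptive test operator is close to the exact one in operator norm: ‖Ω̄_h(𝒜) − Ω̄(𝒜)_h‖ ≤ (Σ_{l=1}^m |A_l|/(mh)) sin(π/(4h)) = (n/(mh)) sin(π/(4h)). -/
open scoped BigOperators ComplexOrder
open Matrix Complex

noncomputable section

/-!
Since `θ` vanishes on the independent set `A_l`, the angles `α_k`, `k ∈ A_l`, depend only on the
qubits outside `A_l`, so `P̄_{l;h}` and `P̄_l` are products over `k ∈ A_l` of single-qubit
operators `(1/h)|α⟩⟨α| + (1 - 1/h) I` controlled by those qubits. Each factor has norm at most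
one, being a convex combination of the identity and a projection, so telescoping bounds
`‖P̄_{l;h} - P̄_l‖` by the sum of the single-qubit distances
`(1/h) ‖|α^h⟩⟨α^h| - |α⟩⟨α|‖ = (1/h) |sin ((α^h - α)/2)| ≤ (1/h) sin (π/(4h))`,
where `|α^h - α| ≤ π/(2h)`.
-/

open Function
open scoped Matrix.Norms.L2Operator

lemma DependsOn.update_eq {ι β : Type*} {α : ι → Type*} [DecidableEq ι] {f : (∀ i, α i) → β}
    {s : Set ι} (hf : DependsOn f s) {k : ι} (hk : k ∉ s) (x : ∀ i, α i) (c : α k) :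
    f (Function.update x k c) = f x :=
  hf fun _ hi => Function.update_of_ne (ne_of_mem_of_not_mem hi hk) _ _

lemma DependsOn.of_compl_insert {ι β : Type*} {α : ι → Type*} [DecidableEq ι]
    {f : (∀ i, α i) → β} {k : ι} {A : Finset ι} (hf : DependsOn f (↑(insert k A))ᶜ) :
    DependsOn f {k}ᶜ ∧ DependsOn f (↑A)ᶜ :=
  ⟨hf.mono (by simp), hf.mono (by simp)⟩

lemma opNorm_eq_norm {ι : Type*} [Fintype ι] [DecidableEq ι] (M : Matrix ι ι ℂ) :
    opNorm M = ‖M‖ := rfl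

lemma norm_mul_sub_mul_le_of_norm_le_one {R : Type*} [SeminormedRing R] {a b x y : R}
    (hb : ‖b‖ ≤ 1) (hx : ‖x‖ ≤ 1) : ‖a * x - b * y‖ ≤ ‖a - b‖ + ‖x - y‖ :=
  calc ‖a * x - b * y‖ = ‖(a - b) * x + b * (x - y)‖ := by noncomm_ring
    _ ≤ ‖a - b‖ * ‖x‖ + ‖b‖ * ‖x - y‖ := norm_add_le_of_le (norm_mul_le _ _) (norm_mul_le _ _)
    _ ≤ ‖a - b‖ + ‖x - y‖ :=
      add_le_add (mul_le_of_le_one_right (norm_nonneg _) hx)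
        (mul_le_of_le_one_left (norm_nonneg _) hb)

lemma Finset.sum_card_eq_card_of_disjoint_of_cover {ι α : Type*} [Fintype ι] [Fintype α]
    [DecidableEq α] (A : ι → Finset α) (hdisj : ∀ i j, i ≠ j → Disjoint (A i) (A j))
    (hcover : ∀ a, ∃ i, a ∈ A i) : ∑ i, (A i).card = Fintype.card α := by
  rw [← Finset.card_biUnion fun i _ j _ hij => hdisj i j hij, ← Finset.card_univ]
  congr
  exact Finset.eq_univ_of_forall fun a => Finset.mem_biUnion.2 <| by simpa using hcover a

def phaseProj (α : ℝ) : Matrix (Fin 2) (Fin 2) ℂ := Matrix.of (phaseFac α)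

lemma isStarProjection_phaseProj (α : ℝ) : IsStarProjection (phaseProj α) := by
  constructor
  · ext b b'
    simp only [phaseProj, phaseFac, Matrix.mul_apply, Matrix.of_apply, Fin.sum_univ_two]
    fin_cases b <;> fin_cases b' <;> simp [bR, Complex.exp_neg] <;> field_simp <;> ring
  · ext b b'
    simp only [phaseProj, phaseFac, Matrix.star_apply, Matrix.of_apply, star_mul',
      Complex.star_def, ← Complex.exp_conj, map_mul, Complex.conj_I, Complex.conj_ofReal, map_div₀,
      map_one, map_ofNat]
    congr 2
    push_cast
    ring

lemma of_mixFac (h : ℕ) (α : ℝ) :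
    Matrix.of (mixFac h α) = (1 - (h : ℂ)⁻¹) • 1 + (h : ℂ)⁻¹ • phaseProj α := by
  ext b b'
  simp [mixFac, phaseProj, Matrix.one_apply]

lemma norm_cexp_I_mul_sub_cexp_I_mul (α β : ℝ) :
    ‖cexp (I * β) - cexp (I * α)‖ = 2 * |Real.sin ((β - α) / 2)| := by
  rw [show cexp (I * β) - cexp (I * α) = cexp (α * I) * (cexp (I * ↑(β - α)) - 1) by
      rw [mul_sub, ← Complex.exp_add]; push_cast; ring_nf,
    norm_mul, Complex.norm_exp_ofReal_mul_I, one_mul, norm_exp_I_mul_ofReal_sub_one, norm_mul,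
    Real.norm_eq_abs, Real.norm_eq_abs, abs_two]

lemma norm_phaseFac_sub_phaseFac_le (α β : ℝ) (b b' : Fin 2) :
    ‖phaseFac β b b' - phaseFac α b b'‖ ≤ |Real.sin ((β - α) / 2)| := by
  have key (s : ℝ) (hs : s = 1 ∨ s = -1) :
      ‖(1 / 2 : ℂ) * cexp (I * ↑(β * s)) - 1 / 2 * cexp (I * ↑(α * s))‖ =
        |Real.sin ((β - α) / 2)| := by
    rw [← mul_sub, norm_mul, norm_cexp_I_mul_sub_cexp_I_mul, norm_div, norm_one,
      Complex.norm_two]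
    rcases hs with rfl | rfl
    · ring_nf
    · rw [show (β * -1 - α * -1) / 2 = -((β - α) / 2) by ring, Real.sin_neg, abs_neg]
      ring
  have hd : b = b' ∨ bR b - bR b' = 1 ∨ bR b - bR b' = -1 := by
    fin_cases b <;> fin_cases b' <;> simp [bR]
  rcases hd with rfl | hd
  · simp [phaseFac]
  · exact (key _ hd).le

lemma norm_one_sub_inv_natCast_add_norm_inv_natCast (h : ℕ) :
    ‖1 - (h : ℂ)⁻¹‖ + ‖(h : ℂ)⁻¹‖ = 1 := by
  rcases h.eq_zero_or_pos with rfl | hh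
  · simp
  · have : (h : ℝ)⁻¹ ≤ 1 := inv_le_one_of_one_le₀ (by exact_mod_cast hh)
    rw [show 1 - (h : ℂ)⁻¹ = ((1 - (h : ℝ)⁻¹ : ℝ) : ℂ) by push_cast; ring, Complex.norm_real,
      norm_inv, Complex.norm_natCast, Real.norm_of_nonneg (by linarith)]
    ring

variable {n : ℕ}

/-- `siteOp k g` applies to qubit `k` the `2 × 2` matrix `g x`, read off the row index `x`;
it is a controlled operation when `g x` does not depend on `x k`. -/
def siteOp (k : Fin n) : (QIdx n → Matrix (Fin 2) (Fin 2) ℂ) →ₗ[ℂ] QOp n where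
  toFun g := Matrix.of fun x y => if ∀ j ≠ k, x j = y j then g x (x k) (y k) else 0
  map_add' g g' := by
    ext x y
    simp only [Matrix.of_apply, Matrix.add_apply, Pi.add_apply]
    split_ifs <;> simp
  map_smul' c g := by
    ext x y
    simp only [Matrix.of_apply, Matrix.smul_apply, Pi.smul_apply, RingHom.id_apply]
    split_ifs <;> simp

/-- `⊗_{k ∈ A} f k x` on the qubits of `A`, controlled by the state `x` of the others. -/
def prodOp (A : Finset (Fin n)) (f : Fin n → QIdx n → Matrix (Fin 2) (Fin 2) ℂ) : QOp n :=
  Matrix.of fun x y => if ∀ j ∉ A, x j = y j then ∏ k ∈ A, f k x (x k) (y k) else 0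

lemma siteOp_apply (k : Fin n) (g : QIdx n → Matrix (Fin 2) (Fin 2) ℂ) (x y : QIdx n) :
    siteOp k g x y = if ∀ j ≠ k, x j = y j then g x (x k) (y k) else 0 := rfl

lemma siteOp_one (k : Fin n) : siteOp k 1 = 1 := by
  ext x y
  rw [siteOp_apply, Pi.one_apply]
  rcases eq_or_ne x y with rfl | hxy
  · simp
  · rw [Matrix.one_apply_ne hxy]
    split_ifs with hx
    · exact Matrix.one_apply_ne fun hk => hxy (update_eq_self k x ▸ update_eq_iff.2 ⟨hk, hx⟩)
    · rfl

lemma sum_siteOp_mul (k : Fin n) (g : QIdx n → Matrix (Fin 2) (Fin 2) ℂ) (x : QIdx n)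
    (F : QIdx n → ℂ) :
    ∑ z, siteOp k g x z * F z = ∑ c, g x (x k) c * F (update x k c) := by
  refine (Fintype.sum_of_injective (update x k) (update_injective x k) _ _ (fun z hz => ?_)
    fun c => ?_).symm
  · rw [siteOp_apply, if_neg, zero_mul]
    exact fun hxz => hz ⟨z k, update_eq_iff.2 ⟨rfl, hxz⟩⟩
  · rw [siteOp_apply, if_pos fun j hj => (update_of_ne hj _ _).symm, update_self]

lemma siteOp_mul_siteOp (k : Fin n) (g : QIdx n → Matrix (Fin 2) (Fin 2) ℂ)
    {g' : QIdx n → Matrix (Fin 2) (Fin 2) ℂ} (hg' : DependsOn g' {k}ᶜ) :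
    siteOp k g * siteOp k g' = siteOp k (g * g') := by
  ext x y
  have hcond (c : Fin 2) : (∀ j ≠ k, update x k c j = y j) ↔ ∀ j ≠ k, x j = y j :=
    forall₂_congr fun j hj => by rw [update_of_ne hj]
  have hg'x (c : Fin 2) : g' (update x k c) = g' x := hg'.update_eq (by simp) x c
  rw [Matrix.mul_apply, sum_siteOp_mul]
  simp only [siteOp_apply, hg'x, update_self, hcond,
    Pi.mul_apply, Matrix.mul_apply]
  split_ifs <;> simp

lemma star_siteOp (k : Fin n) {g : QIdx n → Matrix (Fin 2) (Fin 2) ℂ} (hg : DependsOn g {k}ᶜ) :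
    star (siteOp k g) = siteOp k (star g) := by
  ext x y
  rw [Matrix.star_apply, siteOp_apply, siteOp_apply]
  by_cases hxy : ∀ j ≠ k, x j = y j
  · have hgy : g y = g x := hg fun j hj => (hxy j hj).symm
    rw [if_pos fun j hj => (hxy j hj).symm, if_pos hxy, hgy]
    rfl
  · rw [if_neg fun hyx => hxy fun j hj => (hyx j hj).symm, if_neg hxy, star_zero]

lemma isStarProjection_siteOp (k : Fin n) {g : QIdx n → Matrix (Fin 2) (Fin 2) ℂ}
    (hg : DependsOn g {k}ᶜ) (hproj : ∀ x, IsStarProjection (g x)) :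
    IsStarProjection (siteOp k g) where
  isIdempotentElem := by
    rw [IsIdempotentElem, siteOp_mul_siteOp k g hg]
    exact congrArg _ (funext fun x => (hproj x).isIdempotentElem.eq)
  isSelfAdjoint := by
    rw [IsSelfAdjoint, star_siteOp k hg]
    exact congrArg _ (funext fun x => (hproj x).isSelfAdjoint.star_eq)

lemma norm_siteOp_le_of_diag_eq_zero (k : Fin n) {g : QIdx n → Matrix (Fin 2) (Fin 2) ℂ}
    {s : ℝ} (hdiag : ∀ x b, g x b b = 0) (hs : ∀ x b b', ‖g x b b'‖ ≤ s) :
    ‖siteOp k g‖ ≤ s := by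
  -- With vanishing diagonal blocks, `siteOp k g` is a diagonal matrix times the permutation
  -- matrix of the involution flipping qubit `k`.
  let σ : Equiv.Perm (QIdx n) := Function.Involutive.toPerm (fun x => update x k (x k + 1))
    fun x => by simp [add_assoc, show (1 + 1 : Fin 2) = 0 from rfl]
  let d : QIdx n → ℂ := fun x => g x (x k) (x k + 1)
  have hσ (x : QIdx n) : σ x = update x k (x k + 1) := rfl
  have hfactor : siteOp k g = Matrix.diagonal d * σ.permMatrix ℂ := by
    ext x y
    rw [siteOp_apply, Matrix.diagonal_mul, Equiv.Perm.permMatrix, PEquiv.toMatrix_apply,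
      Equiv.toPEquiv_apply]
    simp only [Option.mem_def, Option.some_inj, hσ]
    by_cases hy : update x k (x k + 1) = y
    · subst hy
      rw [if_pos fun j hj => (update_of_ne hj _ _).symm, if_pos rfl, update_self, mul_one]
    · rw [if_neg hy, mul_zero]
      split_ifs with hxy
      · have hflip : ∀ a b : Fin 2, b ≠ a + 1 → b = a := by decide
        rw [hflip _ _ fun hk => hy (update_eq_iff.2 ⟨hk.symm, hxy⟩), hdiag]
      · rfl
  have hs0 : 0 ≤ s := (norm_nonneg _).trans (hs 0 0 0)
  calc ‖siteOp k g‖ ≤ ‖Matrix.diagonal d‖ * ‖σ.permMatrix ℂ‖ := hfactor ▸ norm_mul_le _ _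
    _ ≤ s * 1 := by
      gcongr
      · rw [Matrix.l2_opNorm_diagonal]
        exact (pi_norm_le_iff_of_nonneg hs0).2 fun x => hs x _ _
      · exact Matrix.permMatrix_l2_opNorm_le σ
    _ = s := mul_one s

lemma norm_siteOp_mixFac_le_one (k : Fin n) (h : ℕ) {a : QIdx n → ℝ} (ha : DependsOn a {k}ᶜ) :
    ‖siteOp k (fun x => Matrix.of (mixFac h (a x)))‖ ≤ 1 := by
  have hmix : (fun x => Matrix.of (mixFac h (a x))) =
      (1 - (h : ℂ)⁻¹) • 1 + (h : ℂ)⁻¹ • fun x => phaseProj (a x) := by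
    funext x
    simp [of_mixFac]
  have hproj : ‖siteOp k fun x => phaseProj (a x)‖ ≤ 1 :=
    (isStarProjection_siteOp k (fun x y hxy => congrArg phaseProj (ha hxy))
      fun x => isStarProjection_phaseProj (a x)).norm_le
  rw [hmix, map_add, map_smul, map_smul, siteOp_one]
  calc _ ≤ ‖1 - (h : ℂ)⁻¹‖ * ‖(1 : QOp n)‖ + ‖(h : ℂ)⁻¹‖ * ‖siteOp k fun x => phaseProj (a x)‖ :=
        norm_add_le_of_le (norm_smul_le _ _) (norm_smul_le _ _)
    _ ≤ ‖1 - (h : ℂ)⁻¹‖ * 1 + ‖(h : ℂ)⁻¹‖ * 1 := by gcongr; exact norm_one.le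
    _ = 1 := by rw [mul_one, mul_one, norm_one_sub_inv_natCast_add_norm_inv_natCast]

lemma norm_siteOp_mixFac_sub_le (k : Fin n) (h : ℕ) {a b : QIdx n → ℝ} {s : ℝ}
    (hab : ∀ x, |Real.sin ((b x - a x) / 2)| ≤ s) :
    ‖siteOp k (fun x => Matrix.of (mixFac h (b x))) -
      siteOp k (fun x => Matrix.of (mixFac h (a x)))‖ ≤ (h : ℝ)⁻¹ * s := by
  have hmix : (fun x => Matrix.of (mixFac h (b x))) - (fun x => Matrix.of (mixFac h (a x))) =
      (h : ℂ)⁻¹ • fun x => phaseProj (b x) - phaseProj (a x) := by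
    funext x
    simp only [Pi.sub_apply, Pi.smul_apply, of_mixFac, smul_sub]
    abel
  rw [← map_sub, hmix, map_smul, norm_smul, norm_inv, Complex.norm_natCast]
  gcongr
  refine norm_siteOp_le_of_diag_eq_zero k (fun x c => ?_)
    fun x c c' => (norm_phaseFac_sub_phaseFac_le _ _ _ _).trans (hab x)
  simp [phaseProj, phaseFac]

lemma prodOp_empty (f : Fin n → QIdx n → Matrix (Fin 2) (Fin 2) ℂ) : prodOp ∅ f = 1 := by
  ext x y
  simp [prodOp, Matrix.one_apply, ← funext_iff]

lemma prodOp_insert {k : Fin n} {A : Finset (Fin n)} (hk : k ∉ A)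
    {f : Fin n → QIdx n → Matrix (Fin 2) (Fin 2) ℂ} (hf : ∀ k' ∈ A, DependsOn (f k') {k}ᶜ) :
    prodOp (insert k A) f = siteOp k (f k) * prodOp A f := by
  ext x y
  rw [Matrix.mul_apply, sum_siteOp_mul, Fintype.sum_eq_single (y k) fun c hc => by
    rw [prodOp, Matrix.of_apply, if_neg fun hxy => hc (by simpa using hxy k hk), mul_zero]]
  have hprod : ∏ k' ∈ A, f k' (update x k (y k)) (update x k (y k) k') (y k') =
      ∏ k' ∈ A, f k' x (x k') (y k') := Finset.prod_congr rfl fun k' hk' => by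
    rw [(hf k' hk').update_eq (by simp), update_of_ne (ne_of_mem_of_not_mem hk' hk)]
  have hcond : (∀ j ∉ A, update x k (y k) j = y j) ↔ ∀ j ∉ insert k A, x j = y j := by
    simp only [Finset.mem_insert, not_or, and_imp]
    refine ⟨fun H j hjk hjA => ?_, fun H j hjA => ?_⟩
    · rw [← H j hjA, update_of_ne hjk]
    · rcases eq_or_ne j k with rfl | hjk
      · exact update_self _ _ _
      · rw [update_of_ne hjk, H j hjk hjA]
  simp only [prodOp, Matrix.of_apply, hprod, hcond, Finset.prod_insert hk]
  split_ifs <;> simp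

lemma norm_prodOp_le_one {A : Finset (Fin n)} {f : Fin n → QIdx n → Matrix (Fin 2) (Fin 2) ℂ}
    (hf : ∀ k ∈ A, DependsOn (f k) (↑A)ᶜ) (hf1 : ∀ k ∈ A, ‖siteOp k (f k)‖ ≤ 1) :
    ‖prodOp A f‖ ≤ 1 := by
  induction A using Finset.induction_on with
  | empty => exact (prodOp_empty f).symm ▸ norm_one.le
  | insert k A hk ih =>
    rw [Finset.forall_mem_insert] at hf1
    have hfA (k') (hk' : k' ∈ A) := (hf k' (Finset.mem_insert_of_mem hk')).of_compl_insert
    rw [prodOp_insert hk fun k' hk' => (hfA k' hk').1]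
    exact (norm_mul_le _ _).trans
      (mul_le_one₀ hf1.1 (norm_nonneg _) (ih (fun k' hk' => (hfA k' hk').2) hf1.2))

lemma norm_prodOp_sub_prodOp_le {A : Finset (Fin n)}
    {f g : Fin n → QIdx n → Matrix (Fin 2) (Fin 2) ℂ}
    (hf : ∀ k ∈ A, DependsOn (f k) (↑A)ᶜ) (hg : ∀ k ∈ A, DependsOn (g k) (↑A)ᶜ)
    (hf1 : ∀ k ∈ A, ‖siteOp k (f k)‖ ≤ 1) (hg1 : ∀ k ∈ A, ‖siteOp k (g k)‖ ≤ 1) :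
    ‖prodOp A f - prodOp A g‖ ≤ ∑ k ∈ A, ‖siteOp k (f k) - siteOp k (g k)‖ := by
  induction A using Finset.induction_on with
  | empty => simp [prodOp_empty]
  | insert k A hk ih =>
    rw [Finset.forall_mem_insert] at hf1 hg1
    have hfA (k') (hk' : k' ∈ A) := (hf k' (Finset.mem_insert_of_mem hk')).of_compl_insert
    have hgA (k') (hk' : k' ∈ A) := (hg k' (Finset.mem_insert_of_mem hk')).of_compl_insert
    rw [prodOp_insert hk fun k' hk' => (hfA k' hk').1,
      prodOp_insert hk fun k' hk' => (hgA k' hk').1, Finset.sum_insert hk]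
    refine (norm_mul_sub_mul_le_of_norm_le_one hg1.1
      (norm_prodOp_le_one (fun k' hk' => (hfA k' hk').2) hf1.2)).trans ?_
    gcongr
    exact ih (fun k' hk' => (hfA k' hk').2) (fun k' hk' => (hgA k' hk').2) hf1.2 hg1.2

lemma abs_alphaH_sub_le {h : ℕ} (hh : 0 < h) (α : ℝ) :
    |alphaH h α - α| ≤ Real.pi / (2 * h) := by
  have hπ := Real.pi_pos
  have hh' : (0 : ℝ) < h := by exact_mod_cast hh
  have hdiff : alphaH h α - α = -(h * α / Real.pi - round (h * α / Real.pi)) * (Real.pi / h) := by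
    rw [round_eq, alphaH]
    field_simp
    ring
  rw [hdiff, abs_mul, abs_neg, abs_of_pos (show 0 < Real.pi / h by positivity)]
  calc _ ≤ 1 / 2 * (Real.pi / h) := by gcongr; exact abs_sub_round _
    _ = Real.pi / (2 * h) := by ring

lemma abs_sin_half_le_sin {h : ℕ} (hh : 0 < h) {t : ℝ} (ht : |t| ≤ Real.pi / (2 * h)) :
    |Real.sin (t / 2)| ≤ Real.sin (Real.pi / (4 * h)) := by
  have hπ := Real.pi_pos
  have hh' : (1 : ℝ) ≤ h := by exact_mod_cast hh
  have ht2 : |t / 2| ≤ Real.pi / (4 * h) := by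
    rw [abs_div, abs_two, show Real.pi / (4 * h) = Real.pi / (2 * h) / 2 by ring]
    gcongr
  have hle : Real.pi / (4 * h) ≤ Real.pi / 2 := by
    gcongr
    linarith
  rw [Real.abs_sin_eq_sin_abs_of_abs_le_pi (by linarith)]
  exact Real.sin_le_sin_of_le_of_le_pi_div_two (by linarith [abs_nonneg (t / 2)]) hle ht2

lemma dependsOn_alphaAngle {θ : Fin n → Fin n → ℝ} {A : Finset (Fin n)} {k : Fin n}
    (hθ : ∀ j ∈ A, θ j k = 0) : DependsOn (alphaAngle n θ k) (↑A)ᶜ := fun x y hxy =>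
  Finset.sum_congr rfl fun j _ => by
    by_cases hj : j ∈ A
    · simp [hθ j hj]
    · rw [hxy j hj]

lemma norm_siteOp_alphaH_sub_le (k : Fin n) (h : ℕ) (a : QIdx n → ℝ) :
    ‖siteOp k (fun x => Matrix.of (mixFac h (alphaH h (a x)))) -
      siteOp k (fun x => Matrix.of (mixFac h (a x)))‖ ≤
      (h : ℝ)⁻¹ * Real.sin (Real.pi / (4 * h)) := by
  rcases h.eq_zero_or_pos with rfl | hh
  · have hmix (β : ℝ) : mixFac 0 β = mixFac 0 0 := by
      ext
      simp [mixFac]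
    simp [hmix]
  · exact norm_siteOp_mixFac_sub_le k h fun x =>
      abs_sin_half_le_sin hh (abs_alphaH_sub_le hh (a x))

lemma norm_PBarH_sub_PBar_le (θ : Fin n → Fin n → ℝ) (h : ℕ) {A : Finset (Fin n)}
    (hA : ∀ j ∈ A, ∀ k ∈ A, θ j k = 0) :
    ‖PBarH n θ h A - PBar n θ (fun _ => h) A‖ ≤
      A.card * ((h : ℝ)⁻¹ * Real.sin (Real.pi / (4 * h))) := by
  have hα (k : Fin n) (hk : k ∈ A) : DependsOn (alphaAngle n θ k) (↑A)ᶜ :=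
    dependsOn_alphaAngle fun j hj => hA j hj k hk
  have hsite (k : Fin n) (hk : k ∈ A) : DependsOn (alphaAngle n θ k) {k}ᶜ :=
    (hα k hk).mono (by simpa using hk)
  calc ‖PBarH n θ h A - PBar n θ (fun _ => h) A‖
      ≤ ∑ k ∈ A, ‖siteOp k (fun x => Matrix.of (mixFac h (alphaH h (alphaAngle n θ k x)))) -
          siteOp k (fun x => Matrix.of (mixFac h (alphaAngle n θ k x)))‖ :=
        norm_prodOp_sub_prodOp_le
          (fun k hk x y hxy => by rw [hα k hk hxy])
          (fun k hk x y hxy => by rw [hα k hk hxy])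
          (fun k hk => norm_siteOp_mixFac_le_one k h fun x y hxy => by rw [hsite k hk hxy])
          (fun k hk => norm_siteOp_mixFac_le_one k h (hsite k hk))
    _ ≤ ∑ k ∈ A, (h : ℝ)⁻¹ * Real.sin (Real.pi / (4 * h)) :=
        Finset.sum_le_sum fun k _ => norm_siteOp_alphaH_sub_le k h _
    _ = A.card * ((h : ℝ)⁻¹ * Real.sin (Real.pi / (4 * h))) := by
        rw [Finset.sum_const, nsmul_eq_mul]

theorem opNorm_OmegaBarH_sub_OmegaBar_general
    (n m : ℕ)
    (G : SimpleGraph (Fin n)) (θ : Fin n → Fin n → ℝ)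
    (hθ : ∀ j k, ¬ G.Adj j k → θ j k = 0)
    (A : Fin m → Finset (Fin n))
    (hdisj : ∀ l l', l ≠ l' → Disjoint (A l) (A l'))
    (hcover : ∀ v : Fin n, ∃ l, v ∈ A l)
    (hind : ∀ l, ∀ j ∈ A l, ∀ k ∈ A l, ¬ G.Adj j k)
    (h : ℕ) :
    opNorm (OmegaBarH n m θ h A - OmegaBar n m θ (fun _ => h) A) ≤
      ((∑ l, ((A l).card : ℝ)) / ((m : ℝ) * h)) * Real.sin (Real.pi / (4 * h)) ∧
    (∑ l, ((A l).card : ℝ)) / ((m : ℝ) * h) = (n : ℝ) / ((m : ℝ) * h) := by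
  have hA : ∀ l, ∀ j ∈ A l, ∀ k ∈ A l, θ j k = 0 := fun l j hj k hk =>
    hθ j k (hind l j hj k hk)
  have hcard : ∑ l, ((A l).card : ℝ) = n := by
    exact_mod_cast (Finset.sum_card_eq_card_of_disjoint_of_cover A hdisj hcover).trans
      (Fintype.card_fin n)
  refine ⟨?_, by rw [hcard]⟩
  calc opNorm (OmegaBarH n m θ h A - OmegaBar n m θ (fun _ => h) A)
      = ‖(m : ℂ)⁻¹ • ∑ l, (PBarH n θ h (A l) - PBar n θ (fun _ => h) (A l))‖ := by
        rw [opNorm_eq_norm, OmegaBarH, OmegaBar, ← smul_sub, ← Finset.sum_sub_distrib]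
    _ ≤ (m : ℝ)⁻¹ * ∑ l, ((A l).card * ((h : ℝ)⁻¹ * Real.sin (Real.pi / (4 * h)))) := by
        rw [norm_smul, norm_inv, Complex.norm_natCast]
        gcongr
        exact (norm_sum_le _ _).trans
          (Finset.sum_le_sum fun l _ => norm_PBarH_sub_PBar_le θ h (hA l))
    _ = _ := by
        rw [← Finset.sum_mul]
        ring

/-- `‖Ω̄_h(𝒜) - Ω̄(𝒜)_h‖ ≤ (∑_l |A_l|/(mh)) sin(π/4h) = (n/(mh)) sin(π/4h)`. -/
theorem opNorm_OmegaBarH_sub_OmegaBar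
    (n m : ℕ) (hn : 1 ≤ n) (hm : 1 ≤ m)
    (G : SimpleGraph (Fin n)) (θ : Fin n → Fin n → ℝ)
    (hsym : ∀ j k, θ j k = θ k j)
    (hθ : ∀ j k, ¬ G.Adj j k → θ j k = 0)
    (A : Fin m → Finset (Fin n))
    (hdisj : ∀ l l', l ≠ l' → Disjoint (A l) (A l'))
    (hcover : ∀ v : Fin n, ∃ l, v ∈ A l)
    (hne : ∀ l, (A l).Nonempty)
    (hind : ∀ l, ∀ j ∈ A l, ∀ k ∈ A l, ¬ G.Adj j k)
    (h : ℕ) (hh : 1 ≤ h) :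
    opNorm (OmegaBarH n m θ h A - OmegaBar n m θ (fun _ => h) A) ≤
      ((∑ l, ((A l).card : ℝ)) / ((m : ℝ) * h)) * Real.sin (Real.pi / (4 * h)) ∧
    (∑ l, ((A l).card : ℝ)) / ((m : ℝ) * h) = (n : ℝ) / ((m : ℝ) * h) :=
  opNorm_OmegaBarH_sub_OmegaBar_general n m G θ hθ A hdisj hcover hind h

end
end
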